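/- arXiv:2509.12744 — 6 statements merged into one kernel-verified Lean document; each statement's English description precedes it below -/
import Mathlib

section
/- Let X and a be nonnegative measurable functions on [0,∞), let c₁ and c₂ be nonnegative measurable functions on [0,∞) that are integrable on every bounded interval, and let M : [0,∞) → ℝ be a monotone nondecreasing function with M(0) ≥ 1. Assume that for every t ≥ 0 the integrals ∫₀ᵗ c₁(s)X(s) ds and ∫₀ᵗ c₂(s)X(s)·log₊(X(s)) ds are finite and X(t) + a(t) ≤ M(t) + ∫₀ᵗ c₁(s)X(s) ds + ∫₀ᵗ c₂(s)X(s)·log₊(X(s)) ds. Then for every t ≥ 0, X(t) + a(t) ≤ M(t)^{exp(C₂(t))} · exp( exp(C₂(t)) · ∫₀ᵗ c₁(s)·exp(−C₂(s)) ds ), where C₂(t) := ∫₀ᵗ c₂(s) ds. -/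
open MeasureTheory

open Set Filter Topology

private lemma gronwall_aux (f c₁ c₂ : ℝ → ℝ) (T m : ℝ) (hT : 0 ≤ T) (hm : 1 ≤ m)
    (hfi : IntervalIntegrable f volume 0 T)
    (hc1i : IntervalIntegrable c₁ volume 0 T)
    (hc2i : IntervalIntegrable c₂ volume 0 T)
    (hfnn : ∀ r ∈ Set.Icc (0:ℝ) T, 0 ≤ f r)
    (hc1nn : ∀ r ∈ Set.Icc (0:ℝ) T, 0 ≤ c₁ r)
    (hc2nn : ∀ r ∈ Set.Icc (0:ℝ) T, 0 ≤ c₂ r)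
    (hfle : ∀ r ∈ Set.Icc (0:ℝ) T,
      f r ≤ (c₁ r + c₂ r * Real.log (m + ∫ w in (0:ℝ)..r, f w)) * (m + ∫ w in (0:ℝ)..r, f w)) :
    m + (∫ w in (0:ℝ)..T, f w) ≤
      m ^ Real.exp (∫ w in (0:ℝ)..T, c₂ w) *
        Real.exp (Real.exp (∫ w in (0:ℝ)..T, c₂ w) *
          ∫ w in (0:ℝ)..T, c₁ w * Real.exp (-(∫ r in (0:ℝ)..w, c₂ r))) := by
  set G : ℝ → ℝ := fun s => m + ∫ w in (0:ℝ)..s, f w with hG_def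
  set u : ℝ → ℝ := fun s => Real.log (G s) with hu_def
  set C : ℝ → ℝ := fun s => ∫ w in (0:ℝ)..s, c₂ w with hC_def
  set P : ℝ → ℝ := fun s => ∫ w in (0:ℝ)..s, c₁ w * Real.exp (-(C w)) with hP_def
  set A : ℝ → ℝ := fun s => ∫ w in (0:ℝ)..s, (c₁ w + c₂ w) with hA_def
  set V : ℝ → ℝ := fun s => Real.exp (-(C s)) * u s - P s with hV_def
  -- subinterval integrability
  have hsub : ∀ {s t : ℝ}, 0 ≤ s → s ≤ t → t ≤ T →
      Set.uIcc s t ⊆ Set.uIcc (0:ℝ) T := by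
    intro s t hs hst htT
    rw [Set.uIcc_of_le hst, Set.uIcc_of_le hT]
    exact Set.Icc_subset_Icc hs htT
  have hfi' : ∀ {s t : ℝ}, 0 ≤ s → s ≤ t → t ≤ T → IntervalIntegrable f volume s t :=
    fun hs hst htT => hfi.mono_set (hsub hs hst htT)
  have hc1i' : ∀ {s t : ℝ}, 0 ≤ s → s ≤ t → t ≤ T → IntervalIntegrable c₁ volume s t :=
    fun hs hst htT => hc1i.mono_set (hsub hs hst htT)
  have hc2i' : ∀ {s t : ℝ}, 0 ≤ s → s ≤ t → t ≤ T → IntervalIntegrable c₂ volume s t :=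
    fun hs hst htT => hc2i.mono_set (hsub hs hst htT)
  -- nonnegativity of subinterval integrals
  have hintnn : ∀ (g : ℝ → ℝ) {s t : ℝ}, 0 ≤ s → s ≤ t → t ≤ T →
      (∀ r ∈ Set.Icc (0:ℝ) T, 0 ≤ g r) → 0 ≤ ∫ w in s..t, g w := by
    intro g s t hs hst htT hg
    exact intervalIntegral.integral_nonneg hst
      (fun x hx => hg x ⟨hs.trans hx.1, hx.2.trans htT⟩)
  -- G increments
  have hGdiff : ∀ {s t : ℝ}, 0 ≤ s → s ≤ t → t ≤ T → G t - G s = ∫ w in s..t, f w := by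
    intro s t hs hst htT
    have h := intervalIntegral.integral_add_adjacent_intervals
      (hfi' le_rfl hs (hst.trans htT)) (hfi' hs hst htT)
    show (m + ∫ w in (0:ℝ)..t, f w) - (m + ∫ w in (0:ℝ)..s, f w) = _
    linarith
  have hG1 : ∀ {s : ℝ}, 0 ≤ s → s ≤ T → 1 ≤ G s := by
    intro s hs hsT
    have h := hintnn f le_rfl hs hsT hfnn
    show 1 ≤ m + ∫ w in (0:ℝ)..s, f w
    linarith
  have hGpos : ∀ {s : ℝ}, 0 ≤ s → s ≤ T → 0 < G s :=
    fun hs hsT => lt_of_lt_of_le one_pos (hG1 hs hsT)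
  have hGmono : ∀ {s t : ℝ}, 0 ≤ s → s ≤ t → t ≤ T → G s ≤ G t := by
    intro s t hs hst htT
    have h1 := hGdiff hs hst htT
    have h2 := hintnn f hs hst htT hfnn
    linarith
  have hunn : ∀ {s : ℝ}, 0 ≤ s → s ≤ T → 0 ≤ u s :=
    fun hs hsT => Real.log_nonneg (hG1 hs hsT)
  have humono : ∀ {s t : ℝ}, 0 ≤ s → s ≤ t → t ≤ T → u s ≤ u t :=
    fun hs hst htT => Real.log_le_log (hGpos hs (hst.trans htT)) (hGmono hs hst htT)
    -- key increment bound
  have hkey : ∀ {s t : ℝ}, 0 ≤ s → s ≤ t → t ≤ T →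
      G t - G s ≤ G t * ((∫ w in s..t, c₁ w) + u t * ∫ w in s..t, c₂ w) := by
    intro s t hs hst htT
    rw [hGdiff hs hst htT]
    have hrhs : IntervalIntegrable (fun w => c₁ w * G t + c₂ w * (u t * G t)) volume s t :=
      ((hc1i' hs hst htT).mul_const _).add ((hc2i' hs hst htT).mul_const _)
    have hmono : (∫ w in s..t, f w) ≤ ∫ w in s..t, (c₁ w * G t + c₂ w * (u t * G t)) := by
      refine intervalIntegral.integral_mono_on hst (hfi' hs hst htT) hrhs ?_
      intro r hr
      have hr0 : 0 ≤ r := hs.trans hr.1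
      have hrT : r ≤ T := hr.2.trans htT
      have h1 := hfle r ⟨hr0, hrT⟩
      have hGrt : G r ≤ G t := hGmono hr0 hr.2 htT
      have hurt : u r ≤ u t := humono hr0 hr.2 htT
      have hGr : 0 < G r := hGpos hr0 hrT
      have hur : 0 ≤ u r := hunn hr0 hrT
      have hc1r := hc1nn r ⟨hr0, hrT⟩
      have hc2r := hc2nn r ⟨hr0, hrT⟩
      have h1' : f r ≤ (c₁ r + c₂ r * u r) * G r := h1
      nlinarith [mul_le_mul hurt hGrt hGr.le (hunn (hs.trans hst) htT : (0:ℝ) ≤ u t)]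
    have heq : (∫ w in s..t, (c₁ w * G t + c₂ w * (u t * G t)))
        = (∫ w in s..t, c₁ w) * G t + (∫ w in s..t, c₂ w) * (u t * G t) := by
      rw [intervalIntegral.integral_add ((hc1i' hs hst htT).mul_const _)
        ((hc2i' hs hst htT).mul_const _), intervalIntegral.integral_mul_const,
        intervalIntegral.integral_mul_const]
    rw [heq] at hmono
    nlinarith [hmono]
  -- logarithmic increment bound
  have hlog_inc : ∀ {s t : ℝ}, 0 ≤ s → s ≤ t → t ≤ T →
      u t - u s ≤ (G t / G s) * ((∫ w in s..t, c₁ w) + u t * ∫ w in s..t, c₂ w) := by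
    intro s t hs hst htT
    have hGs : 0 < G s := hGpos hs (hst.trans htT)
    have hGt : 0 < G t := hGpos (hs.trans hst) htT
    have h1 : u t - u s = Real.log (G t / G s) := (Real.log_div hGt.ne' hGs.ne').symm
    have h2 : Real.log (G t / G s) ≤ G t / G s - 1 :=
      Real.log_le_sub_one_of_pos (div_pos hGt hGs)
    have h3 := hkey hs hst htT
    have h4 : G t / G s - 1 = (G t - G s) / G s := by field_simp
    have h5 : (G t - G s) / G s ≤ (G t * ((∫ w in s..t, c₁ w) + u t * ∫ w in s..t, c₂ w)) / G s := by
      gcongr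
    have h6 : (G t * ((∫ w in s..t, c₁ w) + u t * ∫ w in s..t, c₂ w)) / G s
        = (G t / G s) * ((∫ w in s..t, c₁ w) + u t * ∫ w in s..t, c₂ w) := by ring
    linarith
    -- C facts
  have hCdiff : ∀ {s t : ℝ}, 0 ≤ s → s ≤ t → t ≤ T → C t - C s = ∫ w in s..t, c₂ w := by
    intro s t hs hst htT
    have h := intervalIntegral.integral_add_adjacent_intervals
      (hc2i' le_rfl hs (hst.trans htT)) (hc2i' hs hst htT)
    show (∫ w in (0:ℝ)..t, c₂ w) - ∫ w in (0:ℝ)..s, c₂ w = _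
    linarith
  have hCnn : ∀ {s : ℝ}, 0 ≤ s → s ≤ T → 0 ≤ C s :=
    fun hs hsT => hintnn c₂ le_rfl hs hsT hc2nn
  have hCmono : ∀ {s t : ℝ}, 0 ≤ s → s ≤ t → t ≤ T → C s ≤ C t := by
    intro s t hs hst htT
    have h1 := hCdiff hs hst htT
    have h2 := hintnn c₂ hs hst htT hc2nn
    linarith
  -- continuity
  have hIccT : Set.uIcc (0:ℝ) T = Set.Icc 0 T := Set.uIcc_of_le hT
  have h0mem : (0:ℝ) ∈ Set.uIcc (0:ℝ) T := Set.left_mem_uIcc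
  have hGcont : ContinuousOn G (Set.Icc 0 T) := by
    have h := intervalIntegral.continuousOn_primitive_interval' hfi h0mem
    rw [hIccT] at h
    exact continuousOn_const.add h
  have hCcont : ContinuousOn C (Set.Icc 0 T) := by
    have h := intervalIntegral.continuousOn_primitive_interval' hc2i h0mem
    rwa [hIccT] at h
  have hEcont : ContinuousOn (fun s => Real.exp (-(C s))) (Set.Icc 0 T) :=
    Real.continuous_exp.comp_continuousOn hCcont.neg
  have hPint : IntervalIntegrable (fun w => c₁ w * Real.exp (-(C w))) volume 0 T :=
    hc1i.mul_continuousOn (by rw [hIccT]; exact hEcont)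
  have hPi' : ∀ {s t : ℝ}, 0 ≤ s → s ≤ t → t ≤ T →
      IntervalIntegrable (fun w => c₁ w * Real.exp (-(C w))) volume s t :=
    fun hs hst htT => hPint.mono_set (hsub hs hst htT)
  have hPdiff : ∀ {s t : ℝ}, 0 ≤ s → s ≤ t → t ≤ T →
      P t - P s = ∫ w in s..t, c₁ w * Real.exp (-(C w)) := by
    intro s t hs hst htT
    have h := intervalIntegral.integral_add_adjacent_intervals
      (hPi' le_rfl hs (hst.trans htT)) (hPi' hs hst htT)
    show (∫ w in (0:ℝ)..t, c₁ w * Real.exp (-(C w)))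
      - ∫ w in (0:ℝ)..s, c₁ w * Real.exp (-(C w)) = _
    linarith
  have hPcont : ContinuousOn P (Set.Icc 0 T) := by
    have h := intervalIntegral.continuousOn_primitive_interval' hPint h0mem
    rwa [hIccT] at h
  have hucont : ContinuousOn u (Set.Icc 0 T) :=
    hGcont.log (fun x hx => (hGpos hx.1 hx.2).ne')
  have hAint : IntervalIntegrable (fun w => c₁ w + c₂ w) volume 0 T := hc1i.add hc2i
  have hAi' : ∀ {s t : ℝ}, 0 ≤ s → s ≤ t → t ≤ T →
      IntervalIntegrable (fun w => c₁ w + c₂ w) volume s t :=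
    fun hs hst htT => hAint.mono_set (hsub hs hst htT)
  have hAdiff : ∀ {s t : ℝ}, 0 ≤ s → s ≤ t → t ≤ T →
      A t - A s = (∫ w in s..t, c₁ w) + ∫ w in s..t, c₂ w := by
    intro s t hs hst htT
    have h := intervalIntegral.integral_add_adjacent_intervals
      (hAi' le_rfl hs (hst.trans htT)) (hAi' hs hst htT)
    have h2 : (∫ w in s..t, (c₁ w + c₂ w)) = (∫ w in s..t, c₁ w) + ∫ w in s..t, c₂ w :=
      intervalIntegral.integral_add (hc1i' hs hst htT) (hc2i' hs hst htT)
    show (∫ w in (0:ℝ)..t, (c₁ w + c₂ w)) - ∫ w in (0:ℝ)..s, (c₁ w + c₂ w) = _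
    linarith
  have hAcont : ContinuousOn A (Set.Icc 0 T) := by
    have h := intervalIntegral.continuousOn_primitive_interval' hAint h0mem
    rwa [hIccT] at h
  have hVcont : ContinuousOn V (Set.Icc 0 T) := (hEcont.mul hucont).sub hPcont
    -- single-step estimate
  have hstep : ∀ (ε : ℝ) {s t : ℝ}, 0 ≤ ε → 0 ≤ s → s ≤ t → t ≤ T →
      G t / G s - 1 ≤ ε → G t / G s * u t - u s ≤ ε →
      V t - V s ≤ ε * (A t - A s) := by
    intro ε s t hε hs hst htT h1 h2
    have hΔ₁ : 0 ≤ ∫ w in s..t, c₁ w := hintnn c₁ hs hst htT hc1nn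
    have hΔ₂ : 0 ≤ ∫ w in s..t, c₂ w := hintnn c₂ hs hst htT hc2nn
    set Δ₁ := ∫ w in s..t, c₁ w with hΔ₁_def
    set Δ₂ := ∫ w in s..t, c₂ w with hΔ₂_def
    have hAd : A t - A s = Δ₁ + Δ₂ := hAdiff hs hst htT
    have hCd : C t = C s + Δ₂ := by have := hCdiff hs hst htT; linarith
    have hEt_pos : (0:ℝ) < Real.exp (-(C t)) := Real.exp_pos _
    have hEs_pos : (0:ℝ) < Real.exp (-(C s)) := Real.exp_pos _
    set Es := Real.exp (-(C s)) with hEs_def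
    set Et := Real.exp (-(C t)) with hEt_def
    have hEt1 : Et ≤ 1 := by
      rw [hEt_def, ← Real.exp_zero]
      exact Real.exp_le_exp.2 (by linarith [hCnn (hs.trans hst) htT])
    have hEfact : Et = Es * Real.exp (-Δ₂) := by
      rw [hEt_def, hEs_def, hCd, neg_add, Real.exp_add]
    -- Et * (1 + Δ₂) ≤ Es
    have h3 : Et * (1 + Δ₂) ≤ Es := by
      have hh : Es * Real.exp (-Δ₂) * (1 + Δ₂) ≤ Es * Real.exp (-Δ₂) * Real.exp Δ₂ := by
        have := Real.add_one_le_exp Δ₂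
        gcongr
        linarith
      rw [hEfact]
      calc Es * Real.exp (-Δ₂) * (1 + Δ₂) ≤ Es * Real.exp (-Δ₂) * Real.exp Δ₂ := hh
        _ = Es * Real.exp (-Δ₂ + Δ₂) := by rw [Real.exp_add]; ring
        _ = Es := by simp
    -- Et * Δ₁ ≤ P t - P s
    have h4 : Et * Δ₁ ≤ P t - P s := by
      rw [hPdiff hs hst htT]
      have hmono : (∫ w in s..t, c₁ w * Et) ≤ ∫ w in s..t, c₁ w * Real.exp (-(C w)) := by
        refine intervalIntegral.integral_mono_on hst ((hc1i' hs hst htT).mul_const _)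
          (hPi' hs hst htT) ?_
        intro r hr
        have hr0 : 0 ≤ r := hs.trans hr.1
        have hrT : r ≤ T := hr.2.trans htT
        have hCr : C r ≤ C t := hCmono hr0 hr.2 htT
        have := hc1nn r ⟨hr0, hrT⟩
        exact mul_le_mul_of_nonneg_left (Real.exp_le_exp.2 (by linarith)) this
      calc Et * Δ₁ = ∫ w in s..t, c₁ w * Et := by
            rw [intervalIntegral.integral_mul_const]; ring
        _ ≤ _ := hmono
    have h5 : u t - u s ≤ (G t / G s) * (Δ₁ + u t * Δ₂) := hlog_inc hs hst htT
    have hus : 0 ≤ u s := hunn hs (hst.trans htT)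
    have hut : 0 ≤ u t := hunn (hs.trans hst) htT
    set R := G t / G s with hR_def
    have hVd : V t - V s = Et * u t - Es * u s - (P t - P s) := by
      show Real.exp (-(C t)) * u t - P t - (Real.exp (-(C s)) * u s - P s) = _
      rw [← hEt_def, ← hEs_def]; ring
    have e1 : Et * (u t - u s) ≤ Et * (R * (Δ₁ + u t * Δ₂)) :=
      mul_le_mul_of_nonneg_left h5 hEt_pos.le
    have e2 : u s * (Et - Es) ≤ u s * (-(Et * Δ₂)) := by
      refine mul_le_mul_of_nonneg_left ?_ hus
      have h3' := h3
      rw [mul_add, mul_one] at h3'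
      linarith
    have e3 : Et * u t - Es * u s - (P t - P s)
        ≤ Et * (Δ₁ * (R - 1) + Δ₂ * (R * u t - u s)) := by linarith [e1, e2, h4]
    have e4 : Δ₁ * (R - 1) + Δ₂ * (R * u t - u s) ≤ ε * (Δ₁ + Δ₂) := by
      have q1 := mul_le_mul_of_nonneg_left h1 hΔ₁
      have q2 := mul_le_mul_of_nonneg_left h2 hΔ₂
      linarith
    have e5 : Et * (Δ₁ * (R - 1) + Δ₂ * (R * u t - u s)) ≤ ε * (Δ₁ + Δ₂) := by
      rcases le_or_gt 0 (Δ₁ * (R - 1) + Δ₂ * (R * u t - u s)) with hc | hc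
      · calc Et * (Δ₁ * (R - 1) + Δ₂ * (R * u t - u s))
            ≤ 1 * (Δ₁ * (R - 1) + Δ₂ * (R * u t - u s)) :=
              mul_le_mul_of_nonneg_right hEt1 hc
          _ = Δ₁ * (R - 1) + Δ₂ * (R * u t - u s) := one_mul _
          _ ≤ ε * (Δ₁ + Δ₂) := e4
      · have hneg : Et * (Δ₁ * (R - 1) + Δ₂ * (R * u t - u s)) ≤ 0 :=
          (mul_nonpos_iff.2 (Or.inl ⟨hEt_pos.le, hc.le⟩))
        have hpos : 0 ≤ ε * (Δ₁ + Δ₂) := mul_nonneg hε (by linarith)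
        linarith
    rw [hVd, hAd]
    linarith [e3, e5]
    -- main induction: for every ε > 0, V T ≤ V 0 + ε * (A T - A 0)
  have main : ∀ ε : ℝ, 0 < ε → V T ≤ V 0 + ε * (A T - A 0) := by
    intro ε hε
    set S := {t : ℝ | V t - ε * (A t - A 0) ≤ V 0} with hS_def
    have hWcont : ContinuousOn (fun t => V t - ε * (A t - A 0)) (Set.Icc 0 T) :=
      hVcont.sub (continuousOn_const.mul (hAcont.sub continuousOn_const))
    have hclosed : IsClosed (S ∩ Set.Icc 0 T) := by
      have h : ContinuousOn (fun t => (V t - ε * (A t - A 0), V 0)) (Set.Icc 0 T) :=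
        hWcont.prodMk continuousOn_const
      rw [Set.inter_comm]
      exact h.preimage_isClosed_of_isClosed isClosed_Icc isClosed_le_prod
    have h0 : (0:ℝ) ∈ S := by
      show V 0 - ε * (A 0 - A 0) ≤ V 0
      simp
    have hsubS : Set.Icc (0:ℝ) T ⊆ S := by
      refine hclosed.Icc_subset_of_forall_exists_gt h0 ?_
      intro s hs v hv
      have hsS : s ∈ S := hs.1
      have hs0 : 0 ≤ s := hs.2.1
      have hsT : s < T := hs.2.2
      have hmem : s ∈ Set.Icc (0:ℝ) T := ⟨hs0, hsT.le⟩
      have hIocsub : Set.Ioc s T ⊆ Set.Icc (0:ℝ) T := fun x hx => ⟨hs0.trans hx.1.le, hx.2⟩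
      have hGt : Tendsto G (𝓝[>] s) (𝓝 (G s)) := by
        have h' : ContinuousWithinAt G (Set.Ioc s T) s := (hGcont s hmem).mono hIocsub
        rwa [ContinuousWithinAt, nhdsWithin_Ioc_eq_nhdsGT hsT] at h'
      have hut : Tendsto u (𝓝[>] s) (𝓝 (u s)) := by
        have h' : ContinuousWithinAt u (Set.Ioc s T) s := (hucont s hmem).mono hIocsub
        rwa [ContinuousWithinAt, nhdsWithin_Ioc_eq_nhdsGT hsT] at h'
      have hGs : 0 < G s := hGpos hs0 hsT.le
      have hRt : Tendsto (fun t => G t / G s - 1) (𝓝[>] s) (𝓝 0) := by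
        have h' := (hGt.div_const (G s)).sub_const 1
        simpa [div_self hGs.ne'] using h'
      have hR2 : Tendsto (fun t => G t / G s * u t - u s) (𝓝[>] s) (𝓝 0) := by
        have h' := ((hGt.div_const (G s)).mul hut).sub_const (u s)
        simpa [div_self hGs.ne'] using h'
      have ev1 : ∀ᶠ t in 𝓝[>] s, G t / G s - 1 ≤ ε :=
        (hRt.eventually_lt_const hε).mono fun t h => h.le
      have ev2 : ∀ᶠ t in 𝓝[>] s, G t / G s * u t - u s ≤ ε :=
        (hR2.eventually_lt_const hε).mono fun t h => h.le
      have ev3 : ∀ᶠ t in 𝓝[>] s, t ∈ Set.Ioc s T :=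
        Ioc_mem_nhdsGT_of_mem ⟨le_rfl, hsT⟩
      have ev4 : ∀ᶠ t in 𝓝[>] s, t < v :=
        eventually_nhdsWithin_of_eventually_nhds (eventually_lt_nhds hv)
      obtain ⟨t, h1, h2, h3, h4⟩ := (ev1.and (ev2.and (ev3.and ev4))).exists
      refine ⟨t, ?_, h3.1, h4.le⟩
      have hVts : V t - V s ≤ ε * (A t - A s) :=
        hstep ε hε.le hs0 h3.1.le h3.2 h1 h2
      have hsS' : V s - ε * (A s - A 0) ≤ V 0 := hsS
      show V t - ε * (A t - A 0) ≤ V 0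
      linarith
    have hTS := hsubS ⟨hT, le_rfl⟩
    have : V T - ε * (A T - A 0) ≤ V 0 := hTS
    linarith
  -- pass to the limit ε → 0
  have hA0 : A 0 = 0 := intervalIntegral.integral_same
  have hATnn : 0 ≤ A T := by
    have h := hintnn (fun w => c₁ w + c₂ w) le_rfl hT le_rfl
      (fun r hr => add_nonneg (hc1nn r hr) (hc2nn r hr))
    exact h
  have hVT : V T ≤ V 0 := by
    refine le_of_forall_pos_le_add fun δ hδ => ?_
    have hεpos : 0 < δ / (A T + 1) := by positivity
    have h := main _ hεpos
    have hfrac : δ / (A T + 1) * (A T - A 0) ≤ δ := by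
      rw [hA0, sub_zero]
      rw [div_mul_eq_mul_div, div_le_iff₀ (by linarith : (0:ℝ) < A T + 1)]
      nlinarith
    exact h.trans (add_le_add_right hfrac (V 0))
  have hV0 : V 0 = Real.log m := by
    show Real.exp (-(C 0)) * u 0 - P 0 = Real.log m
    have hC0 : C 0 = 0 := intervalIntegral.integral_same
    have hP0 : P 0 = 0 := intervalIntegral.integral_same
    have hG0 : G 0 = m := by
      show m + ∫ w in (0:ℝ)..0, f w = m
      simp
    rw [hC0, hP0]
    show Real.exp (-(0:ℝ)) * Real.log (G 0) - 0 = Real.log m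
    rw [hG0]
    simp
  have hCT : 0 ≤ C T := hCnn hT le_rfl
  have hfinal : u T ≤ Real.exp (C T) * Real.log m + Real.exp (C T) * P T := by
    have h : Real.exp (-(C T)) * u T - P T ≤ Real.log m := by rw [← hV0]; exact hVT
    have hE' : Real.exp (C T) * Real.exp (-(C T)) = 1 := by
      rw [← Real.exp_add]; simp
    have h' := mul_le_mul_of_nonneg_left h (Real.exp_pos (C T)).le
    have hx : Real.exp (C T) * (Real.exp (-(C T)) * u T) = u T := by
      rw [← mul_assoc, hE', one_mul]
    have h'' : Real.exp (C T) * (Real.exp (-(C T)) * u T - P T)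
        = u T - Real.exp (C T) * P T := by rw [mul_sub, hx]
    rw [h''] at h'
    linarith
  have hGT : G T = Real.exp (u T) := (Real.exp_log (hGpos hT le_rfl)).symm
  have hgoal : G T ≤ m ^ Real.exp (C T) * Real.exp (Real.exp (C T) * P T) := by
    rw [hGT, Real.rpow_def_of_pos (by linarith : (0:ℝ) < m), ← Real.exp_add]
    exact Real.exp_le_exp.2 (by linarith)
  exact hgoal

noncomputable def logPlus (u : ℝ) : ℝ := Real.log (max 1 u)

theorem stmt_0
    (X a c₁ c₂ M : ℝ → ℝ)
    (hXmeas : Measurable X) (hameas : Measurable a)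
    (hXnn : ∀ t, 0 ≤ t → 0 ≤ X t) (hann : ∀ t, 0 ≤ t → 0 ≤ a t)
    (hc₁meas : Measurable c₁) (hc₂meas : Measurable c₂)
    (hc₁nn : ∀ t, 0 ≤ t → 0 ≤ c₁ t) (hc₂nn : ∀ t, 0 ≤ t → 0 ≤ c₂ t)
    (hc₁int : ∀ t, 0 ≤ t → IntervalIntegrable c₁ volume 0 t)
    (hc₂int : ∀ t, 0 ≤ t → IntervalIntegrable c₂ volume 0 t)
    (hM : MonotoneOn M (Set.Ici 0)) (hM0 : 1 ≤ M 0)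
    (hint1 : ∀ t, 0 ≤ t → IntervalIntegrable (fun s => c₁ s * X s) volume 0 t)
    (hint2 : ∀ t, 0 ≤ t →
      IntervalIntegrable (fun s => c₂ s * X s * logPlus (X s)) volume 0 t)
    (hineq : ∀ t, 0 ≤ t →
      X t + a t ≤ M t + (∫ s in (0:ℝ)..t, c₁ s * X s)
        + ∫ s in (0:ℝ)..t, c₂ s * X s * logPlus (X s)) :
    ∀ t, 0 ≤ t →
      X t + a t ≤
        M t ^ Real.exp (∫ s in (0:ℝ)..t, c₂ s) *
          Real.exp (Real.exp (∫ s in (0:ℝ)..t, c₂ s) *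
            ∫ s in (0:ℝ)..t, c₁ s * Real.exp (-(∫ r in (0:ℝ)..s, c₂ r))) := by
  intro T hT
  have hT' : T ∈ Set.Ici (0:ℝ) := hT
  have hm1 : (1:ℝ) ≤ M T := hM0.trans (hM Set.self_mem_Ici hT' hT)
  set f : ℝ → ℝ := fun s => c₁ s * X s + c₂ s * X s * logPlus (X s) with hf_def
  have hfi : IntervalIntegrable f volume 0 T := (hint1 T hT).add (hint2 T hT)
  have hlpnn : ∀ x : ℝ, 0 ≤ logPlus x := fun x => Real.log_nonneg (le_max_left 1 x)
  have hfnn : ∀ r ∈ Set.Icc (0:ℝ) T, 0 ≤ f r := by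
    intro r hr
    exact add_nonneg (mul_nonneg (hc₁nn r hr.1) (hXnn r hr.1))
      (mul_nonneg (mul_nonneg (hc₂nn r hr.1) (hXnn r hr.1)) (hlpnn (X r)))
  have hXle : ∀ r ∈ Set.Icc (0:ℝ) T, X r ≤ M T + ∫ w in (0:ℝ)..r, f w := by
    intro r hr
    have h1 := hineq r hr.1
    have h2 : M r ≤ M T := hM hr.1 hT' hr.2
    have h3 : (∫ w in (0:ℝ)..r, f w)
        = (∫ s in (0:ℝ)..r, c₁ s * X s) + ∫ s in (0:ℝ)..r, c₂ s * X s * logPlus (X s) :=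
      intervalIntegral.integral_add (hint1 r hr.1) (hint2 r hr.1)
    have h4 : 0 ≤ a r := hann r hr.1
    rw [h3]
    linarith
  have hfle : ∀ r ∈ Set.Icc (0:ℝ) T,
      f r ≤ (c₁ r + c₂ r * Real.log (M T + ∫ w in (0:ℝ)..r, f w))
        * (M T + ∫ w in (0:ℝ)..r, f w) := by
    intro r hr
    set Gr := M T + ∫ w in (0:ℝ)..r, f w with hGr_def
    have hGr1 : 1 ≤ Gr := by
      have h : 0 ≤ ∫ w in (0:ℝ)..r, f w :=
        intervalIntegral.integral_nonneg hr.1 (fun x hx => hfnn x ⟨hx.1, hx.2.trans hr.2⟩)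
      show (1:ℝ) ≤ M T + ∫ w in (0:ℝ)..r, f w
      linarith
    have hX := hXle r hr
    have hlog : logPlus (X r) ≤ Real.log Gr :=
      Real.log_le_log (lt_of_lt_of_le one_pos (le_max_left 1 (X r))) (max_le hGr1 hX)
    have hlognn : 0 ≤ Real.log Gr := Real.log_nonneg hGr1
    have hc1r := hc₁nn r hr.1
    have hc2r := hc₂nn r hr.1
    have hX0 := hXnn r hr.1
    have h1 : c₁ r * X r ≤ c₁ r * Gr := mul_le_mul_of_nonneg_left hX hc1r
    have h2 : c₂ r * X r * logPlus (X r) ≤ c₂ r * Gr * Real.log Gr := by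
      have ha : c₂ r * X r * logPlus (X r) ≤ c₂ r * Gr * logPlus (X r) :=
        mul_le_mul_of_nonneg_right (mul_le_mul_of_nonneg_left hX hc2r) (hlpnn (X r))
      have hb : c₂ r * Gr * logPlus (X r) ≤ c₂ r * Gr * Real.log Gr :=
        mul_le_mul_of_nonneg_left hlog (mul_nonneg hc2r (by linarith))
      linarith
    calc f r = c₁ r * X r + c₂ r * X r * logPlus (X r) := rfl
      _ ≤ c₁ r * Gr + c₂ r * Gr * Real.log Gr := by linarith
      _ = (c₁ r + c₂ r * Real.log Gr) * Gr := by ring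
  have hmain := gronwall_aux f c₁ c₂ T (M T) hT hm1 hfi (hc₁int T hT) (hc₂int T hT)
    hfnn (fun r hr => hc₁nn r hr.1) (fun r hr => hc₂nn r hr.1) hfle
  have h1 := hineq T hT
  have h3 : (∫ w in (0:ℝ)..T, f w)
      = (∫ s in (0:ℝ)..T, c₁ s * X s) + ∫ s in (0:ℝ)..T, c₂ s * X s * logPlus (X s) :=
    intervalIntegral.integral_add (hint1 T hT) (hint2 T hT)
  rw [h3] at hmain
  linarith
end

section
/- Let f : [0,∞) → [0,∞) be measurable and integrable on every bounded interval, let α ∈ [0, 1/2], and let c₁, c₂, c₃ ≥ 0 be constants. Assume that for every t ≥ 0 the integral ∫₀ᵗ (t−s)^{−α} f(s) ds is finite and f(t) ≤ c₁∫₀ᵗ f(s) ds + c₂∫₀ᵗ (t−s)^{−α} f(s) ds + c₃∫₀ᵗ f(s)·log₊(1/f(s)) ds. Then f(t) = 0 for every t ≥ 0. -/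
open MeasureTheory

section Aux
open intervalIntegral Set

lemma logPlus_nonneg (u : ℝ) : 0 ≤ logPlus u := Real.log_nonneg (le_max_left _ _)

lemma measurable_logPlus : Measurable logPlus :=
  Real.measurable_log.comp (measurable_const.max measurable_id)

-- shift lemma
lemma shift_integral {g : ℝ → ℝ} {τ t : ℝ} (hτ : 0 ≤ τ) (hτt : τ ≤ t)
    (hi : IntervalIntegrable g volume 0 t)
    (hzero : ∀ s, 0 ≤ s → s ≤ τ → g s = 0) :
    ∫ s in (0:ℝ)..t, g s = ∫ s in τ..t, g s := by
  have h0t : (0:ℝ) ≤ t := le_trans hτ hτt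
  have h1 : IntervalIntegrable g volume 0 τ := hi.mono_set
    (by rw [uIcc_of_le hτ, uIcc_of_le h0t]; exact Icc_subset_Icc le_rfl hτt)
  have h2 : IntervalIntegrable g volume τ t := hi.mono_set
    (by rw [uIcc_of_le hτt, uIcc_of_le h0t]; exact Icc_subset_Icc hτ le_rfl)
  rw [← integral_add_adjacent_intervals h1 h2]
  have h3 : ∫ s in (0:ℝ)..τ, g s = 0 := by
    rw [integral_congr (g := fun _ => (0:ℝ))]
    · exact integral_zero
    · intro s hs
      rw [uIcc_of_le hτ] at hs
      exact hzero s hs.1 hs.2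
  rw [h3, zero_add]

-- conversion
lemma conv {g : ℝ → ℝ} {a b : ℝ} (hab : a ≤ b) (hi : IntervalIntegrable g volume a b)
    (hnn : ∀ s ∈ Ioc a b, 0 ≤ g s) :
    ENNReal.ofReal (∫ s in a..b, g s) = ∫⁻ s in Ioc a b, ENNReal.ofReal (g s) := by
  rw [integral_of_le hab]
  apply ofReal_integral_eq_lintegral_ofReal
    ((intervalIntegrable_iff_integrableOn_Ioc_of_le hab).mp hi)
  filter_upwards [ae_restrict_mem measurableSet_Ioc] with s hs using hnn s hs

lemma l1 (x ε : ℝ) (hx : 0 ≤ x) (hε : 0 < ε) (hε1 : ε ≤ 1) :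
    x * logPlus (1 / x) ≤ x * Real.log (1 / ε) + ε := by
  have hlogε : 0 ≤ Real.log (1 / ε) := Real.log_nonneg (by rw [le_div_iff₀ hε]; linarith)
  rcases eq_or_lt_of_le hx with h0 | hx0
  · simp only [← h0, zero_mul, zero_add]; positivity
  rcases le_or_gt 1 x with h1 | h1
  · have hle : (1:ℝ)/x ≤ 1 := by rw [div_le_one (by linarith)]; exact h1
    have : logPlus (1 / x) = 0 := by
      unfold logPlus; rw [max_eq_left hle, Real.log_one]
    rw [this]; nlinarith
  · have h1x : 1 ≤ 1 / x := by rw [le_div_iff₀ hx0]; linarith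
    have hlp : logPlus (1 / x) = Real.log (1 / x) := by
      unfold logPlus; rw [max_eq_right h1x]
    rw [hlp]
    have key : Real.log (1 / x) = Real.log (1 / ε) + Real.log (ε / x) := by
      rw [← Real.log_mul (by positivity) (by positivity)]
      congr 1; field_simp
    rw [key, mul_add]
    have h2 : Real.log (ε / x) ≤ ε / x - 1 := Real.log_le_sub_one_of_pos (by positivity)
    have : x * Real.log (ε / x) ≤ ε := by
      calc x * Real.log (ε / x) ≤ x * (ε / x - 1) := by nlinarith
        _ = ε - x := by field_simp
        _ ≤ ε := by linarith
    linarith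

lemma logPlus_int {f : ℝ → ℝ} (hfmeas : Measurable f) {t : ℝ} (ht : 0 ≤ t)
    (hfnn : ∀ s, 0 ≤ s → 0 ≤ f s) :
    IntervalIntegrable (fun s => f s * logPlus (1 / f s)) volume 0 t := by
  rw [intervalIntegrable_iff_integrableOn_Ioc_of_le ht]
  apply Integrable.mono' (g := fun _ => (1:ℝ))
  · exact integrableOn_const measure_Ioc_lt_top.ne
  · exact (hfmeas.mul (measurable_logPlus.comp (measurable_const.div hfmeas))).aestronglyMeasurable
  · filter_upwards [ae_restrict_mem measurableSet_Ioc] with s hs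
    have h0 : 0 ≤ f s := hfnn s (le_of_lt hs.1)
    have h1 : 0 ≤ f s * logPlus (1 / f s) := mul_nonneg h0 (logPlus_nonneg _)
    rw [Real.norm_eq_abs, abs_of_nonneg h1]
    have := l1 (f s) 1 h0 one_pos le_rfl
    simpa using this

section K
variable {α : ℝ}


variable {α : ℝ}

lemma kii_left (hα : α ≤ 1/2) (a b : ℝ) :
    IntervalIntegrable (fun s => (b - s) ^ (-α)) volume a b := by
  have h : IntervalIntegrable (fun x : ℝ => x ^ (-α)) volume (b - b) (b - a) :=
    intervalIntegrable_rpow' (by linarith)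
  simpa using (h.comp_sub_left b).symm

lemma kii_right (hα : α ≤ 1/2) (a b : ℝ) :
    IntervalIntegrable (fun s => (s - a) ^ (-α)) volume a b := by
  have h : IntervalIntegrable (fun x : ℝ => x ^ (-α)) volume (a - a) (b - a) :=
    intervalIntegrable_rpow' (by linarith)
  simpa using h.comp_sub_right a

lemma kval (hα0 : 0 ≤ α) (hα : α ≤ 1/2) {a b : ℝ} (hab : a ≤ b) :
    ∫ s in a..b, (b - s) ^ (-α) = (b - a) ^ (1 - α) / (1 - α) := by
  have := integral_comp_sub_left (a := a) (b := b) (fun x : ℝ => x ^ (-α)) b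
  rw [this, sub_self]
  rw [integral_rpow (Or.inl (by linarith))]
  rw [Real.zero_rpow (by norm_num; linarith)]
  norm_num
  rw [show -α + 1 = 1 - α by ring]

lemma kval_right (hα0 : 0 ≤ α) (hα : α ≤ 1/2) {a b : ℝ} (hab : a ≤ b) :
    ∫ s in a..b, (s - a) ^ (-α) = (b - a) ^ (1 - α) / (1 - α) := by
  have := integral_comp_sub_right (a := a) (b := b) (fun x : ℝ => x ^ (-α)) a
  rw [this, sub_self]
  rw [integral_rpow (Or.inl (by linarith))]
  rw [Real.zero_rpow (by norm_num; linarith)]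
  norm_num
  rw [show -α + 1 = 1 - α by ring]

-- bound: if b - a ≤ 1 then value ≤ 2
lemma kval_le (hα0 : 0 ≤ α) (hα : α ≤ 1/2) {a b : ℝ} (hab : a ≤ b) (h1 : b - a ≤ 1) :
    (b - a) ^ (1 - α) / (1 - α) ≤ 2 := by
  have h2 : (b - a) ^ (1 - α) ≤ 1 :=
    Real.rpow_le_one (by linarith) h1 (by linarith)
  rw [div_le_iff₀ (by linarith)]
  nlinarith

-- lintegral version
lemma klint_left (hα0 : 0 ≤ α) (hα : α ≤ 1/2) {a b : ℝ} (hab : a ≤ b) :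
    ∫⁻ s in Ioc a b, ENNReal.ofReal ((b - s) ^ (-α)) =
      ENNReal.ofReal ((b - a) ^ (1 - α) / (1 - α)) := by
  rw [← kval hα0 hα hab, intervalIntegral.integral_of_le hab,
    ← ofReal_integral_eq_lintegral_ofReal]
  · exact (intervalIntegrable_iff_integrableOn_Ioc_of_le hab).mp (kii_left hα a b)
  · filter_upwards [ae_restrict_mem measurableSet_Ioc] with s hs
    exact Real.rpow_nonneg (by linarith [hs.2]) _

lemma klint_right (hα0 : 0 ≤ α) (hα : α ≤ 1/2) {a b : ℝ} (hab : a ≤ b) :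
    ∫⁻ s in Ioc a b, ENNReal.ofReal ((s - a) ^ (-α)) =
      ENNReal.ofReal ((b - a) ^ (1 - α) / (1 - α)) := by
  rw [← kval_right hα0 hα hab, intervalIntegral.integral_of_le hab,
    ← ofReal_integral_eq_lintegral_ofReal]
  · exact (intervalIntegrable_iff_integrableOn_Ioc_of_le hab).mp (kii_right hα a b)
  · filter_upwards [ae_restrict_mem measurableSet_Ioc] with s hs
    exact Real.rpow_nonneg (by linarith [hs.1]) _

lemma kprod (hα0 : 0 ≤ α) (hα : α ≤ 1/2) {r t : ℝ} (hrt : r ≤ t) (h1 : t - r ≤ 1) :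
    ∫⁻ s in Ioc r t, ENNReal.ofReal ((t - s) ^ (-α)) * ENNReal.ofReal ((s - r) ^ (-α))
      ≤ ENNReal.ofReal 4 := by
  rcases eq_or_lt_of_le hrt with rfl | hlt
  · simp
  obtain ⟨m, hm⟩ : ∃ m, m = (r + t) / 2 := ⟨_, rfl⟩
  obtain ⟨x, hx⟩ : ∃ x, x = (t - r) / 2 := ⟨_, rfl⟩
  have hrm : r ≤ m := by rw [hm]; linarith
  have hmt : m ≤ t := by rw [hm]; linarith
  have hx0 : 0 < x := by rw [hx]; linarith
  have hx1 : x ≤ 1 := by rw [hx]; linarith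
  have hxm : t - m = x := by rw [hm, hx]; ring
  have hxm' : m - r = x := by rw [hm, hx]; ring
  have hsplit : Ioc r t = Ioc r m ∪ Ioc m t := (Ioc_union_Ioc_eq_Ioc hrm hmt).symm
  have hdisj : Disjoint (Ioc r m) (Ioc m t) := Ioc_disjoint_Ioc_of_le le_rfl
  rw [hsplit, lintegral_union measurableSet_Ioc hdisj]
  have hval : ENNReal.ofReal (x ^ (-α)) * ENNReal.ofReal (x ^ (1 - α) / (1 - α))
      ≤ ENNReal.ofReal 2 := by
    rw [← ENNReal.ofReal_mul (Real.rpow_nonneg hx0.le _)]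
    apply ENNReal.ofReal_le_ofReal
    rw [← mul_div_assoc, ← Real.rpow_add hx0]
    have h2 : x ^ (-α + (1 - α)) ≤ 1 := Real.rpow_le_one hx0.le hx1 (by linarith)
    rw [div_le_iff₀ (by linarith)]
    nlinarith
  have half1 : ∫⁻ s in Ioc r m, ENNReal.ofReal ((t - s) ^ (-α)) * ENNReal.ofReal ((s - r) ^ (-α))
      ≤ ENNReal.ofReal 2 := by
    calc ∫⁻ s in Ioc r m, ENNReal.ofReal ((t - s) ^ (-α)) * ENNReal.ofReal ((s - r) ^ (-α))
        ≤ ∫⁻ s in Ioc r m, ENNReal.ofReal (x ^ (-α)) * ENNReal.ofReal ((s - r) ^ (-α)) := by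
          apply lintegral_mono_ae
          filter_upwards [ae_restrict_mem measurableSet_Ioc] with s hs
          have hxs : x ≤ t - s := by rw [hx]; rw [hm] at hs; linarith [hs.2]
          exact mul_le_mul_left (ENNReal.ofReal_le_ofReal
            (Real.rpow_le_rpow_of_nonpos hx0 hxs (neg_nonpos.mpr hα0))) _
      _ = ENNReal.ofReal (x ^ (-α)) * ∫⁻ s in Ioc r m, ENNReal.ofReal ((s - r) ^ (-α)) :=
          lintegral_const_mul' _ _ ENNReal.ofReal_ne_top
      _ = ENNReal.ofReal (x ^ (-α)) * ENNReal.ofReal ((m - r) ^ (1 - α) / (1 - α)) := by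
          rw [klint_right hα0 hα hrm]
      _ ≤ ENNReal.ofReal 2 := by rw [hxm']; exact hval
  have half2 : ∫⁻ s in Ioc m t, ENNReal.ofReal ((t - s) ^ (-α)) * ENNReal.ofReal ((s - r) ^ (-α))
      ≤ ENNReal.ofReal 2 := by
    calc ∫⁻ s in Ioc m t, ENNReal.ofReal ((t - s) ^ (-α)) * ENNReal.ofReal ((s - r) ^ (-α))
        ≤ ∫⁻ s in Ioc m t, ENNReal.ofReal ((t - s) ^ (-α)) * ENNReal.ofReal (x ^ (-α)) := by
          apply lintegral_mono_ae
          filter_upwards [ae_restrict_mem measurableSet_Ioc] with s hs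
          have hxs : x ≤ s - r := by rw [hx]; rw [hm] at hs; linarith [hs.1]
          exact mul_le_mul_right (ENNReal.ofReal_le_ofReal
            (Real.rpow_le_rpow_of_nonpos hx0 hxs (neg_nonpos.mpr hα0))) _
      _ = ENNReal.ofReal (x ^ (-α)) * ∫⁻ s in Ioc m t, ENNReal.ofReal ((t - s) ^ (-α)) := by
          rw [← lintegral_const_mul' _ _ ENNReal.ofReal_ne_top]
          simp_rw [mul_comm]
      _ = ENNReal.ofReal (x ^ (-α)) * ENNReal.ofReal ((t - m) ^ (1 - α) / (1 - α)) := by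
          rw [klint_left hα0 hα hmt]
      _ ≤ ENNReal.ofReal 2 := by rw [hxm]; exact hval
  calc _ ≤ ENNReal.ofReal 2 + ENNReal.ofReal 2 := add_le_add half1 half2
    _ = ENNReal.ofReal 4 := by rw [← ENNReal.ofReal_add] <;> norm_num




lemma tonelli_bound (hα0 : 0 ≤ α) (hα : α ≤ 1/2) (f : ℝ → ℝ) (hf : Measurable f)
    {τ t : ℝ} (hτt : τ ≤ t) (h1 : t - τ ≤ 1) :
    ∫⁻ s in Ioc τ t, ENNReal.ofReal ((t - s) ^ (-α)) *
        (∫⁻ r in Ioc τ s, ENNReal.ofReal ((s - r) ^ (-α)) * ENNReal.ofReal (f r))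
      ≤ ENNReal.ofReal 4 * ∫⁻ r in Ioc τ t, ENNReal.ofReal (f r) := by
  set S : Set (ℝ × ℝ) := {p : ℝ × ℝ | τ < p.2 ∧ p.2 ≤ p.1} with hS
  have hSm : MeasurableSet S :=
    (measurableSet_lt measurable_const measurable_snd).inter
      (measurableSet_le measurable_snd measurable_fst)
  set H : ℝ × ℝ → ENNReal := S.indicator
    (fun p => ENNReal.ofReal ((t - p.1) ^ (-α)) * ENNReal.ofReal ((p.1 - p.2) ^ (-α))
      * ENNReal.ofReal (f p.2)) with hH
  have hHm : Measurable H := by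
    apply Measurable.indicator _ hSm
    apply Measurable.fun_mul
    apply Measurable.fun_mul
    · exact ENNReal.measurable_ofReal.comp
        ((measurable_const.sub measurable_fst).pow measurable_const)
    · exact ENNReal.measurable_ofReal.comp
        ((measurable_fst.sub measurable_snd).pow measurable_const)
    · exact ENNReal.measurable_ofReal.comp (hf.comp measurable_snd)
  have step1 : ∫⁻ s in Ioc τ t, ENNReal.ofReal ((t - s) ^ (-α)) *
        (∫⁻ r in Ioc τ s, ENNReal.ofReal ((s - r) ^ (-α)) * ENNReal.ofReal (f r))
      = ∫⁻ s in Ioc τ t, ∫⁻ r in Ioc τ t, H (s, r) := by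
    apply setLIntegral_congr_fun_ae measurableSet_Ioc
    apply ae_of_all
    intro s hs
    rw [← lintegral_const_mul' _ _ ENNReal.ofReal_ne_top]
    have hind : ∀ r, H (s, r) = (Ioc τ s).indicator
        (fun r => ENNReal.ofReal ((t - s) ^ (-α)) * ENNReal.ofReal ((s - r) ^ (-α))
          * ENNReal.ofReal (f r)) r := by
      intro r
      rcases em (r ∈ Ioc τ s) with h | h
      · have hmem : (s, r) ∈ S := ⟨h.1, h.2⟩
        rw [hH, indicator_of_mem hmem, indicator_of_mem h]
      · have hnot : (s, r) ∉ S := fun hc => h ⟨hc.1, hc.2⟩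
        rw [hH, indicator_of_notMem hnot, indicator_of_notMem h]
    simp_rw [hind]
    rw [lintegral_indicator measurableSet_Ioc, Measure.restrict_restrict measurableSet_Ioc,
      inter_eq_left.mpr (Ioc_subset_Ioc_right hs.2)]
    simp_rw [mul_assoc]
  have step2 : ∫⁻ s in Ioc τ t, ∫⁻ r in Ioc τ t, H (s, r)
      = ∫⁻ r in Ioc τ t, ∫⁻ s in Ioc τ t, H (s, r) :=
    lintegral_lintegral_swap hHm.aemeasurable
  have step3 : ∫⁻ r in Ioc τ t, ∫⁻ s in Ioc τ t, H (s, r)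
      ≤ ∫⁻ r in Ioc τ t, ENNReal.ofReal 4 * ENNReal.ofReal (f r) := by
    apply lintegral_mono_ae
    filter_upwards [ae_restrict_mem measurableSet_Ioc] with r hr
    have hind : ∀ s, H (s, r) = (Icc r t ∪ Ioi t).indicator
        (fun s => ENNReal.ofReal ((t - s) ^ (-α)) * ENNReal.ofReal ((s - r) ^ (-α))
          * ENNReal.ofReal (f r)) s := by
      intro s
      rcases em (r ≤ s) with h | h
      · have hmem : (s, r) ∈ S := ⟨hr.1, h⟩
        have hin : s ∈ Icc r t ∪ Ioi t := by
          rcases le_or_gt s t with hst | hst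
          · exact Or.inl ⟨h, hst⟩
          · exact Or.inr hst
        rw [hH, indicator_of_mem hmem, indicator_of_mem hin]
      · have hnot : (s, r) ∉ S := fun hc => h hc.2
        have hnot2 : s ∉ Icc r t ∪ Ioi t := by
          intro hc
          rcases hc with hc | hc
          · exact h hc.1
          · exact h (le_trans hr.2 (le_of_lt hc))
        rw [hH, indicator_of_notMem hnot, indicator_of_notMem hnot2]
    calc ∫⁻ s in Ioc τ t, H (s, r)
        = ∫⁻ s in Ioc τ t ∩ (Icc r t ∪ Ioi t),
            ENNReal.ofReal ((t - s) ^ (-α)) * ENNReal.ofReal ((s - r) ^ (-α))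
              * ENNReal.ofReal (f r) := by
          simp_rw [hind]
          rw [lintegral_indicator (measurableSet_Icc.union measurableSet_Ioi),
            Measure.restrict_restrict (measurableSet_Icc.union measurableSet_Ioi), inter_comm]
      _ = ∫⁻ s in Icc r t, ENNReal.ofReal ((t - s) ^ (-α)) * ENNReal.ofReal ((s - r) ^ (-α))
              * ENNReal.ofReal (f r) := by
          congr 2
          ext s
          simp only [mem_inter_iff, mem_Ioc, mem_union, mem_Icc, mem_Ioi]
          constructor
          · rintro ⟨⟨hτs, hst⟩, hc⟩
            rcases hc with hc | hc
            · exact ⟨hc.1, hst⟩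
            · exact absurd hst (not_le.mpr hc)
          · rintro ⟨hrs, hst⟩
            exact ⟨⟨lt_of_lt_of_le hr.1 hrs, hst⟩, Or.inl ⟨hrs, hst⟩⟩
      _ = ∫⁻ s in Ioc r t, ENNReal.ofReal ((t - s) ^ (-α)) * ENNReal.ofReal ((s - r) ^ (-α))
              * ENNReal.ofReal (f r) := by
          rw [Measure.restrict_congr_set (Ioc_ae_eq_Icc (α := ℝ) (a := r) (b := t))]
      _ = (∫⁻ s in Ioc r t, ENNReal.ofReal ((t - s) ^ (-α)) * ENNReal.ofReal ((s - r) ^ (-α)))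
            * ENNReal.ofReal (f r) :=
          lintegral_mul_const' _ _ ENNReal.ofReal_ne_top
      _ ≤ ENNReal.ofReal 4 * ENNReal.ofReal (f r) := by
          apply mul_le_mul_left
          exact kprod hα0 hα hr.2 (by linarith [hr.1])
  rw [step1, step2]
  refine le_trans step3 ?_
  rw [lintegral_const_mul' _ _ ENNReal.ofReal_ne_top]

end K


-- exp integral helper
lemma exp_int (L τ t : ℝ) (hL : L ≠ 0) :
    ∫ s in τ..t, Real.exp (L * (s - τ)) = (Real.exp (L * (t - τ)) - 1) / L := by
  have h1 : ∫ s in τ..t, Real.exp (L * (s - τ))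
      = ∫ x in (0:ℝ)..(t - τ), Real.exp (L * x) := by
    have := integral_comp_sub_right (a := τ) (b := t) (fun x : ℝ => Real.exp (L * x)) τ
    simpa using this
  rw [h1, integral_comp_mul_left (fun x => Real.exp x) hL, mul_zero, integral_exp]
  simp [smul_eq_mul, Real.exp_zero]
  field_simp

-- pow integral helper
lemma pow_int (τ t : ℝ) (n : ℕ) :
    ∫ s in τ..t, (s - τ) ^ n = (t - τ) ^ (n + 1) / (n + 1) := by
  have := integral_comp_sub_right (a := τ) (b := t) (fun x : ℝ => x ^ n) τ
  simp only [this, sub_self, integral_pow, zero_pow (Nat.succ_ne_zero n)]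
  ring

lemma gronwall {f : ℝ → ℝ} {τ t₁ L M : ℝ} (hτ : τ ≤ t₁) (hL : 0 < L) (hM : 0 ≤ M)
    (hfi : IntervalIntegrable f volume τ t₁)
    (hnn : ∀ t ∈ Icc τ t₁, 0 ≤ f t)
    (hbound : ∀ t ∈ Icc τ t₁, f t ≤ L * (∫ s in τ..t, f s) + M) :
    f t₁ ≤ M * Real.exp (L * (t₁ - τ)) := by
  set F : ℝ → ℝ := fun t => ∫ s in τ..t, f s with hF
  have hfi' : ∀ t ∈ Icc τ t₁, IntervalIntegrable f volume τ t := fun t ht =>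
    hfi.mono_set (by rw [uIcc_of_le ht.1, uIcc_of_le hτ]; exact Icc_subset_Icc le_rfl ht.2)
  have hFcont : ContinuousOn F (Icc τ t₁) := by
    have := continuousOn_primitive_interval (μ := volume) (f := f) (a := τ) (b := t₁)
      (by rw [uIcc_of_le hτ]
          exact (intervalIntegrable_iff_integrableOn_Icc_of_le hτ).mp hfi)
    rw [uIcc_of_le hτ] at this
    exact this
  have hFmono : ∀ s ∈ Icc τ t₁, ∀ t ∈ Icc τ t₁, s ≤ t → F s ≤ F t := by
    intro s hs t ht hst
    have h1 : IntervalIntegrable f volume s t := (hfi' t ht).mono_set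
      (by rw [uIcc_of_le hst, uIcc_of_le ht.1]; exact Icc_subset_Icc hs.1 le_rfl)
    have : F t = F s + ∫ u in s..t, f u := by
      rw [hF]; exact (integral_add_adjacent_intervals (hfi' s hs) h1).symm
    rw [this]
    have : 0 ≤ ∫ u in s..t, f u := by
      apply integral_nonneg hst
      intro u hu; exact hnn u ⟨le_trans hs.1 hu.1, le_trans hu.2 ht.2⟩
    linarith
  have hFnn : ∀ t ∈ Icc τ t₁, 0 ≤ F t := by
    intro t ht
    have : F τ = 0 := by simp [hF]
    rw [← this]; exact hFmono τ ⟨le_rfl, hτ⟩ t ht ht.1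
  have key : ∀ n : ℕ, ∀ t ∈ Icc τ t₁,
      F t ≤ M / L * (Real.exp (L * (t - τ)) - 1) + F t₁ * (L ^ n * (t - τ) ^ n / n.factorial) := by
    intro n
    induction n with
    | zero =>
      intro t ht
      have h1 : 1 ≤ Real.exp (L * (t - τ)) := by
        rw [← Real.exp_zero]; apply Real.exp_le_exp.mpr; nlinarith [ht.1]
      have h2 : F t ≤ F t₁ := hFmono t ht t₁ ⟨hτ, le_rfl⟩ ht.2
      simp only [pow_zero, Nat.factorial_zero, Nat.cast_one]
      have hd : 0 ≤ M / L := div_nonneg hM hL.le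
      have : 0 ≤ M / L * (Real.exp (L * (t - τ)) - 1) := by nlinarith
      nlinarith
    | succ n ih =>
      intro t ht
      have hcontG : ContinuousOn (fun s => L * F s + M) (Icc τ t₁) :=
        (continuousOn_const.mul hFcont).add continuousOn_const
      have step1 : F t ≤ ∫ s in τ..t, (L * F s + M) := by
        apply integral_mono_on ht.1 (hfi' t ht)
        · apply ContinuousOn.intervalIntegrable
          rw [uIcc_of_le ht.1]
          exact hcontG.mono (Icc_subset_Icc le_rfl ht.2)
        · intro s hs; exact hbound s ⟨hs.1, le_trans hs.2 ht.2⟩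
      have hc1 : Continuous fun s : ℝ => Real.exp (L * (s - τ)) :=
        Real.continuous_exp.comp (continuous_const.mul (continuous_id.sub continuous_const))
      have hc2 : Continuous fun s : ℝ => (s - τ) ^ n :=
        (continuous_id.sub continuous_const).pow n
      have hcR : Continuous fun s : ℝ => M * Real.exp (L * (s - τ))
          + (F t₁ * L ^ (n+1) / n.factorial) * (s - τ) ^ n :=
        (continuous_const.mul hc1).add (continuous_const.mul hc2)
      have step2 : ∫ s in τ..t, (L * F s + M)
          ≤ ∫ s in τ..t, (M * Real.exp (L * (s - τ))
              + (F t₁ * L ^ (n+1) / n.factorial) * (s - τ) ^ n) := by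
        apply integral_mono_on ht.1
        · apply ContinuousOn.intervalIntegrable
          rw [uIcc_of_le ht.1]
          exact hcontG.mono (Icc_subset_Icc le_rfl ht.2)
        · exact hcR.intervalIntegrable _ _
        · intro s hs
          have hs' : s ∈ Icc τ t₁ := ⟨hs.1, le_trans hs.2 ht.2⟩
          have hih := ih s hs'
          have hexpand : L * (M / L * (Real.exp (L * (s - τ)) - 1) + F t₁ * (L ^ n * (s - τ) ^ n / n.factorial)) + M
              = M * Real.exp (L * (s - τ)) + (F t₁ * L ^ (n+1) / n.factorial) * (s - τ) ^ n := by
            field_simp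
            ring
          nlinarith [hih]
      have step3 : ∫ s in τ..t, (M * Real.exp (L * (s - τ))
              + (F t₁ * L ^ (n+1) / n.factorial) * (s - τ) ^ n)
          = M / L * (Real.exp (L * (t - τ)) - 1) + F t₁ * (L ^ (n+1) * (t - τ) ^ (n+1) / (n+1).factorial) := by
        rw [intervalIntegral.integral_add ((hc1.intervalIntegrable _ _).const_mul M)
            ((hc2.intervalIntegrable _ _).const_mul _),
          intervalIntegral.integral_const_mul, intervalIntegral.integral_const_mul,
          exp_int L τ t hL.ne', pow_int τ t n, Nat.factorial_succ]
        push_cast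
        have hnf : (n.factorial : ℝ) ≠ 0 := Nat.cast_ne_zero.mpr n.factorial_ne_zero
        field_simp
      calc F t ≤ ∫ s in τ..t, (L * F s + M) := step1
        _ ≤ _ := step2
        _ = _ := step3
  have hlim : Filter.Tendsto (fun n : ℕ => F t₁ * (L ^ n * (t₁ - τ) ^ n / n.factorial))
      Filter.atTop (nhds 0) := by
    have h1 : ∀ n : ℕ, F t₁ * (L ^ n * (t₁ - τ) ^ n / n.factorial)
        = F t₁ * ((L * (t₁ - τ)) ^ n / n.factorial) := by
      intro n; rw [mul_pow]
    simp_rw [h1]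
    have := FloorSemiring.tendsto_pow_div_factorial_atTop (L * (t₁ - τ))
    simpa using this.const_mul (F t₁)
  have hFle : F t₁ ≤ M / L * (Real.exp (L * (t₁ - τ)) - 1) := by
    have : ∀ n : ℕ, F t₁ ≤ M / L * (Real.exp (L * (t₁ - τ)) - 1)
        + F t₁ * (L ^ n * (t₁ - τ) ^ n / n.factorial) := fun n => key n t₁ ⟨hτ, le_rfl⟩
    have hten : Filter.Tendsto (fun n : ℕ => M / L * (Real.exp (L * (t₁ - τ)) - 1)
        + F t₁ * (L ^ n * (t₁ - τ) ^ n / n.factorial)) Filter.atTop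
        (nhds (M / L * (Real.exp (L * (t₁ - τ)) - 1))) := by
      simpa using (tendsto_const_nhds.add hlim)
    exact ge_of_tendsto hten (Filter.Eventually.of_forall this)
  have := hbound t₁ ⟨hτ, le_rfl⟩
  have hexp : Real.exp (L * (t₁ - τ)) ≥ 1 := by
    rw [← Real.exp_zero]; apply Real.exp_le_exp.mpr; nlinarith
  calc f t₁ ≤ L * F t₁ + M := this
    _ ≤ L * (M / L * (Real.exp (L * (t₁ - τ)) - 1)) + M := by nlinarith
    _ = M * Real.exp (L * (t₁ - τ)) := by field_simp; ring

section Core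
open MeasureTheory intervalIntegral Set

lemma core (f : ℝ → ℝ) (α c₁ c₂ c₃ : ℝ) (hα0 : 0 ≤ α) (hα : α ≤ 1 / 2)
    (hc₁ : 0 ≤ c₁) (hc₂ : 0 ≤ c₂) (hc₃ : 0 ≤ c₃)
    (hfmeas : Measurable f) (hfnn : ∀ t, 0 ≤ t → 0 ≤ f t)
    (hfint : ∀ t, 0 ≤ t → IntervalIntegrable f volume 0 t)
    (hint : ∀ t, 0 ≤ t → IntervalIntegrable (fun s => (t - s) ^ (-α) * f s) volume 0 t)
    (hineq : ∀ t, 0 ≤ t → f t ≤ c₁ * (∫ s in (0:ℝ)..t, f s)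
      + c₂ * (∫ s in (0:ℝ)..t, (t - s) ^ (-α) * f s)
      + c₃ * ∫ s in (0:ℝ)..t, f s * logPlus (1 / f s))
    (τ δ ε : ℝ) (hτ : 0 ≤ τ) (hδpos : 0 < δ) (hδ1 : δ ≤ 1) (hε : 0 < ε) (hε1 : ε ≤ 1)
    (hzero : ∀ s, 0 ≤ s → s ≤ τ → f s = 0)
    {t : ℝ} (hτt : τ < t) (htδ : t ≤ τ + δ) :
    f t ≤ ((1 + 2 * c₂) * (c₁ + c₃ * Real.log (1 / ε)) + 4 * c₂ ^ 2 + 1) * (∫ s in τ..t, f s)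
      + (1 + 2 * c₂) * (c₃ * ε * δ) := by
  have hlogε : 0 ≤ Real.log (1 / ε) := Real.log_nonneg (by rw [le_div_iff₀ hε]; linarith)
  set a := c₁ + c₃ * Real.log (1 / ε) with ha_def
  have ha : 0 ≤ a := by positivity
  have ht0 : (0:ℝ) ≤ t := le_trans hτ hτt.le
  -- basic integrability on subintervals of [τ, t]
  have hfi : ∀ u v, τ ≤ u → u ≤ v → v ≤ t → IntervalIntegrable f volume u v := by
    intro u v hu huv hv
    exact (hfint t ht0).mono_set
      (by rw [uIcc_of_le huv, uIcc_of_le ht0]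
          exact Icc_subset_Icc (le_trans hτ hu) hv)
  set Fr := ∫ s in τ..t, f s with hFr_def
  have hfnn' : ∀ r ∈ Ioc τ t, 0 ≤ f r := fun r hr => hfnn r (le_trans hτ hr.1.le)
  have hFrnn : 0 ≤ Fr := by
    apply integral_nonneg hτt.le
    intro u hu; exact hfnn u (le_trans hτ hu.1)
  -- bound1
  have bound1 : ∀ s, τ < s → s ≤ t →
      f s ≤ a * Fr + c₃ * ε * δ + c₂ * ∫ r in τ..s, (s - r) ^ (-α) * f r := by
    intro s hs1 hs2
    have hs0 : (0:ℝ) ≤ s := le_trans hτ hs1.le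
    have hF0 : ∫ r in (0:ℝ)..s, f r = ∫ r in τ..s, f r :=
      shift_integral hτ hs1.le (hfint s hs0) hzero
    have hG0 : ∫ r in (0:ℝ)..s, (s - r) ^ (-α) * f r = ∫ r in τ..s, (s - r) ^ (-α) * f r :=
      shift_integral hτ hs1.le (hint s hs0)
        (fun r h0 hτr => by rw [hzero r h0 hτr, mul_zero])
    have hH0 : ∫ r in (0:ℝ)..s, f r * logPlus (1 / f r)
        = ∫ r in τ..s, f r * logPlus (1 / f r) :=
      shift_integral hτ hs1.le (logPlus_int hfmeas hs0 hfnn)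
        (fun r h0 hτr => by rw [hzero r h0 hτr, zero_mul])
    have h1 := hineq s hs0
    rw [hF0, hG0, hH0] at h1
    have hHb : ∫ r in τ..s, f r * logPlus (1 / f r)
        ≤ Real.log (1 / ε) * (∫ r in τ..s, f r) + ε * (s - τ) := by
      have hmono : ∫ r in τ..s, f r * logPlus (1 / f r)
          ≤ ∫ r in τ..s, (f r * Real.log (1 / ε) + ε) := by
        apply integral_mono_on hs1.le
        · exact (logPlus_int hfmeas hs0 hfnn).mono_set
            (by rw [uIcc_of_le hs1.le, uIcc_of_le hs0]; exact Icc_subset_Icc hτ le_rfl)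
        · exact ((hfi τ s le_rfl hs1.le hs2).mul_const _).add (intervalIntegrable_const)
        · intro r hr
          exact l1 (f r) ε (hfnn r (le_trans hτ hr.1)) hε hε1
      rw [intervalIntegral.integral_add ((hfi τ s le_rfl hs1.le hs2).mul_const _)
          intervalIntegrable_const, intervalIntegral.integral_mul_const,
          intervalIntegral.integral_const] at hmono
      rw [smul_eq_mul] at hmono
      nlinarith [hmono]
    have hFmono : ∫ r in τ..s, f r ≤ Fr := by
      have hsplit : Fr = (∫ r in τ..s, f r) + ∫ r in s..t, f r :=
        (integral_add_adjacent_intervals (hfi τ s le_rfl hs1.le hs2)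
          (hfi s t hs1.le hs2 le_rfl)).symm
      have hpos : 0 ≤ ∫ r in s..t, f r := by
        apply integral_nonneg hs2
        intro u hu; exact hfnn u (le_trans hs0 hu.1)
      linarith [hsplit, hpos]
    have hFsnn : 0 ≤ ∫ r in τ..s, f r := by
      apply integral_nonneg hs1.le
      intro u hu; exact hfnn u (le_trans hτ hu.1)
    have hsτδ : s - τ ≤ δ := by linarith
    have e1 : c₃ * (∫ r in τ..s, f r * logPlus (1 / f r))
        ≤ c₃ * (Real.log (1 / ε) * (∫ r in τ..s, f r) + ε * (s - τ)) :=
      mul_le_mul_of_nonneg_left hHb hc₃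
    have e2 : c₃ * (Real.log (1 / ε) * (∫ r in τ..s, f r) + ε * (s - τ))
        = c₃ * Real.log (1 / ε) * (∫ r in τ..s, f r) + c₃ * ε * (s - τ) := by ring
    have e3 : c₃ * Real.log (1 / ε) * (∫ r in τ..s, f r) ≤ c₃ * Real.log (1 / ε) * Fr :=
      mul_le_mul_of_nonneg_left hFmono (mul_nonneg hc₃ hlogε)
    have e4 : c₃ * ε * (s - τ) ≤ c₃ * ε * δ :=
      mul_le_mul_of_nonneg_left hsτδ (mul_nonneg hc₃ hε.le)
    have e5 : c₁ * (∫ r in τ..s, f r) ≤ c₁ * Fr := mul_le_mul_of_nonneg_left hFmono hc₁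
    have e6 : a * Fr = c₁ * Fr + c₃ * Real.log (1 / ε) * Fr := by rw [ha_def]; ring
    calc f s ≤ c₁ * (∫ r in τ..s, f r) + c₂ * (∫ r in τ..s, (s - r) ^ (-α) * f r)
          + c₃ * (∫ r in τ..s, f r * logPlus (1 / f r)) := by linarith [h1]
      _ ≤ c₁ * Fr + c₂ * (∫ r in τ..s, (s - r) ^ (-α) * f r)
          + (c₃ * Real.log (1 / ε) * Fr + c₃ * ε * δ) := by linarith [e1, e2, e3, e4, e5]
      _ = a * Fr + c₃ * ε * δ + c₂ * (∫ r in τ..s, (s - r) ^ (-α) * f r) := by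
          rw [ha_def]; ring
  -- conversions to lintegral
  have hkint : ∀ s, τ < s → s ≤ t →
      IntervalIntegrable (fun r => (s - r) ^ (-α) * f r) volume τ s := by
    intro s hs1 hs2
    exact (hint s (le_trans hτ hs1.le)).mono_set
      (by rw [uIcc_of_le hs1.le, uIcc_of_le (le_trans hτ hs1.le)]
          exact Icc_subset_Icc hτ le_rfl)
  have hGconv : ∀ s, τ < s → s ≤ t →
      ENNReal.ofReal (∫ r in τ..s, (s - r) ^ (-α) * f r)
        = ∫⁻ r in Ioc τ s, ENNReal.ofReal ((s - r) ^ (-α)) * ENNReal.ofReal (f r) := by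
    intro s hs1 hs2
    rw [conv hs1.le (hkint s hs1 hs2)
        (fun r hr => mul_nonneg (Real.rpow_nonneg (by linarith [hr.2]) _)
          (hfnn r (le_trans hτ hr.1.le)))]
    apply setLIntegral_congr_fun_ae measurableSet_Ioc
    apply ae_of_all
    intro r hr
    rw [ENNReal.ofReal_mul (Real.rpow_nonneg (by linarith [hr.2]) _)]
  have hFconv : ENNReal.ofReal Fr = ∫⁻ r in Ioc τ t, ENNReal.ofReal (f r) :=
    conv hτt.le (hfi τ t le_rfl hτt.le le_rfl) hfnn'
  set P := a * Fr + c₃ * ε * δ with hP_def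
  have hPnn : 0 ≤ P := by positivity
  -- G bound
  have hGt : ∫ r in τ..t, (t - r) ^ (-α) * f r ≤ 2 * P + 4 * c₂ * Fr := by
    have hchain : ENNReal.ofReal (∫ r in τ..t, (t - r) ^ (-α) * f r)
        ≤ ENNReal.ofReal (2 * P + 4 * c₂ * Fr) := by
      rw [hGconv t hτt le_rfl]
      have hmono : ∫⁻ s in Ioc τ t, ENNReal.ofReal ((t - s) ^ (-α)) * ENNReal.ofReal (f s)
          ≤ ∫⁻ s in Ioc τ t, (ENNReal.ofReal ((t - s) ^ (-α)) * ENNReal.ofReal P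
            + ENNReal.ofReal c₂ * (ENNReal.ofReal ((t - s) ^ (-α)) *
              (∫⁻ r in Ioc τ s, ENNReal.ofReal ((s - r) ^ (-α)) * ENNReal.ofReal (f r)))) := by
        apply lintegral_mono_ae
        filter_upwards [ae_restrict_mem measurableSet_Ioc] with s hs
        have hfs : ENNReal.ofReal (f s) ≤ ENNReal.ofReal P
            + ENNReal.ofReal c₂ * (∫⁻ r in Ioc τ s, ENNReal.ofReal ((s - r) ^ (-α))
                * ENNReal.ofReal (f r)) := by
          rw [← hGconv s hs.1 hs.2, ← ENNReal.ofReal_mul hc₂]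
          calc ENNReal.ofReal (f s)
              ≤ ENNReal.ofReal (P + c₂ * ∫ r in τ..s, (s - r) ^ (-α) * f r) :=
                ENNReal.ofReal_le_ofReal (by rw [hP_def]; exact bound1 s hs.1 hs.2)
            _ ≤ _ := ENNReal.ofReal_add_le
        calc ENNReal.ofReal ((t - s) ^ (-α)) * ENNReal.ofReal (f s)
            ≤ ENNReal.ofReal ((t - s) ^ (-α)) * (ENNReal.ofReal P
              + ENNReal.ofReal c₂ * (∫⁻ r in Ioc τ s, ENNReal.ofReal ((s - r) ^ (-α))
                * ENNReal.ofReal (f r))) := mul_le_mul_right hfs _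
          _ = _ := by ring
      have hsplit : ∫⁻ s in Ioc τ t, (ENNReal.ofReal ((t - s) ^ (-α)) * ENNReal.ofReal P
            + ENNReal.ofReal c₂ * (ENNReal.ofReal ((t - s) ^ (-α)) *
              (∫⁻ r in Ioc τ s, ENNReal.ofReal ((s - r) ^ (-α)) * ENNReal.ofReal (f r))))
          = (∫⁻ s in Ioc τ t, ENNReal.ofReal ((t - s) ^ (-α)) * ENNReal.ofReal P)
            + ∫⁻ s in Ioc τ t, ENNReal.ofReal c₂ * (ENNReal.ofReal ((t - s) ^ (-α)) *
              (∫⁻ r in Ioc τ s, ENNReal.ofReal ((s - r) ^ (-α)) * ENNReal.ofReal (f r))) := by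
        apply lintegral_add_left
        exact (ENNReal.measurable_ofReal.comp
          ((measurable_const.sub measurable_id).pow measurable_const)).mul_const _
      have hterm1 : (∫⁻ s in Ioc τ t, ENNReal.ofReal ((t - s) ^ (-α)) * ENNReal.ofReal P)
          ≤ ENNReal.ofReal 2 * ENNReal.ofReal P := by
        rw [lintegral_mul_const' _ _ ENNReal.ofReal_ne_top, klint_left hα0 hα hτt.le]
        apply mul_le_mul_left
        apply ENNReal.ofReal_le_ofReal
        exact kval_le hα0 hα hτt.le (by linarith)
      have hterm2 : ∫⁻ s in Ioc τ t, ENNReal.ofReal c₂ * (ENNReal.ofReal ((t - s) ^ (-α)) *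
            (∫⁻ r in Ioc τ s, ENNReal.ofReal ((s - r) ^ (-α)) * ENNReal.ofReal (f r)))
          ≤ ENNReal.ofReal c₂ * (ENNReal.ofReal 4 * ENNReal.ofReal Fr) := by
        rw [lintegral_const_mul' _ _ ENNReal.ofReal_ne_top]
        apply mul_le_mul_right
        rw [hFconv]
        exact tonelli_bound hα0 hα f hfmeas hτt.le (by linarith)
      calc ∫⁻ s in Ioc τ t, ENNReal.ofReal ((t - s) ^ (-α)) * ENNReal.ofReal (f s)
          ≤ _ := hmono
        _ = _ := hsplit
        _ ≤ ENNReal.ofReal 2 * ENNReal.ofReal P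
            + ENNReal.ofReal c₂ * (ENNReal.ofReal 4 * ENNReal.ofReal Fr) :=
            add_le_add hterm1 hterm2
        _ = ENNReal.ofReal (2 * P + 4 * c₂ * Fr) := by
            rw [← ENNReal.ofReal_mul (by norm_num : (0:ℝ) ≤ 4),
              ← ENNReal.ofReal_mul hc₂,
              ← ENNReal.ofReal_mul (by norm_num : (0:ℝ) ≤ 2),
              ← ENNReal.ofReal_add (by positivity) (by positivity)]
            ring_nf
    rw [ENNReal.ofReal_le_ofReal_iff (by positivity)] at hchain
    exact hchain
  -- final
  have hfinal := bound1 t hτt le_rfl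
  have hG0t : ∫ r in τ..t, (t - r) ^ (-α) * f r = ∫ s in τ..t, (t - s) ^ (-α) * f s := rfl
  have e7 : c₂ * (∫ r in τ..t, (t - r) ^ (-α) * f r) ≤ c₂ * (2 * P + 4 * c₂ * Fr) :=
    mul_le_mul_of_nonneg_left hGt hc₂
  have e8 : c₂ * (2 * P + 4 * c₂ * Fr) = 2 * c₂ * (a * Fr + c₃ * ε * δ) + 4 * c₂ ^ 2 * Fr := by
    rw [hP_def]; ring
  have e9 : ((1 + 2 * c₂) * a + 4 * c₂ ^ 2 + 1) * Fr
      = a * Fr + 2 * c₂ * (a * Fr) + 4 * c₂ ^ 2 * Fr + Fr := by ring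
  have e10 : 2 * c₂ * (a * Fr + c₃ * ε * δ) = 2 * c₂ * (a * Fr) + 2 * c₂ * (c₃ * ε * δ) := by ring
  have e11 : (1 + 2 * c₂) * (c₃ * ε * δ) = c₃ * ε * δ + 2 * c₂ * (c₃ * ε * δ) := by ring
  linarith [hfinal, e7, e8, e9, e10, e11, hFrnn]

end Core
section Main
open MeasureTheory intervalIntegral Set


theorem stmt_2
    (f : ℝ → ℝ) (α c₁ c₂ c₃ : ℝ) (hα0 : 0 ≤ α) (hα : α ≤ 1 / 2)
    (hc₁ : 0 ≤ c₁) (hc₂ : 0 ≤ c₂) (hc₃ : 0 ≤ c₃)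
    (hfmeas : Measurable f) (hfnn : ∀ t, 0 ≤ t → 0 ≤ f t)
    (hfint : ∀ t, 0 ≤ t → IntervalIntegrable f volume 0 t)
    (hint : ∀ t, 0 ≤ t → IntervalIntegrable (fun s => (t - s) ^ (-α) * f s) volume 0 t)
    (hineq : ∀ t, 0 ≤ t → f t ≤ c₁ * (∫ s in (0:ℝ)..t, f s)
      + c₂ * (∫ s in (0:ℝ)..t, (t - s) ^ (-α) * f s)
      + c₃ * ∫ s in (0:ℝ)..t, f s * logPlus (1 / f s)) :
    ∀ t, 0 ≤ t → f t = 0 := by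
  obtain ⟨δ, hδdef⟩ : ∃ δ : ℝ, δ = min 1 (1 / (2 * (1 + 2 * c₂) * c₃ + 1)) := ⟨_, rfl⟩
  have hx0 : (0:ℝ) < 2 * (1 + 2 * c₂) * c₃ + 1 := by positivity
  have hδpos : 0 < δ := by rw [hδdef]; exact lt_min one_pos (by positivity)
  have hδ1 : δ ≤ 1 := by rw [hδdef]; exact min_le_left _ _
  have hθ : (1 + 2 * c₂) * c₃ * δ ≤ 1 / 2 := by
    have h2 : δ ≤ 1 / (2 * (1 + 2 * c₂) * c₃ + 1) := by rw [hδdef]; exact min_le_right _ _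
    have hxnn : 0 ≤ (1 + 2 * c₂) * c₃ := by positivity
    have h3 : (1 + 2 * c₂) * c₃ * δ ≤ (1 + 2 * c₂) * c₃ * (1 / (2 * (1 + 2 * c₂) * c₃ + 1)) :=
      mul_le_mul_of_nonneg_left h2 hxnn
    have h4 : (1 + 2 * c₂) * c₃ * (1 / (2 * (1 + 2 * c₂) * c₃ + 1)) ≤ 1 / 2 := by
      rw [mul_one_div, div_le_iff₀ hx0]
      nlinarith
    linarith
  have key : ∀ τ, 0 ≤ τ → (∀ s, 0 ≤ s → s ≤ τ → f s = 0) →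
      ∀ t₁, τ < t₁ → t₁ ≤ τ + δ → f t₁ = 0 := by
    intro τ hτ hzero t₁ ht₁ ht₁δ
    have ht₁0 : (0:ℝ) ≤ t₁ := le_trans hτ ht₁.le
    have hfs : ∀ ε : ℝ, 0 < ε → ε ≤ 1 → f t₁ ≤ ((1 + 2 * c₂) * (c₃ * ε * δ)) *
        Real.exp (((1 + 2 * c₂) * (c₁ + c₃ * Real.log (1 / ε)) + 4 * c₂ ^ 2 + 1) * δ) := by
      intro ε hε hε1
      have hlog : 0 ≤ Real.log (1 / ε) := Real.log_nonneg (by rw [le_div_iff₀ hε]; linarith)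
      obtain ⟨L, hL_def⟩ : ∃ L : ℝ,
        L = (1 + 2 * c₂) * (c₁ + c₃ * Real.log (1 / ε)) + 4 * c₂ ^ 2 + 1 := ⟨_, rfl⟩
      obtain ⟨M, hM_def⟩ : ∃ M : ℝ, M = (1 + 2 * c₂) * (c₃ * ε * δ) := ⟨_, rfl⟩
      have hL : 0 < L := by rw [hL_def]; positivity
      have hM : 0 ≤ M := by rw [hM_def]; positivity
      have hfi : IntervalIntegrable f volume τ t₁ := (hfint t₁ ht₁0).mono_set
        (by rw [uIcc_of_le ht₁.le, uIcc_of_le ht₁0]; exact Icc_subset_Icc hτ le_rfl)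
      have hg : f t₁ ≤ M * Real.exp (L * (t₁ - τ)) := by
        apply gronwall ht₁.le hL hM hfi
        · intro u hu; exact hfnn u (le_trans hτ hu.1)
        · intro u hu
          rcases eq_or_lt_of_le hu.1 with heq | hlt
          · rw [← heq, hzero τ hτ le_rfl, intervalIntegral.integral_same, mul_zero, zero_add]
            exact hM
          · have := core f α c₁ c₂ c₃ hα0 hα hc₁ hc₂ hc₃ hfmeas hfnn hfint hint hineq
              τ δ ε hτ hδpos hδ1 hε hε1 hzero hlt (le_trans hu.2 ht₁δ)
            rw [hL_def, hM_def]
            exact this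
      have hexp : Real.exp (L * (t₁ - τ)) ≤ Real.exp (L * δ) := by
        apply Real.exp_le_exp.mpr
        apply mul_le_mul_of_nonneg_left (by linarith) hL.le
      calc f t₁ ≤ M * Real.exp (L * (t₁ - τ)) := hg
        _ ≤ M * Real.exp (L * δ) := mul_le_mul_of_nonneg_left hexp hM
        _ = _ := by rw [hM_def, hL_def]
    obtain ⟨C0, hC0_def⟩ : ∃ C0 : ℝ, C0 = (1 + 2 * c₂) * (c₃ * δ) *
        Real.exp (((1 + 2 * c₂) * c₁ + 4 * c₂ ^ 2 + 1) * δ) := ⟨_, rfl⟩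
    have hC0 : 0 ≤ C0 := by rw [hC0_def]; positivity
    have claim : ∀ y : ℝ, 0 < y → y ≤ 1 → f t₁ ≤ C0 * y := by
      intro y hy hy1
      have h2 := hfs (y ^ 2) (by positivity) (by nlinarith)
      have hlogy : Real.log (1 / y ^ 2) = 2 * (- Real.log y) := by
        rw [one_div, Real.log_inv, Real.log_pow]
        push_cast; ring
      have hnly : 0 ≤ - Real.log y := by
        rw [neg_nonneg]
        exact Real.log_nonpos hy.le hy1
      have hsplit : ((1 + 2 * c₂) * (c₁ + c₃ * Real.log (1 / y ^ 2)) + 4 * c₂ ^ 2 + 1) * δ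
          = ((1 + 2 * c₂) * c₁ + 4 * c₂ ^ 2 + 1) * δ
            + (1 + 2 * c₂) * c₃ * δ * (2 * (- Real.log y)) := by
        rw [hlogy]; ring
      rw [hsplit, Real.exp_add] at h2
      have hexp2 : Real.exp ((1 + 2 * c₂) * c₃ * δ * (2 * (- Real.log y)))
          ≤ Real.exp (- Real.log y) := by
        apply Real.exp_le_exp.mpr
        nlinarith [hθ, hnly]
      have hexplog : Real.exp (- Real.log y) = y⁻¹ := by
        rw [Real.exp_neg, Real.exp_log hy]
      rw [hexplog] at hexp2
      have hCy : ((1 + 2 * c₂) * (c₃ * y ^ 2 * δ)) *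
          (Real.exp (((1 + 2 * c₂) * c₁ + 4 * c₂ ^ 2 + 1) * δ)
            * Real.exp ((1 + 2 * c₂) * c₃ * δ * (2 * (- Real.log y))))
          ≤ C0 * y := by
        rw [hC0_def]
        have hb : 0 ≤ ((1 + 2 * c₂) * (c₃ * y ^ 2 * δ)) *
            Real.exp (((1 + 2 * c₂) * c₁ + 4 * c₂ ^ 2 + 1) * δ) := by positivity
        calc ((1 + 2 * c₂) * (c₃ * y ^ 2 * δ)) *
            (Real.exp (((1 + 2 * c₂) * c₁ + 4 * c₂ ^ 2 + 1) * δ)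
              * Real.exp ((1 + 2 * c₂) * c₃ * δ * (2 * (- Real.log y))))
            = (((1 + 2 * c₂) * (c₃ * y ^ 2 * δ)) *
              Real.exp (((1 + 2 * c₂) * c₁ + 4 * c₂ ^ 2 + 1) * δ))
              * Real.exp ((1 + 2 * c₂) * c₃ * δ * (2 * (- Real.log y))) := by ring
          _ ≤ (((1 + 2 * c₂) * (c₃ * y ^ 2 * δ)) *
              Real.exp (((1 + 2 * c₂) * c₁ + 4 * c₂ ^ 2 + 1) * δ)) * y⁻¹ :=
              mul_le_mul_of_nonneg_left hexp2 hb
          _ = ((1 + 2 * c₂) * (c₃ * δ) *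
              Real.exp (((1 + 2 * c₂) * c₁ + 4 * c₂ ^ 2 + 1) * δ)) * (y ^ 2 * y⁻¹) := by ring
          _ = _ := by
              have hyy : y ^ 2 * y⁻¹ = y := by
                rw [pow_two, mul_assoc, mul_inv_cancel₀ hy.ne', mul_one]
              rw [hyy]
      linarith [h2, hCy]
    have hle0 : f t₁ ≤ 0 := by
      by_contra hpos
      push_neg at hpos
      obtain ⟨y, hy_def⟩ : ∃ y : ℝ, y = min 1 (f t₁ / (C0 + 1)) := ⟨_, rfl⟩
      have hy : 0 < y := by rw [hy_def]; exact lt_min one_pos (by positivity)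
      have hy1 : y ≤ 1 := by rw [hy_def]; exact min_le_left _ _
      have h3 := claim y hy hy1
      have h4 : y ≤ f t₁ / (C0 + 1) := by rw [hy_def]; exact min_le_right _ _
      have h5 : C0 * y ≤ C0 * (f t₁ / (C0 + 1)) := mul_le_mul_of_nonneg_left h4 hC0
      have h6 : C0 * (f t₁ / (C0 + 1)) < f t₁ := by
        rw [mul_div_assoc']
        rw [div_lt_iff₀ (by linarith)]
        nlinarith
      linarith
    exact le_antisymm hle0 (hfnn t₁ ht₁0)
  have main : ∀ n : ℕ, ∀ t, 0 ≤ t → t ≤ n * δ → f t = 0 := by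
    intro n
    induction n with
    | zero =>
      intro t ht ht'
      have ht0 : t = 0 := le_antisymm (by simpa using ht') ht
      subst ht0
      have h := hineq 0 le_rfl
      simp only [intervalIntegral.integral_same, mul_zero, add_zero, zero_add] at h
      exact le_antisymm (by linarith) (hfnn 0 le_rfl)
    | succ n ih =>
      intro t ht ht'
      rcases le_or_gt t (n * δ) with h | h
      · exact ih t ht h
      · refine key (n * δ) (by positivity) (fun s hs hs' => ih s hs hs') t h ?_
        push_cast at ht'
        linarith
  intro t ht
  have hn := Nat.le_ceil (t / δ)
  refine main ⌈t / δ⌉₊ t ht ?_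
  rw [div_le_iff₀ hδpos] at hn
  exact hn

end Main

end Aux
end

section
/- There exists a constant C > 0 such that for every h > 0 and every x ∈ [0,1], ∫₀^∞ ∫₀¹ ( p_{r+h}(x,z) − p_r(x,z) )² dz dr ≤ C·h^{1/2}. -/
open MeasureTheory

/-- The Dirichlet heat kernel on `[0,1]`:
`p_t(x,y) = ∑_{n=1}^∞ exp(-n²π²t/2) eₙ(x) eₙ(y)` with `eₙ(x) = √2 sin(nπx)`. -/
noncomputable def heatKernel (t x y : ℝ) : ℝ :=
  ∑' n : ℕ, Real.exp (-(((n : ℝ) + 1) ^ 2 * Real.pi ^ 2 * t) / 2) *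
    (Real.sqrt 2 * Real.sin (((n : ℝ) + 1) * Real.pi * x)) *
    (Real.sqrt 2 * Real.sin (((n : ℝ) + 1) * Real.pi * y))

namespace HeatAux
open Real Set


noncomputable def eig (n : ℕ) (z : ℝ) : ℝ := Real.sqrt 2 * Real.sin (((n:ℝ)+1) * Real.pi * z)

lemma eig_continuous (n : ℕ) : Continuous (eig n) := by
  unfold eig; continuity

lemma integral_cos_int_mul_pi (k : ℤ) :
    ∫ z in (0:ℝ)..1, Real.cos ((k:ℝ) * Real.pi * z) = if k = 0 then 1 else 0 := by
  rcases eq_or_ne k 0 with hk | hk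
  · simp [hk]
  · have hk' : ((k:ℝ)) ≠ 0 := Int.cast_ne_zero.mpr hk
    have hc : ((k:ℝ) * Real.pi) ≠ 0 := mul_ne_zero hk' Real.pi_ne_zero
    have h1 : ((k:ℝ) * Real.pi) * ∫ z in (0:ℝ)..1, Real.cos ((k:ℝ) * Real.pi * z)
        = ∫ x in ((k:ℝ)*Real.pi*0)..((k:ℝ)*Real.pi*1), Real.cos x :=
      intervalIntegral.mul_integral_comp_mul_left _
    rw [integral_cos, mul_zero, mul_one, Real.sin_zero, Real.sin_int_mul_pi, sub_zero] at h1
    simp only [hk, if_false]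
    exact (mul_eq_zero.mp h1).resolve_left hc

lemma eig_mul_eig (n m : ℕ) (z : ℝ) :
    eig n z * eig m z =
      Real.cos ((((n:ℤ) - m : ℤ):ℝ) * Real.pi * z) -
      Real.cos ((((n:ℤ) + m + 2 : ℤ):ℝ) * Real.pi * z) := by
  have key : ∀ a b : ℝ, Real.cos (a-b) - Real.cos (a+b) = 2 * (Real.sin a * Real.sin b) := by
    intro a b
    rw [Real.cos_sub_cos]
    have h1 : (a - b + (a+b))/2 = a := by ring
    have h2 : (a - b - (a+b))/2 = -b := by ring
    rw [h1, h2, Real.sin_neg]; ring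
  have e1 : ((((n:ℤ) - m : ℤ):ℝ) * Real.pi * z)
      = ((n:ℝ)+1) * Real.pi * z - ((m:ℝ)+1) * Real.pi * z := by push_cast; ring
  have e2 : ((((n:ℤ) + m + 2 : ℤ):ℝ) * Real.pi * z)
      = ((n:ℝ)+1) * Real.pi * z + ((m:ℝ)+1) * Real.pi * z := by push_cast; ring
  rw [e1, e2, key]
  unfold eig
  have : Real.sqrt 2 * Real.sqrt 2 = 2 := Real.mul_self_sqrt (by norm_num)
  linear_combination (Real.sin (((n:ℝ)+1) * Real.pi * z) * Real.sin (((m:ℝ)+1) * Real.pi * z)) * this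

lemma eig_orth (n m : ℕ) :
    ∫ z in (0:ℝ)..1, eig n z * eig m z = if n = m then 1 else 0 := by
  have hi : ∀ k : ℤ, IntervalIntegrable (fun z => Real.cos ((k:ℝ) * Real.pi * z)) volume 0 1 :=
    fun k => (Real.continuous_cos.comp (by continuity)).intervalIntegrable 0 1
  calc ∫ z in (0:ℝ)..1, eig n z * eig m z
      = ∫ z in (0:ℝ)..1, (Real.cos ((((n:ℤ) - m : ℤ):ℝ) * Real.pi * z)
          - Real.cos ((((n:ℤ) + m + 2 : ℤ):ℝ) * Real.pi * z)) := by
        apply intervalIntegral.integral_congr; intro z _; exact eig_mul_eig n m z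
    _ = (if ((n:ℤ) - m) = 0 then (1:ℝ) else 0) - (if ((n:ℤ) + m + 2) = 0 then (1:ℝ) else 0) := by
        rw [intervalIntegral.integral_sub (hi _) (hi _),
          integral_cos_int_mul_pi, integral_cos_int_mul_pi]
    _ = if n = m then 1 else 0 := by
        have h2 : ¬ ((n:ℤ) + m + 2 = 0) := by positivity
        simp only [h2, if_false, sub_zero, sub_eq_zero]
        norm_cast



noncomputable def lam (n : ℕ) : ℝ := ((n:ℝ)+1)^2 * Real.pi^2 / 2

lemma lam_pos (n : ℕ) : 0 < lam n := by
  unfold lam; positivity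

lemma eig_abs_le (n : ℕ) (z : ℝ) : |eig n z| ≤ Real.sqrt 2 := by
  unfold eig
  rw [abs_mul, abs_of_nonneg (Real.sqrt_nonneg 2)]
  calc Real.sqrt 2 * |Real.sin _| ≤ Real.sqrt 2 * 1 :=
        mul_le_mul_of_nonneg_left (Real.abs_sin_le_one _) (Real.sqrt_nonneg 2)
    _ = Real.sqrt 2 := mul_one _

lemma summable_exp_lam {t : ℝ} (ht : 0 < t) : Summable (fun n => Real.exp (-(lam n * t))) := by
  have hr : Real.exp (-(Real.pi^2 * t / 2)) < 1 := by
    rw [Real.exp_lt_one_iff]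
    have : 0 < Real.pi^2 * t / 2 := by positivity
    linarith
  have hr0 : 0 ≤ Real.exp (-(Real.pi^2 * t / 2)) := Real.exp_nonneg _
  refine Summable.of_nonneg_of_le (fun n => Real.exp_nonneg _)
    (fun n => ?_) ((summable_geometric_of_lt_one hr0 hr).mul_left
      (Real.exp (-(Real.pi^2 * t / 2))))
  rw [← Real.exp_nat_mul, ← Real.exp_add, Real.exp_le_exp]
  unfold lam
  have h1 : ((n:ℝ)+1) ≤ ((n:ℝ)+1)^2 := by nlinarith [Nat.cast_nonneg (α := ℝ) n]
  have h2 : 0 < Real.pi^2 * t / 2 := by positivity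
  calc -(((n:ℝ)+1)^2 * Real.pi^2 / 2 * t) ≤ -(((n:ℝ)+1) * (Real.pi^2 * t / 2)) := by nlinarith
    _ = -(Real.pi^2 * t / 2) + (n:ℝ) * -(Real.pi^2 * t / 2) := by ring

lemma summable_coeff {t : ℝ} (ht : 0 < t) (a : ℕ → ℝ) (ha : ∀ n, |a n| ≤ 2) :
    Summable (fun n => Real.exp (-(lam n * t)) * a n) := by
  apply Summable.of_norm
  apply Summable.of_nonneg_of_le (fun n => norm_nonneg _) (fun n => ?_)
    ((summable_exp_lam ht).mul_right 2)
  rw [Real.norm_eq_abs, abs_mul, abs_of_nonneg (Real.exp_nonneg _)]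
  exact mul_le_mul_of_nonneg_left (ha n) (Real.exp_nonneg _)

lemma heatKernel_eq (t x y : ℝ) :
    heatKernel t x y = ∑' n : ℕ, Real.exp (-(lam n * t)) * eig n x * eig n y := by
  unfold heatKernel lam eig
  apply tsum_congr; intro n
  ring_nf

/-- coefficient of the difference -/
noncomputable def dcoef (h x : ℝ) (n : ℕ) (r : ℝ) : ℝ :=
  (Real.exp (-(lam n * (r + h))) - Real.exp (-(lam n * r))) * eig n x

lemma dcoef_abs_le {h : ℝ} (hh : 0 < h) (x : ℝ) (n : ℕ) {r : ℝ} (hr : 0 < r) :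
    |dcoef h x n r| ≤ Real.sqrt 2 * Real.exp (-(lam n * r)) := by
  unfold dcoef
  rw [abs_mul]
  have h1 : |Real.exp (-(lam n * (r + h))) - Real.exp (-(lam n * r))| ≤ Real.exp (-(lam n * r)) := by
    rw [abs_sub_comm, abs_of_nonneg (sub_nonneg.mpr (Real.exp_le_exp.mpr (by nlinarith [lam_pos n])))]
    have := Real.exp_nonneg (-(lam n * (r + h)))
    linarith
  calc |Real.exp (-(lam n * (r + h))) - Real.exp (-(lam n * r))| * |eig n x|
      ≤ Real.exp (-(lam n * r)) * Real.sqrt 2 :=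
        mul_le_mul h1 (eig_abs_le n x) (abs_nonneg _) (Real.exp_nonneg _)
    _ = Real.sqrt 2 * Real.exp (-(lam n * r)) := mul_comm _ _

lemma heat_diff_eq {h : ℝ} (hh : 0 < h) (x : ℝ) {r : ℝ} (hr : 0 < r) (z : ℝ) :
    heatKernel (r + h) x z - heatKernel r x z = ∑' n, dcoef h x n r * eig n z := by
  rw [heatKernel_eq, heatKernel_eq]
  have hb : ∀ n, |eig n x * eig n z| ≤ 2 := by
    intro n
    rw [abs_mul]
    calc |eig n x| * |eig n z| ≤ Real.sqrt 2 * Real.sqrt 2 :=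
          mul_le_mul (eig_abs_le n x) (eig_abs_le n z) (abs_nonneg _) (Real.sqrt_nonneg 2)
      _ = 2 := Real.mul_self_sqrt (by norm_num)
  have s1 : Summable (fun n => Real.exp (-(lam n * (r+h))) * (eig n x * eig n z)) :=
    summable_coeff (by linarith) _ hb
  have s2 : Summable (fun n => Real.exp (-(lam n * r)) * (eig n x * eig n z)) :=
    summable_coeff hr _ hb
  have e1 : ∀ (t : ℝ), ∑' n, Real.exp (-(lam n * t)) * eig n x * eig n z
      = ∑' n, Real.exp (-(lam n * t)) * (eig n x * eig n z) := by
    intro t; apply tsum_congr; intro n; ring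
  rw [e1, e1, ← Summable.tsum_sub s1 s2]
  apply tsum_congr; intro n
  unfold dcoef; ring




lemma vol_Ioc01 : volume (Ioc (0:ℝ) 1) = 1 := by
  rw [Real.volume_Ioc]; norm_num

lemma lint_bound {f : ℝ → ℝ} {B : ℝ} (hB : ∀ z, |f z| ≤ B) :
    ∫⁻ z in Ioc (0:ℝ) 1, ‖f z‖₊ ≤ ENNReal.ofReal B := by
  calc ∫⁻ z in Ioc (0:ℝ) 1, ‖f z‖₊
      ≤ ∫⁻ _ in Ioc (0:ℝ) 1, ENNReal.ofReal B := by
        apply lintegral_mono; intro z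
        show (‖f z‖₊ : ENNReal) ≤ ENNReal.ofReal B
        rw [← (by exact ofReal_norm (f z) : ENNReal.ofReal ‖f z‖ = (‖f z‖₊ : ENNReal))]
        exact ENNReal.ofReal_le_ofReal (hB z)
    _ = ENNReal.ofReal B := by rw [lintegral_const, Measure.restrict_apply_univ, vol_Ioc01, mul_one]

lemma tsum_lint_ne_top {f : ℕ → ℝ → ℝ} {B : ℕ → ℝ} (hB0 : ∀ n, 0 ≤ B n)
    (hB : ∀ n z, |f n z| ≤ B n) (hBs : Summable B) :
    ∑' n, ∫⁻ z in Ioc (0:ℝ) 1, ‖f n z‖₊ ≠ ⊤ := by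
  have h1 : ∑' n, ∫⁻ z in Ioc (0:ℝ) 1, ‖f n z‖₊ ≤ ∑' n, ENNReal.ofReal (B n) :=
    ENNReal.tsum_le_tsum (fun n => lint_bound (hB n))
  have h2 : ∑' n, ENNReal.ofReal (B n) = ENNReal.ofReal (∑' n, B n) :=
    (ENNReal.ofReal_tsum_of_nonneg hB0 hBs).symm
  exact ne_top_of_le_ne_top (by rw [h2]; exact ENNReal.ofReal_ne_top) h1

lemma parseval (c : ℕ → ℝ) (hc : Summable fun n => |c n|) :
    ∫ z in (0:ℝ)..1, (∑' n, c n * eig n z)^2 = ∑' n, (c n)^2 := by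
  set S := ∑' n, |c n| with hS
  have hS0 : 0 ≤ S := tsum_nonneg (fun n => abs_nonneg _)
  have habs : ∀ z n, ‖c n * eig n z‖ ≤ |c n| * Real.sqrt 2 := by
    intro z n
    rw [Real.norm_eq_abs, abs_mul]
    exact mul_le_mul_of_nonneg_left (eig_abs_le n z) (abs_nonneg _)
  have hns : ∀ z, Summable (fun n => ‖c n * eig n z‖) := fun z =>
    Summable.of_nonneg_of_le (fun n => norm_nonneg _) (habs z) (hc.mul_right _)
  have hsum : ∀ z, Summable (fun n => c n * eig n z) := fun z => (hns z).of_norm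
  set Δ : ℝ → ℝ := fun z => ∑' n, c n * eig n z with hΔ
  have hΔc : Continuous Δ := by
    apply continuous_tsum (fun n => (continuous_const.mul (eig_continuous n)))
      (hc.mul_right (Real.sqrt 2))
    intro n z; exact habs z n
  have hΔb : ∀ z, |Δ z| ≤ Real.sqrt 2 * S := by
    intro z
    calc |Δ z| ≤ ∑' n, ‖c n * eig n z‖ := norm_tsum_le_tsum_norm (hns z)
      _ ≤ ∑' n, |c n| * Real.sqrt 2 := Summable.tsum_le_tsum (habs z) (hns z) (hc.mul_right _)
      _ = S * Real.sqrt 2 := Summable.tsum_mul_right _ hc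
      _ = Real.sqrt 2 * S := mul_comm _ _
  -- inner products
  have hinner : ∀ n, ∫ z in Ioc (0:ℝ) 1, eig n z * Δ z = c n := by
    intro n
    have hpt : ∀ z, eig n z * Δ z = ∑' m, c m * (eig n z * eig m z) := by
      intro z
      rw [hΔ]
      rw [← Summable.tsum_mul_left (eig n z) (hsum z)]
      apply tsum_congr; intro m; ring
    have hmeas : ∀ m : ℕ, AEStronglyMeasurable (fun z => c m * (eig n z * eig m z))
        (volume.restrict (Ioc (0:ℝ) 1)) :=
      fun m => (continuous_const.mul ((eig_continuous n).mul (eig_continuous m))).aestronglyMeasurable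
    have hbound : ∀ m z, |c m * (eig n z * eig m z)| ≤ |c m| * 2 := by
      intro m z
      rw [abs_mul]
      apply mul_le_mul_of_nonneg_left _ (abs_nonneg _)
      rw [abs_mul]
      calc |eig n z| * |eig m z| ≤ Real.sqrt 2 * Real.sqrt 2 :=
            mul_le_mul (eig_abs_le n z) (eig_abs_le m z) (abs_nonneg _) (Real.sqrt_nonneg 2)
        _ = 2 := Real.mul_self_sqrt (by norm_num)
    calc ∫ z in Ioc (0:ℝ) 1, eig n z * Δ z
        = ∫ z in Ioc (0:ℝ) 1, ∑' m, c m * (eig n z * eig m z) := by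
          apply integral_congr_ae; filter_upwards with z; exact hpt z
      _ = ∑' m, ∫ z in Ioc (0:ℝ) 1, c m * (eig n z * eig m z) :=
          integral_tsum hmeas (tsum_lint_ne_top (fun m => by positivity) hbound (hc.mul_right 2))
      _ = ∑' m, c m * (if n = m then 1 else 0) := by
          apply tsum_congr; intro m
          rw [integral_const_mul]
          congr 1
          rw [← intervalIntegral.integral_of_le (by norm_num : (0:ℝ) ≤ 1)]
          exact eig_orth n m
      _ = c n := by
          rw [tsum_eq_single n]
          · simp
          · intro m hm
            simp [Ne.symm hm]
  -- main expansion
  have hmeas2 : ∀ m : ℕ, AEStronglyMeasurable (fun z => c m * eig m z * Δ z)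
      (volume.restrict (Ioc (0:ℝ) 1)) :=
    fun m => ((continuous_const.mul (eig_continuous m)).mul hΔc).aestronglyMeasurable
  have hbound2 : ∀ m z, |c m * eig m z * Δ z| ≤ |c m| * (2 * S) := by
    intro m z
    rw [abs_mul, abs_mul]
    calc |c m| * |eig m z| * |Δ z| ≤ |c m| * Real.sqrt 2 * (Real.sqrt 2 * S) := by
          apply mul_le_mul _ (hΔb z) (abs_nonneg _) (by positivity)
          exact mul_le_mul_of_nonneg_left (eig_abs_le m z) (abs_nonneg _)
      _ = |c m| * (Real.sqrt 2 * Real.sqrt 2 * S) := by ring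
      _ = |c m| * (2 * S) := by rw [Real.mul_self_sqrt (by norm_num)]
  calc ∫ z in (0:ℝ)..1, (∑' n, c n * eig n z)^2
      = ∫ z in Ioc (0:ℝ) 1, (Δ z)^2 := intervalIntegral.integral_of_le (by norm_num)
    _ = ∫ z in Ioc (0:ℝ) 1, ∑' n, c n * eig n z * Δ z := by
        apply integral_congr_ae; filter_upwards with z
        rw [pow_two]
        exact (Summable.tsum_mul_right (Δ z) (hsum z)).symm
    _ = ∑' n, ∫ z in Ioc (0:ℝ) 1, c n * eig n z * Δ z :=
        integral_tsum hmeas2 (tsum_lint_ne_top (fun m => by positivity) hbound2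
          (hc.mul_right (2 * S)))
    _ = ∑' n, (c n)^2 := by
        apply tsum_congr; intro n
        have : ∀ z, c n * eig n z * Δ z = c n * (eig n z * Δ z) := fun z => by ring
        simp_rw [this]
        rw [integral_const_mul, hinner n, pow_two]


lemma integral_exp_neg_mul_Ioi' {b : ℝ} (hb : 0 < b) :
    ∫ r in Ioi (0:ℝ), Real.exp (-(b*r)) = 1/b := by
  have hd : ∀ x ∈ Ioi (0:ℝ), HasDerivAt (fun r => -Real.exp (-(b*r))/b) (Real.exp (-(b*x))) x := by
    intro x _
    have h1 : HasDerivAt (fun r : ℝ => -(b*r)) (-b) x := by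
      exact ((hasDerivAt_id x).const_mul b).neg.congr_deriv (by simp)
    have h2 := (Real.hasDerivAt_exp (-(b*x))).comp x h1
    have h3 := (h2.neg).div_const b
    exact h3.congr_deriv (by field_simp)
  have hint : IntegrableOn (fun x : ℝ => Real.exp (-(b*x))) (Ioi 0) := by
    simpa [neg_mul] using exp_neg_integrableOn_Ioi 0 hb
  have htend : Filter.Tendsto (fun r => -Real.exp (-(b*r))/b) Filter.atTop (nhds 0) := by
    have h0 : Filter.Tendsto (fun r:ℝ => b*r) Filter.atTop Filter.atTop :=
      Filter.Tendsto.const_mul_atTop hb Filter.tendsto_id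
    have h1 : Filter.Tendsto (fun r:ℝ => -(b*r)) Filter.atTop Filter.atBot :=
      Filter.tendsto_neg_atBot_iff.mpr h0
    have h2 : Filter.Tendsto (fun r:ℝ => Real.exp (-(b*r))) Filter.atTop (nhds 0) :=
      Real.tendsto_exp_atBot.comp h1
    have := (h2.neg).div_const b
    simpa using this
  have := integral_Ioi_of_hasDerivAt_of_tendsto
    (Continuous.continuousWithinAt (by continuity)) hd hint htend
  rw [this]
  rw [mul_zero, neg_zero, Real.exp_zero]
  field_simp; ring

lemma one_sub_exp_neg_sq_le {a : ℝ} (ha : 0 ≤ a) :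
    (1 - Real.exp (-a))^2 ≤ 1 ∧ (1 - Real.exp (-a))^2 ≤ a := by
  have h1 : Real.exp (-a) ≤ 1 := Real.exp_le_one_iff.mpr (by linarith)
  have h2 : 0 ≤ Real.exp (-a) := Real.exp_nonneg _
  have h3 : 1 - a ≤ Real.exp (-a) := by
    have := Real.add_one_le_exp (-a); linarith
  constructor <;> nlinarith

lemma sum_inv_sq_le (M : ℕ) : ∑ i ∈ Finset.range M, (1:ℝ)/((i:ℝ)+1)^2 ≤ 2 := by
  have key : ∀ M : ℕ, ∑ i ∈ Finset.range (M+1), (1:ℝ)/((i:ℝ)+1)^2 ≤ 2 - 1/((M:ℝ)+1) := by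
    intro M
    induction M with
    | zero => norm_num
    | succ M ih =>
      rw [Finset.sum_range_succ]
      have hM : (0:ℝ) < (M:ℝ)+1 := by positivity
      have hM2 : (0:ℝ) < (M:ℝ)+2 := by positivity
      have step : (1:ℝ)/(((M:ℝ)+1)+1)^2 ≤ 1/((M:ℝ)+1) - 1/((M:ℝ)+2) := by
        rw [div_sub_div _ _ (ne_of_gt hM) (ne_of_gt hM2)]
        rw [div_le_div_iff₀ (by positivity) (by positivity)]
        nlinarith
      push_cast
      calc ∑ i ∈ Finset.range (M+1), (1:ℝ)/((i:ℝ)+1)^2 + 1/(((M:ℝ)+1)+1)^2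
          ≤ (2 - 1/((M:ℝ)+1)) + (1/((M:ℝ)+1) - 1/((M:ℝ)+2)) := add_le_add ih step
        _ ≤ 2 - 1/((M:ℝ)+1+1) := by ring_nf; nlinarith
  have mono : ∑ i ∈ Finset.range M, (1:ℝ)/((i:ℝ)+1)^2
      ≤ ∑ i ∈ Finset.range (M+1), (1:ℝ)/((i:ℝ)+1)^2 := by
    rw [Finset.sum_range_succ]
    have : (0:ℝ) ≤ 1/((M:ℝ)+1)^2 := by positivity
    linarith
  calc ∑ i ∈ Finset.range M, (1:ℝ)/((i:ℝ)+1)^2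
      ≤ ∑ i ∈ Finset.range (M+1), (1:ℝ)/((i:ℝ)+1)^2 := mono
    _ ≤ 2 - 1/((M:ℝ)+1) := key M
    _ ≤ 2 := by
        have : (0:ℝ) < 1/((M:ℝ)+1) := by positivity
        linarith

lemma tail_sum_le {co : ℝ} (hco : 0 < co) (N : ℕ) (hN : 1 ≤ N) (M : ℕ) :
    ∑ i ∈ Finset.range M, co/(((i:ℝ)+(N:ℝ))+1)^2 ≤ co/(N:ℝ) := by
  have hN0 : (0:ℝ) < (N:ℝ) := by exact_mod_cast Nat.pos_of_ne_zero (by omega)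
  have key : ∀ M : ℕ, ∑ i ∈ Finset.range M, co/(((i:ℝ)+(N:ℝ))+1)^2
      ≤ co/(N:ℝ) - co/((N:ℝ)+(M:ℝ)) := by
    intro M
    induction M with
    | zero => simp
    | succ M ih =>
      rw [Finset.sum_range_succ]
      have hNM : (0:ℝ) < (N:ℝ)+(M:ℝ) := by positivity
      have hNM1 : (0:ℝ) < (N:ℝ)+(M:ℝ)+1 := by positivity
      have step : co/(((M:ℝ)+(N:ℝ))+1)^2 ≤ co/((N:ℝ)+(M:ℝ)) - co/((N:ℝ)+(M:ℝ)+1) := by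
        rw [div_sub_div _ _ (ne_of_gt hNM) (ne_of_gt hNM1)]
        rw [div_le_div_iff₀ (by positivity) (by positivity)]
        nlinarith
      push_cast
      calc ∑ i ∈ Finset.range M, co/(((i:ℝ)+(N:ℝ))+1)^2 + co/(((M:ℝ)+(N:ℝ))+1)^2
          ≤ (co/(N:ℝ) - co/((N:ℝ)+(M:ℝ))) + (co/((N:ℝ)+(M:ℝ)) - co/((N:ℝ)+(M:ℝ)+1)) :=
            add_le_add ih step
        _ = co/(N:ℝ) - co/((N:ℝ)+((M:ℝ)+1)) := by ring_nf
  calc ∑ i ∈ Finset.range M, co/(((i:ℝ)+(N:ℝ))+1)^2 ≤ co/(N:ℝ) - co/((N:ℝ)+(M:ℝ)) := key M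
    _ ≤ co/(N:ℝ) := by
        have : (0:ℝ) < co/((N:ℝ)+(M:ℝ)) := by positivity
        linarith


lemma summable_co_inv_sq {co : ℝ} : Summable (fun n : ℕ => co/((n:ℝ)+1)^2) := by
  have h : Summable (fun n : ℕ => (1:ℝ)/((n:ℝ))^2) :=
    Real.summable_one_div_nat_pow.mpr (by norm_num)
  have h2 : Summable (fun n : ℕ => (1:ℝ)/((n:ℝ)+1)^2) := by
    have := (summable_nat_add_iff (f := fun n : ℕ => (1:ℝ)/((n:ℝ))^2) 1).mpr h
    refine this.congr fun n => ?_
    push_cast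
    ring
  simpa [div_eq_mul_inv, mul_comm] using h2.mul_left co

lemma minsum {co h : ℝ} (hc0 : 0 < co) (hc1 : co ≤ 1) (hh : 0 < h) :
    ∑' n : ℕ, min h (co/((n:ℝ)+1)^2) ≤ 3 * Real.sqrt h := by
  set f : ℕ → ℝ := fun n => min h (co/((n:ℝ)+1)^2) with hf
  have hf0 : ∀ n, 0 ≤ f n := fun n => le_min hh.le (by positivity)
  have hfle : ∀ n, f n ≤ co/((n:ℝ)+1)^2 := fun n => min_le_right _ _
  have hfs : Summable f := Summable.of_nonneg_of_le hf0 hfle summable_co_inv_sq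
  have hsqh : 0 < Real.sqrt h := Real.sqrt_pos.mpr hh
  rcases le_or_gt co h with hch | hch
  · -- big h : bound by full series
    have h1 : ∑' n, f n ≤ 2 * co := by
      apply Real.tsum_le_of_sum_range_le hf0
      intro M
      calc ∑ i ∈ Finset.range M, f i ≤ ∑ i ∈ Finset.range M, co/((i:ℝ)+1)^2 :=
            Finset.sum_le_sum fun i _ => hfle i
        _ = co * ∑ i ∈ Finset.range M, (1:ℝ)/((i:ℝ)+1)^2 := by
            rw [Finset.mul_sum]; congr 1; funext i; ring
        _ ≤ co * 2 := mul_le_mul_of_nonneg_left (sum_inv_sq_le M) hc0.le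
        _ = 2 * co := mul_comm _ _
    have h2 : co ≤ Real.sqrt h := by
      have hx : co^2 ≤ h := by nlinarith
      nlinarith [Real.sq_sqrt hh.le, Real.sqrt_nonneg h, hx]
    linarith
  · -- small h : split at N
    set N : ℕ := ⌈Real.sqrt (co/h)⌉₊ with hN
    have hcoh1 : 1 ≤ co/h := (one_le_div hh).mpr hch.le
    have hs1 : 1 ≤ Real.sqrt (co/h) := by
      rw [show (1:ℝ) = Real.sqrt 1 by simp]
      exact Real.sqrt_le_sqrt hcoh1
    have hspos : 0 < Real.sqrt (co/h) := by linarith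
    have hN1 : 1 ≤ N := Nat.one_le_ceil_iff.mpr (by linarith)
    have hNpos : (0:ℝ) < (N:ℝ) := by exact_mod_cast Nat.pos_of_ne_zero (by omega)
    have hNge : Real.sqrt (co/h) ≤ (N:ℝ) := Nat.le_ceil _
    have hNle : (N:ℝ) ≤ 2 * Real.sqrt (co/h) := by
      have h4 : (N:ℝ) < Real.sqrt (co/h) + 1 := Nat.ceil_lt_add_one (le_trans zero_le_one hs1)
      linarith
    have hsqco : Real.sqrt co ≤ 1 := by
      rw [show (1:ℝ) = Real.sqrt 1 by simp]
      exact Real.sqrt_le_sqrt hc1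
    have hsq : Real.sqrt (co/h) * h = Real.sqrt co * Real.sqrt h := by
      rw [Real.sqrt_div hc0.le, div_mul_eq_mul_div, eq_comm, eq_div_iff (ne_of_gt hsqh),
        mul_assoc, Real.mul_self_sqrt hh.le]
    have first : ∑ i ∈ Finset.range N, f i ≤ (N:ℝ) * h := by
      calc ∑ i ∈ Finset.range N, f i ≤ ∑ _i ∈ Finset.range N, h :=
            Finset.sum_le_sum fun i _ => min_le_left _ _
        _ = (N:ℝ) * h := by rw [Finset.sum_const, Finset.card_range, nsmul_eq_mul]
    have firstb : (N:ℝ) * h ≤ 2 * Real.sqrt h := by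
      calc (N:ℝ) * h ≤ (2 * Real.sqrt (co/h)) * h := mul_le_mul_of_nonneg_right hNle hh.le
        _ = 2 * (Real.sqrt co * Real.sqrt h) := by rw [mul_assoc, hsq]
        _ ≤ 2 * (1 * Real.sqrt h) := by
            apply mul_le_mul_of_nonneg_left _ (by norm_num)
            exact mul_le_mul_of_nonneg_right hsqco hsqh.le
        _ = 2 * Real.sqrt h := by ring
    have second : ∑' i, f (i+N) ≤ co/(N:ℝ) := by
      apply Real.tsum_le_of_sum_range_le (fun i => hf0 _)
      intro M
      calc ∑ i ∈ Finset.range M, f (i+N) ≤ ∑ i ∈ Finset.range M, co/(((i:ℝ)+(N:ℝ))+1)^2 := by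
            apply Finset.sum_le_sum
            intro i _
            have := hfle (i+N)
            push_cast at this
            exact this
        _ ≤ co/(N:ℝ) := tail_sum_le hc0 N hN1 M
    have secondb : co/(N:ℝ) ≤ Real.sqrt h := by
      have e : co/Real.sqrt (co/h) = Real.sqrt h * Real.sqrt co := by
        rw [Real.sqrt_div hc0.le, div_div_eq_mul_div, mul_comm co, mul_div_assoc, Real.div_sqrt]
      calc co/(N:ℝ) ≤ co/Real.sqrt (co/h) := by
            apply div_le_div_of_nonneg_left hc0.le hspos hNge
        _ = Real.sqrt h * Real.sqrt co := e
        _ ≤ Real.sqrt h * 1 := mul_le_mul_of_nonneg_left hsqco hsqh.le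
        _ = Real.sqrt h := mul_one _
    rw [← Summable.sum_add_tsum_nat_add N hfs]
    linarith

end HeatAux

open HeatAux Real Set in
theorem stmt_4 :
    ∃ C > (0:ℝ), ∀ h > (0:ℝ), ∀ x ∈ Set.Icc (0:ℝ) 1,
      (∫ r in Set.Ioi (0:ℝ),
        ∫ z in (0:ℝ)..1, (heatKernel (r + h) x z - heatKernel r x z) ^ 2)
        ≤ C * Real.sqrt h := by
  refine ⟨3, by norm_num, ?_⟩
  intro h hh x _hx
  set co : ℝ := 2/Real.pi^2 with hco
  have hco0 : 0 < co := by positivity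
  have hco1 : co ≤ 1 := by
    rw [hco, div_le_one (by positivity)]
    nlinarith [Real.pi_gt_three]
  set D : ℕ → ℝ := fun n => (1 - Real.exp (-(lam n * h)))^2 * (eig n x)^2 with hD
  have hD0 : ∀ n, 0 ≤ D n := fun n => by positivity
  have heig2 : ∀ n, (eig n x)^2 ≤ 2 := by
    intro n
    have h1 := eig_abs_le n x
    have h2 : (eig n x)^2 = |eig n x|^2 := (sq_abs _).symm
    rw [h2]
    calc |eig n x|^2 ≤ (Real.sqrt 2)^2 := by nlinarith [abs_nonneg (eig n x)]
      _ = 2 := Real.sq_sqrt (by norm_num)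
  have hD1 : ∀ n, D n ≤ 2 := by
    intro n
    have h1 := (one_sub_exp_neg_sq_le (a := lam n * h) (mul_nonneg (lam_pos n).le hh.le)).1
    have h2 := heig2 n
    have h3 : (0:ℝ) ≤ (eig n x)^2 := by positivity
    simp only [hD]
    nlinarith
  have hD2 : ∀ n, D n ≤ lam n * h * 2 := by
    intro n
    have h1 := (one_sub_exp_neg_sq_le (a := lam n * h) (mul_nonneg (lam_pos n).le hh.le)).2
    have h2 := heig2 n
    have h3 : (0:ℝ) ≤ (1 - Real.exp (-(lam n * h)))^2 := by positivity
    simp only [hD]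
    nlinarith
  have hq2 : ∀ n r, (dcoef h x n r)^2 = D n * Real.exp (-(2 * lam n * r)) := by
    intro n r
    have e1 : Real.exp (-(lam n * (r+h))) = Real.exp (-(lam n * r)) * Real.exp (-(lam n * h)) := by
      rw [← Real.exp_add]; congr 1; ring
    have e2 : Real.exp (-(2 * lam n * r)) = Real.exp (-(lam n * r)) * Real.exp (-(lam n * r)) := by
      rw [← Real.exp_add]; congr 1; ring
    unfold dcoef
    rw [e1, e2, hD]
    ring
  have hIg : ∀ n, IntegrableOn (fun r => D n * Real.exp (-(2 * lam n * r))) (Ioi (0:ℝ)) := by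
    intro n
    have := (exp_neg_integrableOn_Ioi 0 (mul_pos two_pos (lam_pos n))).const_mul (D n)
    simpa [neg_mul, IntegrableOn] using this
  have hInt : ∀ n, ∫ r in Ioi (0:ℝ), D n * Real.exp (-(2 * lam n * r))
      = D n * (1/(2 * lam n)) := by
    intro n
    rw [integral_const_mul, integral_exp_neg_mul_Ioi' (mul_pos two_pos (lam_pos n))]
  have hbound : ∀ n, D n * (1/(2 * lam n)) ≤ min h (co/((n:ℝ)+1)^2) := by
    intro n
    have hl := lam_pos n
    have h2l : (0:ℝ) < 2 * lam n := by nlinarith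
    have hinv : (0:ℝ) ≤ 1/(2 * lam n) := (one_div_pos.mpr h2l).le
    apply le_min
    · calc D n * (1/(2 * lam n)) ≤ (lam n * h * 2) * (1/(2 * lam n)) :=
            mul_le_mul_of_nonneg_right (hD2 n) hinv
        _ = h := by field_simp
    · calc D n * (1/(2 * lam n)) ≤ 2 * (1/(2 * lam n)) :=
            mul_le_mul_of_nonneg_right (hD1 n) hinv
        _ = co/((n:ℝ)+1)^2 := by
            rw [hco]; unfold lam
            have h1 : ((n:ℝ)+1) ≠ 0 := by positivity
            field_simp
  have hsmin : Summable (fun n : ℕ => min h (co/((n:ℝ)+1)^2)) :=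
    Summable.of_nonneg_of_le (fun n => le_min hh.le (div_nonneg hco0.le (by positivity)))
      (fun n => min_le_right _ _) summable_co_inv_sq
  have hsum1 : Summable (fun n => D n * (1/(2 * lam n))) :=
    Summable.of_nonneg_of_le (fun n => mul_nonneg (hD0 n)
      (one_div_nonneg.mpr (by nlinarith [lam_pos n])))
      (fun n => le_trans (hbound n) (min_le_right _ _)) summable_co_inv_sq
  have hinner_eq : ∀ r ∈ Ioi (0:ℝ),
      (∫ z in (0:ℝ)..1, (heatKernel (r + h) x z - heatKernel r x z) ^ 2)
        = ∑' n, D n * Real.exp (-(2 * lam n * r)) := by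
    intro r hr
    rw [mem_Ioi] at hr
    have hcabs : Summable (fun n => |dcoef h x n r|) :=
      Summable.of_nonneg_of_le (fun n => abs_nonneg _) (fun n => dcoef_abs_le hh x n hr)
        ((summable_exp_lam hr).mul_left _)
    calc (∫ z in (0:ℝ)..1, (heatKernel (r + h) x z - heatKernel r x z) ^ 2)
        = ∫ z in (0:ℝ)..1, (∑' n, dcoef h x n r * eig n z)^2 := by
          apply intervalIntegral.integral_congr
          intro z _
          show (heatKernel (r + h) x z - heatKernel r x z) ^ 2
              = (∑' n, dcoef h x n r * eig n z)^2
          rw [heat_diff_eq hh x hr z]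
      _ = ∑' n, (dcoef h x n r)^2 := parseval _ hcabs
      _ = ∑' n, D n * Real.exp (-(2 * lam n * r)) := tsum_congr (fun n => hq2 n r)
  have hlint : ∀ n, ∫⁻ r in Ioi (0:ℝ), ‖D n * Real.exp (-(2 * lam n * r))‖₊
      = ENNReal.ofReal (D n * (1/(2 * lam n))) := by
    intro n
    rw [← hInt n, ofReal_integral_eq_lintegral_ofReal (hIg n)
      (Filter.Eventually.of_forall (fun r => mul_nonneg (hD0 n) (Real.exp_nonneg _)))]
    apply lintegral_congr
    intro r
    rw [← Real.enorm_eq_ofReal (mul_nonneg (hD0 n) (Real.exp_nonneg _))]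
    exact (enorm_eq_nnnorm _).symm
  calc (∫ r in Set.Ioi (0:ℝ),
        ∫ z in (0:ℝ)..1, (heatKernel (r + h) x z - heatKernel r x z) ^ 2)
      = ∫ r in Ioi (0:ℝ), ∑' n, D n * Real.exp (-(2 * lam n * r)) :=
        setIntegral_congr_fun measurableSet_Ioi hinner_eq
    _ = ∑' n, ∫ r in Ioi (0:ℝ), D n * Real.exp (-(2 * lam n * r)) := by
        apply integral_tsum
        · intro n
          exact (Continuous.aestronglyMeasurable (by continuity))
        · change ∑' n, ∫⁻ r in Ioi (0:ℝ), (‖D n * Real.exp (-(2 * lam n * r))‖₊ : ENNReal) ≠ ⊤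
          rw [funext hlint, ← ENNReal.ofReal_tsum_of_nonneg
            (fun n => by have := lam_pos n; positivity) hsum1]
          exact ENNReal.ofReal_ne_top
    _ = ∑' n, D n * (1/(2 * lam n)) := tsum_congr hInt
    _ ≤ ∑' n : ℕ, min h (co/((n:ℝ)+1)^2) := Summable.tsum_le_tsum hbound hsum1 hsmin
    _ ≤ 3 * Real.sqrt h := minsum hco0 hco1 hh
end

section
/- There exists a constant C > 0 such that for every h > 0, ∫₀^∞ ( sup_{x∈[0,1]} ∫₀¹ ( p_{r+h}(x,z) − p_r(x,z) )² dz ) dr ≤ C·h^{1/2}. -/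
open MeasureTheory

namespace HKaux

noncomputable def A (t : ℝ) (n : ℕ) : ℝ := Real.exp (-(((n:ℝ)+1)^2*Real.pi^2*t)/2)

noncomputable def C (r h x : ℝ) (n : ℕ) : ℝ :=
  (A (r+h) n - A r n) * (2 * Real.sin (((n:ℝ)+1)*Real.pi*x))

noncomputable def S (n : ℕ) (z : ℝ) : ℝ := Real.sin (((n:ℝ)+1)*Real.pi*z)

lemma A_pos (t : ℝ) (n : ℕ) : 0 < A t n := Real.exp_pos _

lemma A_le_one {t : ℝ} (ht : 0 ≤ t) (n : ℕ) : A t n ≤ 1 := by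
  apply Real.exp_le_one_iff.2
  have : (0:ℝ) ≤ ((n:ℝ)+1)^2*Real.pi^2*t := by positivity
  linarith

lemma A_anti {t s : ℝ} (hts : t ≤ s) (n : ℕ) : A s n ≤ A t n := by
  apply Real.exp_le_exp.2
  have h0 : (0:ℝ) < ((n:ℝ)+1)^2*Real.pi^2 := by positivity
  have := mul_le_mul_of_nonneg_left hts h0.le
  linarith

lemma A_summable {t : ℝ} (ht : 0 < t) : Summable (A t) := by
  have hr0 : 0 < Real.exp (-(Real.pi ^ 2 * t) / 2) := Real.exp_pos _
  have hr1 : Real.exp (-(Real.pi ^ 2 * t) / 2) < 1 := by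
    rw [Real.exp_lt_one_iff]
    have : 0 < Real.pi ^ 2 * t := by positivity
    linarith
  have hg : Summable (fun n : ℕ => Real.exp (-(Real.pi ^ 2 * t) / 2) ^ (n + 1)) :=
    (summable_geometric_of_lt_one hr0.le hr1).comp_injective (add_left_injective 1)
  refine Summable.of_nonneg_of_le (fun n => (Real.exp_pos _).le) (fun n => ?_) hg
  unfold A
  rw [← Real.exp_nat_mul]
  apply Real.exp_le_exp.2
  have h1 : ((n:ℝ) + 1) ≤ ((n:ℝ)+1)^2 := by nlinarith [Nat.cast_nonneg (α := ℝ) n]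
  have hpt : 0 < Real.pi ^ 2 * t := by positivity
  have : ((n:ℝ)+1) * (Real.pi^2*t) ≤ ((n:ℝ)+1)^2 * (Real.pi^2*t) :=
    mul_le_mul_of_nonneg_right h1 hpt.le
  push_cast
  ring_nf
  nlinarith [Real.pi_pos]

lemma S_abs_le (n : ℕ) (z : ℝ) : |S n z| ≤ 1 := Real.abs_sin_le_one _

lemma C_abs_le {r h : ℝ} (hr : 0 < r) (hh : 0 < h) (x : ℝ) (n : ℕ) :
    |C r h x n| ≤ 2 * A r n := by
  unfold C
  rw [abs_mul]
  have h1 : |A (r+h) n - A r n| ≤ A r n := by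
    rw [abs_sub_comm, abs_of_nonneg (by linarith [A_anti (by linarith : r ≤ r + h) n])]
    linarith [A_pos (r+h) n]
  have h2 : |2 * Real.sin (((n:ℝ)+1)*Real.pi*x)| ≤ 2 := by
    rw [abs_mul, abs_two]
    nlinarith [Real.abs_sin_le_one (((n:ℝ)+1)*Real.pi*x),
      abs_nonneg (Real.sin (((n:ℝ)+1)*Real.pi*x))]
  calc |A (r+h) n - A r n| * |2 * Real.sin (((n:ℝ)+1)*Real.pi*x)|
      ≤ A r n * 2 := mul_le_mul h1 h2 (abs_nonneg _) (A_pos r n).le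
    _ = 2 * A r n := by ring

lemma C_abs_summable {r h : ℝ} (hr : 0 < r) (hh : 0 < h) (x : ℝ) :
    Summable (fun n => |C r h x n|) :=
  Summable.of_nonneg_of_le (fun _ => abs_nonneg _) (C_abs_le hr hh x) ((A_summable hr).mul_left 2)

lemma term_summable {t : ℝ} (ht : 0 < t) (x y : ℝ) :
    Summable (fun n : ℕ => Real.exp (-(((n : ℝ) + 1) ^ 2 * Real.pi ^ 2 * t) / 2) *
      (Real.sqrt 2 * Real.sin (((n:ℝ)+1)*Real.pi*x)) *
      (Real.sqrt 2 * Real.sin (((n:ℝ)+1)*Real.pi*y))) := by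
  show Summable (fun n : ℕ => A t n * (Real.sqrt 2 * Real.sin (((n:ℝ)+1)*Real.pi*x)) *
      (Real.sqrt 2 * Real.sin (((n:ℝ)+1)*Real.pi*y)))
  refine Summable.of_norm_bounded ((A_summable ht).mul_left 2) fun n => ?_
  have s2 : Real.sqrt 2 * Real.sqrt 2 = 2 := Real.mul_self_sqrt (by norm_num)
  have hx : |Real.sqrt 2 * Real.sin (((n:ℝ)+1)*Real.pi*x)| ≤ Real.sqrt 2 := by
    rw [abs_mul, abs_of_nonneg (Real.sqrt_nonneg 2)]
    exact mul_le_of_le_one_right (Real.sqrt_nonneg 2) (Real.abs_sin_le_one _)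
  have hy : |Real.sqrt 2 * Real.sin (((n:ℝ)+1)*Real.pi*y)| ≤ Real.sqrt 2 := by
    rw [abs_mul, abs_of_nonneg (Real.sqrt_nonneg 2)]
    exact mul_le_of_le_one_right (Real.sqrt_nonneg 2) (Real.abs_sin_le_one _)
  rw [Real.norm_eq_abs, abs_mul, abs_mul, abs_of_pos (A_pos t n)]
  calc A t n * |Real.sqrt 2 * Real.sin (((n:ℝ)+1)*Real.pi*x)| *
        |Real.sqrt 2 * Real.sin (((n:ℝ)+1)*Real.pi*y)|
      ≤ A t n * Real.sqrt 2 * Real.sqrt 2 := by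
        exact mul_le_mul (mul_le_mul_of_nonneg_left hx (A_pos t n).le) hy (abs_nonneg _)
          (mul_nonneg (A_pos t n).le (Real.sqrt_nonneg 2))
    _ = 2 * A t n := by rw [mul_assoc, s2]; ring

lemma hk_diff {r h : ℝ} (hr : 0 < r) (hh : 0 < h) (x z : ℝ) :
    heatKernel (r+h) x z - heatKernel r x z = ∑' n, C r h x n * S n z := by
  unfold heatKernel
  rw [← Summable.tsum_sub (term_summable (by linarith) x z) (term_summable hr x z)]
  refine tsum_congr fun n => ?_
  have s2 : Real.sqrt 2 * Real.sqrt 2 = 2 := Real.mul_self_sqrt (by norm_num)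
  unfold C S A
  linear_combination (Real.exp (-(((n:ℝ)+1)^2*Real.pi^2*(r+h))/2)
    - Real.exp (-(((n:ℝ)+1)^2*Real.pi^2*r)/2)) * Real.sin (((n:ℝ)+1)*Real.pi*x) *
    Real.sin (((n:ℝ)+1)*Real.pi*z) * s2


lemma integral_cos_mul' {c : ℝ} (hc : c ≠ 0) :
    ∫ z in (0:ℝ)..1, Real.cos (c * z) = Real.sin c / c := by
  have : ∀ z ∈ Set.uIcc (0:ℝ) 1,
      HasDerivAt (fun y => Real.sin (c * y) / c) (Real.cos (c * z)) z := by
    intro z _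
    have h1 : HasDerivAt (fun y : ℝ => c * y) c z := by
      simpa using (hasDerivAt_id z).const_mul c
    have h2 := (Real.hasDerivAt_sin (c * z)).comp z h1
    have h3 := h2.div_const c
    simpa [mul_comm, mul_div_assoc, mul_div_cancel_left₀ _ hc] using h3
  rw [intervalIntegral.integral_eq_sub_of_hasDerivAt this
    ((Real.continuous_cos.comp (continuous_const.mul continuous_id)).intervalIntegrable 0 1)]
  simp

lemma integral_cos_int_mul_pi {k : ℤ} (hk : k ≠ 0) :
    ∫ z in (0:ℝ)..1, Real.cos ((k:ℝ) * Real.pi * z) = 0 := by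
  have hc : (k:ℝ) * Real.pi ≠ 0 := by simp [Real.pi_ne_zero, hk]
  rw [integral_cos_mul' hc, Real.sin_int_mul_pi]
  simp

lemma sin_orth (m n : ℕ) :
    ∫ z in (0:ℝ)..1, S m z * S n z = if m = n then 1/2 else 0 := by
  unfold S
  have key : ∀ z : ℝ, Real.sin (((m:ℝ)+1) * Real.pi * z) * Real.sin (((n:ℝ)+1) * Real.pi * z)
      = (Real.cos ((((m:ℝ) - n)) * Real.pi * z)
        - Real.cos ((((m:ℝ) + n + 2)) * Real.pi * z)) / 2 := by
    intro z
    have := Real.cos_sub_cos (((m:ℝ) - n) * Real.pi * z) (((m:ℝ) + n + 2) * Real.pi * z)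
    have e1 : ((((m:ℝ) - n) * Real.pi * z) + (((m:ℝ) + n + 2) * Real.pi * z)) / 2
        = ((m:ℝ)+1) * Real.pi * z := by ring
    have e2 : ((((m:ℝ) - n) * Real.pi * z) - (((m:ℝ) + n + 2) * Real.pi * z)) / 2
        = -(((n:ℝ)+1) * Real.pi * z) := by ring
    rw [e1, e2, Real.sin_neg] at this
    linarith [this]
  simp only [key]
  have i1 : IntervalIntegrable (fun z => Real.cos (((m:ℝ) - n) * Real.pi * z)) volume 0 1 :=
    (Real.continuous_cos.comp (continuous_const.mul continuous_id)).intervalIntegrable 0 1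
  have i2 : IntervalIntegrable (fun z => Real.cos (((m:ℝ) + n + 2) * Real.pi * z)) volume 0 1 :=
    (Real.continuous_cos.comp (continuous_const.mul continuous_id)).intervalIntegrable 0 1
  rw [intervalIntegral.integral_div, intervalIntegral.integral_sub i1 i2]
  have h2 : ∫ z in (0:ℝ)..1, Real.cos (((m:ℝ) + n + 2) * Real.pi * z) = 0 := by
    have : ((m:ℝ) + n + 2) = ((m + n + 2 : ℤ) : ℝ) := by push_cast; ring
    rw [this, integral_cos_int_mul_pi (by omega)]
  rw [h2]
  by_cases hmn : m = n
  · subst hmn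
    simp
  · have : ((m:ℝ) - n) = ((m - n : ℤ) : ℝ) := by push_cast; ring
    rw [this, integral_cos_int_mul_pi (by
      intro hcon
      exact hmn (by omega))]
    simp [hmn]

noncomputable def F (r h x z : ℝ) : ℝ := ∑' n, C r h x n * S n z

lemma FS_summable {r h : ℝ} (hr : 0 < r) (hh : 0 < h) (x z : ℝ) :
    Summable (fun n => C r h x n * S n z) := by
  refine Summable.of_norm_bounded (C_abs_summable hr hh x) fun n => ?_
  rw [Real.norm_eq_abs, abs_mul]
  exact mul_le_of_le_one_right (abs_nonneg _) (S_abs_le n z)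

lemma F_abs_le {r h : ℝ} (hr : 0 < r) (hh : 0 < h) (x z : ℝ) :
    |F r h x z| ≤ ∑' n, |C r h x n| := by
  unfold F
  calc |∑' n, C r h x n * S n z| ≤ ∑' n, |C r h x n * S n z| := by
        rw [← Real.norm_eq_abs]
        refine (norm_tsum_le_tsum_norm ?_)
        refine Summable.of_nonneg_of_le (fun n => norm_nonneg _) (fun n => ?_)
          (C_abs_summable hr hh x)
        rw [Real.norm_eq_abs, abs_mul]
        exact mul_le_of_le_one_right (abs_nonneg _) (S_abs_le n z)
    _ ≤ ∑' n, |C r h x n| := by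
        refine Summable.tsum_le_tsum (fun n => ?_) ?_ (C_abs_summable hr hh x)
        · rw [abs_mul]
          exact mul_le_of_le_one_right (abs_nonneg _) (S_abs_le n z)
        · refine Summable.of_nonneg_of_le (fun n => abs_nonneg _) (fun n => ?_)
            (C_abs_summable hr hh x)
          rw [abs_mul]
          exact mul_le_of_le_one_right (abs_nonneg _) (S_abs_le n z)

lemma F_cont {r h : ℝ} (hr : 0 < r) (hh : 0 < h) (x : ℝ) :
    Continuous (F r h x) := by
  refine continuous_tsum (fun n => ?_) (C_abs_summable hr hh x) (fun n z => ?_)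
  · exact continuous_const.mul (Real.continuous_sin.comp
      (continuous_const.mul continuous_id))
  · rw [Real.norm_eq_abs, abs_mul]
    exact mul_le_of_le_one_right (abs_nonneg _) (S_abs_le n z)

lemma lint_bound {f : ℝ → ℝ} {K : ℝ} (hf : ∀ z, |f z| ≤ K) :
    ∫⁻ z in Set.Ioc (0:ℝ) 1, ‖f z‖₊ ≤ ENNReal.ofReal K := by
  calc ∫⁻ z in Set.Ioc (0:ℝ) 1, (‖f z‖₊ : ENNReal)
      ≤ ∫⁻ _ in Set.Ioc (0:ℝ) 1, ENNReal.ofReal K := by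
        refine lintegral_mono fun z => ?_
        rw [← enorm_eq_nnnorm, ← ofReal_norm]
        exact ENNReal.ofReal_le_ofReal (hf z)
    _ = ENNReal.ofReal K * volume (Set.Ioc (0:ℝ) 1) := by
        rw [setLIntegral_const]
    _ = ENNReal.ofReal K := by simp [Real.volume_Ioc]

lemma integral_S_mul_F {r h : ℝ} (hr : 0 < r) (hh : 0 < h) (x : ℝ) (n : ℕ) :
    ∫ z in Set.Ioc (0:ℝ) 1, S n z * F r h x z = C r h x n * (1/2) := by
  have hptwise : ∀ z, S n z * F r h x z = ∑' m, C r h x m * (S n z * S m z) := by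
    intro z
    unfold F
    rw [← tsum_mul_left]
    exact tsum_congr fun m => by ring
  simp only [hptwise]
  rw [MeasureTheory.integral_tsum]
  · have hval : ∀ m, (∫ z in Set.Ioc (0:ℝ) 1, C r h x m * (S n z * S m z))
        = C r h x m * (if n = m then (1/2 : ℝ) else 0) := by
      intro m
      rw [MeasureTheory.integral_const_mul]
      congr 1
      rw [← intervalIntegral.integral_of_le (zero_le_one)]
      exact sin_orth n m
    simp only [hval]
    rw [tsum_eq_single n (fun m hm => by rw [if_neg (by omega), mul_zero])]
    simp
  · intro m
    exact ((continuous_const.mul ((Real.continuous_sin.comp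
      (continuous_const.mul continuous_id)).mul (Real.continuous_sin.comp
      (continuous_const.mul continuous_id)))).aestronglyMeasurable).restrict
  · refine ne_of_lt (lt_of_le_of_lt (ENNReal.tsum_le_tsum (fun m => lint_bound (K := |C r h x m|) fun z => ?_)) ?_)
    · rw [abs_mul]
      refine mul_le_of_le_one_right (abs_nonneg _) ?_
      rw [abs_mul]
      exact mul_le_one₀ (S_abs_le n z) (abs_nonneg _) (S_abs_le m z)
    · rw [← ENNReal.ofReal_tsum_of_nonneg (fun m => abs_nonneg _) (C_abs_summable hr hh x)]
      exact ENNReal.ofReal_lt_top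

lemma C_sq_le {r h : ℝ} (hr : 0 < r) (hh : 0 < h) (x : ℝ) (n : ℕ) :
    C r h x n * (C r h x n * (1/2)) ≤ 2 * (A r n - A (r+h) n)^2 := by
  have h1 : |C r h x n| ≤ 2 * |A r n - A (r+h) n| := by
    unfold C
    rw [abs_mul, abs_sub_comm]
    have h2 : |2 * Real.sin (((n:ℝ)+1)*Real.pi*x)| ≤ 2 := by
      rw [abs_mul, abs_two]
      nlinarith [Real.abs_sin_le_one (((n:ℝ)+1)*Real.pi*x),
        abs_nonneg (Real.sin (((n:ℝ)+1)*Real.pi*x))]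
    calc |A r n - A (r+h) n| * |2 * Real.sin (((n:ℝ)+1)*Real.pi*x)|
        ≤ |A r n - A (r+h) n| * 2 := mul_le_mul_of_nonneg_left h2 (abs_nonneg _)
      _ = 2 * |A r n - A (r+h) n| := by ring
  have h3 : C r h x n * C r h x n ≤ 4 * (A r n - A (r+h) n)^2 := by
    have := mul_self_le_mul_self (abs_nonneg (C r h x n)) h1
    rw [abs_mul_abs_self] at this
    calc C r h x n * C r h x n ≤ (2*|A r n - A (r+h) n|) * (2*|A r n - A (r+h) n|) := this
      _ = 4 * (A r n - A (r+h) n)^2 := by rw [← sq_abs (A r n - A (r+h) n)]; ring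
  linarith

lemma d_sq_summable {r h : ℝ} (hr : 0 < r) (hh : 0 < h) :
    Summable (fun n => (A r n - A (r+h) n)^2) := by
  refine Summable.of_nonneg_of_le (fun n => sq_nonneg _) (fun n => ?_) (A_summable hr)
  have h1 : 0 ≤ A r n - A (r+h) n := by linarith [A_anti (by linarith : r ≤ r + h) n]
  have h2 : A r n - A (r+h) n ≤ A r n := by linarith [A_pos (r+h) n]
  have h3 : A r n ≤ 1 := A_le_one hr.le n
  nlinarith

set_option maxHeartbeats 1000000 in
lemma inner_bound {r h : ℝ} (hr : 0 < r) (hh : 0 < h) (x : ℝ) :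
    (∫ z in (0:ℝ)..1, (heatKernel (r+h) x z - heatKernel r x z)^2)
      ≤ 2 * ∑' n : ℕ, (A r n - A (r+h) n)^2 := by
  have hdiff : ∀ z : ℝ, heatKernel (r+h) x z - heatKernel r x z = F r h x z :=
    fun z => hk_diff hr hh x z
  simp only [hdiff]
  rw [intervalIntegral.integral_of_le zero_le_one]
  have hsq : ∀ z, F r h x z ^ 2 = ∑' n, C r h x n * S n z * F r h x z := by
    intro z
    rw [tsum_mul_right]
    unfold F
    ring
  simp only [hsq]
  rw [MeasureTheory.integral_tsum]
  · have hM : (0:ℝ) ≤ ∑' n, |C r h x n| := tsum_nonneg fun n => abs_nonneg _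
    have hval : ∀ n, (∫ z in Set.Ioc (0:ℝ) 1, C r h x n * S n z * F r h x z)
        = C r h x n * (C r h x n * (1/2)) := by
      intro n
      simp only [mul_assoc]
      rw [MeasureTheory.integral_const_mul, integral_S_mul_F hr hh x n]
    simp only [hval]
    have hsum1 : Summable (fun n => C r h x n * (C r h x n * (1/2))) := by
      refine Summable.of_nonneg_of_le (fun n => by nlinarith [sq_nonneg (C r h x n)])
        (fun n => C_sq_le hr hh x n) ((d_sq_summable hr hh).mul_left 2)
    calc ∑' n, C r h x n * (C r h x n * (1/2))
        ≤ ∑' n, 2 * (A r n - A (r+h) n)^2 :=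
          Summable.tsum_le_tsum (fun n => C_sq_le hr hh x n) hsum1 ((d_sq_summable hr hh).mul_left 2)
      _ = 2 * ∑' n, (A r n - A (r+h) n)^2 := tsum_mul_left
  · intro n
    exact (((continuous_const.mul (Real.continuous_sin.comp
      (continuous_const.mul continuous_id))).mul (F_cont hr hh x)).aestronglyMeasurable).restrict
  · refine ne_of_lt (lt_of_le_of_lt (ENNReal.tsum_le_tsum (fun n =>
      lint_bound (K := |C r h x n| * (∑' m, |C r h x m|)) fun z => ?_)) ?_)
    · rw [abs_mul]
      refine mul_le_mul ?_ (F_abs_le hr hh x z) (abs_nonneg _) (abs_nonneg _)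
      rw [abs_mul]
      exact mul_le_of_le_one_right (abs_nonneg _) (S_abs_le n z)
    · have hs : Summable (fun n => |C r h x n| * (∑' m, |C r h x m|)) :=
        (C_abs_summable hr hh x).mul_right _
      have := ENNReal.ofReal_tsum_of_nonneg
        (fun n => mul_nonneg (abs_nonneg _) (tsum_nonneg fun m => abs_nonneg _)) hs
      rw [← this]
      exact ENNReal.ofReal_lt_top

lemma integral_exp_neg_Ioi_mul {b : ℝ} (hb : 0 < b) :
    ∫ r in Set.Ioi (0:ℝ), Real.exp (-(b*r)) = 1/b := by
  have hderiv : ∀ x ∈ Set.Ici (0:ℝ),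
      HasDerivAt (fun r => -Real.exp (-(b*r))/b) (Real.exp (-(b*x))) x := by
    intro x _
    have h1 : HasDerivAt (fun r : ℝ => -(b*r)) (-b) x := by
      simpa using (hasDerivAt_id x).const_mul (-b)
    have h2 := (Real.hasDerivAt_exp (-(b*x))).comp x h1
    have h3 := (h2.neg).div_const b
    simpa [mul_comm, mul_div_assoc, mul_div_cancel_left₀ _ hb.ne', neg_div] using h3
  have hint : IntegrableOn (fun r => Real.exp (-(b*r))) (Set.Ioi (0:ℝ)) := by
    simpa [neg_mul] using exp_neg_integrableOn_Ioi 0 hb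
  have htend : Filter.Tendsto (fun r => -Real.exp (-(b*r))/b) Filter.atTop (nhds 0) := by
    have h1 : Filter.Tendsto (fun r : ℝ => b*r) Filter.atTop Filter.atTop :=
      Filter.Tendsto.const_mul_atTop hb Filter.tendsto_id
    have h2 : Filter.Tendsto (fun r : ℝ => Real.exp (-(b*r))) Filter.atTop (nhds 0) := by
      have h3 := Real.tendsto_exp_neg_atTop_nhds_zero.comp h1
      simpa [Function.comp_def] using h3
    have := (h2.neg).div_const b
    simpa using this
  have := MeasureTheory.integral_Ioi_of_hasDerivAt_of_tendsto' hderiv hint htend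
  rw [this]
  simp [neg_div]

lemma d_sq_eq {r h : ℝ} (n : ℕ) :
    (A r n - A (r+h) n)^2
      = (1 - A h n)^2 * Real.exp (-((((n:ℝ)+1)^2*Real.pi^2) * r)) := by
  unfold A
  have s : Real.exp (-(((n:ℝ)+1)^2*Real.pi^2*r)/2) * Real.exp (-(((n:ℝ)+1)^2*Real.pi^2*r)/2)
      = Real.exp (-((((n:ℝ)+1)^2*Real.pi^2) * r)) := by
    rw [← Real.exp_add]; ring_nf
  have hsplit : Real.exp (-(((n:ℝ)+1)^2*Real.pi^2*(r+h))/2)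
      = Real.exp (-(((n:ℝ)+1)^2*Real.pi^2*r)/2) * Real.exp (-(((n:ℝ)+1)^2*Real.pi^2*h)/2) := by
    rw [← Real.exp_add]; ring_nf
  rw [hsplit]
  linear_combination (1 - Real.exp (-(((n:ℝ)+1)^2*Real.pi^2*h)/2))^2 * s

lemma d_sq_integrable {h : ℝ} (n : ℕ) :
    IntegrableOn (fun r => (A r n - A (r+h) n)^2) (Set.Ioi (0:ℝ)) := by
  have hb : (0:ℝ) < ((n:ℝ)+1)^2*Real.pi^2 := by positivity
  have : IntegrableOn (fun r => (1 - A h n)^2 *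
      Real.exp (-((((n:ℝ)+1)^2*Real.pi^2) * r))) (Set.Ioi (0:ℝ)) := by
    apply Integrable.const_mul
    exact (by simpa [neg_mul] using exp_neg_integrableOn_Ioi 0 hb :
      IntegrableOn (fun x => Real.exp (-((((n:ℝ)+1)^2*Real.pi^2) * x))) (Set.Ioi 0))
  exact this.congr_fun (fun r _ => (d_sq_eq n).symm) measurableSet_Ioi

lemma d_sq_integral {h : ℝ} (hh : 0 < h) (n : ℕ) :
    ∫ r in Set.Ioi (0:ℝ), (A r n - A (r+h) n)^2
      = (1 - A h n)^2 * (1/(((n:ℝ)+1)^2*Real.pi^2)) := by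
  have hb : (0:ℝ) < ((n:ℝ)+1)^2*Real.pi^2 := by positivity
  rw [MeasureTheory.setIntegral_congr_fun measurableSet_Ioi (fun r _ => d_sq_eq n)]
  rw [MeasureTheory.integral_const_mul, integral_exp_neg_Ioi_mul hb]

lemma d_sq_integral_le {h : ℝ} (hh : 0 < h) (n : ℕ) :
    ∫ r in Set.Ioi (0:ℝ), (A r n - A (r+h) n)^2
      ≤ min (1/(((n:ℝ)+1)^2*Real.pi^2)) (h/2) := by
  rw [d_sq_integral hh n]
  have hb : (0:ℝ) < ((n:ℝ)+1)^2*Real.pi^2 := by positivity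
  have hA1 : A h n ≤ 1 := A_le_one hh.le n
  have hA0 : 0 < A h n := A_pos h n
  have hexp : 1 - A h n ≤ ((n:ℝ)+1)^2*Real.pi^2*h/2 := by
    unfold A
    have := Real.add_one_le_exp (-(((n:ℝ)+1)^2*Real.pi^2*h)/2)
    linarith
  refine le_min ?_ ?_
  · have : (1 - A h n)^2 ≤ 1 := by nlinarith
    nlinarith [one_div_pos.2 hb]
  · have h1 : (1 - A h n)^2 ≤ 1 - A h n := by nlinarith
    have h2 : (1 - A h n)^2 * (1/(((n:ℝ)+1)^2*Real.pi^2))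
        ≤ (((n:ℝ)+1)^2*Real.pi^2*h/2) * (1/(((n:ℝ)+1)^2*Real.pi^2)) := by
      apply mul_le_mul_of_nonneg_right (by linarith) (by positivity)
    calc (1 - A h n)^2 * (1/(((n:ℝ)+1)^2*Real.pi^2))
        ≤ (((n:ℝ)+1)^2*Real.pi^2*h/2) * (1/(((n:ℝ)+1)^2*Real.pi^2)) := h2
      _ = h/2 := by field_simp

lemma tele_hasSum {N : ℕ} (hN : 0 < N) :
    HasSum (fun n : ℕ => (1:ℝ)/(((n:ℕ):ℝ)+N) - 1/(((n:ℕ):ℝ)+N+1)) (1/N) := by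
  have hnn : ∀ n : ℕ, (0:ℝ) ≤ 1/(((n:ℕ):ℝ)+N) - 1/(((n:ℕ):ℝ)+N+1) := by
    intro n
    have h1 : (0:ℝ) < (n:ℝ)+N := by positivity
    have h2 : (0:ℝ) < (n:ℝ)+N+1 := by positivity
    rw [sub_nonneg]
    apply one_div_le_one_div_of_le h1
    linarith
  rw [hasSum_iff_tendsto_nat_of_nonneg hnn]
  have hsum : ∀ K : ℕ, ∑ i ∈ Finset.range K, ((1:ℝ)/(((i:ℕ):ℝ)+N) - 1/(((i:ℕ):ℝ)+N+1))
      = 1/N - 1/((K:ℝ)+N) := by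
    intro K
    have heq := Finset.sum_range_sub' (f := fun i : ℕ => (1:ℝ)/((i:ℝ)+N)) K
    have : ∑ i ∈ Finset.range K, ((1:ℝ)/(((i:ℕ):ℝ)+N) - 1/(((i:ℕ):ℝ)+N+1))
        = ∑ i ∈ Finset.range K, ((1:ℝ)/((i:ℝ)+N) - 1/(((i+1:ℕ):ℝ)+N)) := by
      refine Finset.sum_congr rfl fun i _ => ?_
      push_cast
      ring_nf
    rw [this, heq]
    norm_num
  simp only [hsum]
  have h1 : Filter.Tendsto (fun K : ℕ => (K:ℝ)+N) Filter.atTop Filter.atTop :=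
    Filter.tendsto_atTop_add_const_right _ _ tendsto_natCast_atTop_atTop
  have h2 : Filter.Tendsto (fun K : ℕ => 1/((K:ℝ)+N)) Filter.atTop (nhds 0) := by
    simpa [one_div, Pi.inv_def] using h1.inv_tendsto_atTop
  have h3 := (tendsto_const_nhds (x := (1:ℝ)/N) (f := Filter.atTop (α := ℕ))).sub h2
  simpa using h3

lemma tele_one_hasSum :
    HasSum (fun n : ℕ => (1:ℝ)/((n:ℝ)+1) - 1/((n:ℝ)+1+1)) 1 := by
  have := tele_hasSum (N := 1) one_pos
  simpa using this

lemma pi_sq_ge_one : (1:ℝ) ≤ Real.pi^2 := by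
  nlinarith [Real.pi_gt_three]

lemma invsq_le_tele (n : ℕ) :
    1/(((n:ℝ)+1)^2*Real.pi^2) ≤ 2 * ((1:ℝ)/((n:ℝ)+1) - 1/((n:ℝ)+1+1)) := by
  have h1 : (0:ℝ) < (n:ℝ)+1 := by positivity
  have h2 : (0:ℝ) < (n:ℝ)+1+1 := by positivity
  have he : (1:ℝ)/((n:ℝ)+1) - 1/((n:ℝ)+1+1) = 1/(((n:ℝ)+1)*((n:ℝ)+1+1)) := by
    field_simp
    ring
  rw [he, mul_one_div, div_le_div_iff₀ (by positivity) (by positivity)]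
  nlinarith [pi_sq_ge_one, sq_nonneg ((n:ℝ)+1)]

lemma min_summable {h : ℝ} (hh : 0 < h) :
    Summable (fun n : ℕ => min (1/(((n:ℝ)+1)^2*Real.pi^2)) (h/2)) := by
  refine Summable.of_nonneg_of_le (fun n => le_min (by positivity) (by positivity))
    (fun n => le_trans (min_le_left _ _) (invsq_le_tele n)) ?_
  exact (tele_one_hasSum.summable).mul_left 2

lemma invsq_summable : Summable (fun n : ℕ => 1/(((n:ℝ)+1)^2*Real.pi^2)) := by
  refine Summable.of_nonneg_of_le (fun n => by positivity) invsq_le_tele ?_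
  exact (tele_one_hasSum.summable).mul_left 2

lemma sum_min_le {h : ℝ} (hh : 0 < h) :
    ∑' n : ℕ, min (1/(((n:ℝ)+1)^2*Real.pi^2)) (h/2) ≤ 2 * Real.sqrt h := by
  have hsq0 : 0 < Real.sqrt h := Real.sqrt_pos.2 hh
  by_cases h1 : 1 ≤ h
  · have hsq1 : 1 ≤ Real.sqrt h := by
      rw [show (1:ℝ) = Real.sqrt 1 from (Real.sqrt_one).symm]
      exact Real.sqrt_le_sqrt h1
    calc ∑' n : ℕ, min (1/(((n:ℝ)+1)^2*Real.pi^2)) (h/2)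
        ≤ ∑' n : ℕ, 2 * ((1:ℝ)/((n:ℝ)+1) - 1/((n:ℝ)+1+1)) := by
          refine Summable.tsum_le_tsum (fun n => le_trans (min_le_left _ _) (invsq_le_tele n))
            (min_summable hh) ((tele_one_hasSum.summable).mul_left 2)
      _ = 2 := by rw [(tele_one_hasSum.mul_left 2).tsum_eq]; norm_num
      _ ≤ 2 * Real.sqrt h := by nlinarith
  · push_neg at h1
    have hsqle1 : Real.sqrt h ≤ 1 := by
      rw [show (1:ℝ) = Real.sqrt 1 from (Real.sqrt_one).symm]
      exact Real.sqrt_le_sqrt h1.le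
    set N : ℕ := ⌈(Real.sqrt h)⁻¹⌉₊ with hN
    have hinv1 : (1:ℝ) ≤ (Real.sqrt h)⁻¹ := by
      rw [le_inv_comm₀ one_pos hsq0]
      simpa using hsqle1
    have hNpos : 0 < N := Nat.ceil_pos.2 (by positivity)
    have hNge : (Real.sqrt h)⁻¹ ≤ (N:ℝ) := Nat.le_ceil _
    have hNle : (N:ℝ) ≤ 2/Real.sqrt h := by
      have := Nat.ceil_lt_add_one (by positivity : (0:ℝ) ≤ (Real.sqrt h)⁻¹)
      have h2 : (N:ℝ) < (Real.sqrt h)⁻¹ + 1 := this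
      rw [div_eq_mul_inv]
      linarith
    rw [← Summable.sum_add_tsum_nat_add N (min_summable hh)]
    have hfirst : ∑ i ∈ Finset.range N, min (1/(((i:ℝ)+1)^2*Real.pi^2)) (h/2)
        ≤ Real.sqrt h := by
      calc ∑ i ∈ Finset.range N, min (1/(((i:ℝ)+1)^2*Real.pi^2)) (h/2)
          ≤ ∑ _i ∈ Finset.range N, h/2 :=
            Finset.sum_le_sum (fun i _ => min_le_right _ _)
        _ = (N:ℝ) * (h/2) := by rw [Finset.sum_const, Finset.card_range]; ring
        _ ≤ (2/Real.sqrt h) * (h/2) := by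
            apply mul_le_mul_of_nonneg_right hNle (by positivity)
        _ = h / Real.sqrt h := by ring
        _ = Real.sqrt h := Real.div_sqrt
    have hsecond : ∑' n : ℕ, min (1/((((n+N:ℕ):ℝ)+1)^2*Real.pi^2)) (h/2)
        ≤ Real.sqrt h := by
      have hcomp : ∀ n : ℕ, min (1/((((n+N:ℕ):ℝ)+1)^2*Real.pi^2)) (h/2)
          ≤ (1:ℝ)/((n:ℝ)+N) - 1/((n:ℝ)+N+1) := by
        intro n
        refine le_trans (min_le_left _ _) ?_
        have he : (1:ℝ)/((n:ℝ)+N) - 1/((n:ℝ)+N+1) = 1/(((n:ℝ)+N)*((n:ℝ)+N+1)) := by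
          have hp1 : (0:ℝ) < (n:ℝ)+N := by
            have : (1:ℝ) ≤ (N:ℝ) := by exact_mod_cast hNpos
            positivity
          field_simp
          ring
        rw [he]
        push_cast
        have hp1 : (0:ℝ) < (n:ℝ)+N := by
          have : (1:ℝ) ≤ (N:ℝ) := by exact_mod_cast hNpos
          linarith [Nat.cast_nonneg (α := ℝ) n]
        rw [div_le_div_iff₀ (by positivity) (by positivity)]
        nlinarith [pi_sq_ge_one, sq_nonneg ((n:ℝ)+N), Nat.cast_nonneg (α := ℝ) n]
      calc ∑' n : ℕ, min (1/((((n+N:ℕ):ℝ)+1)^2*Real.pi^2)) (h/2)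
          ≤ ∑' n : ℕ, ((1:ℝ)/((n:ℝ)+N) - 1/((n:ℝ)+N+1)) := by
            refine Summable.tsum_le_tsum hcomp ?_ (tele_hasSum hNpos).summable
            exact (min_summable hh).comp_injective (add_left_injective N)
        _ = 1/(N:ℝ) := (tele_hasSum hNpos).tsum_eq
        _ ≤ Real.sqrt h := by
            rw [div_le_iff₀ (by exact_mod_cast hNpos)]
            calc (1:ℝ) = (Real.sqrt h)⁻¹ * Real.sqrt h := by
                  rw [inv_mul_cancel₀ hsq0.ne']
              _ ≤ (N:ℝ) * Real.sqrt h := by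
                  apply mul_le_mul_of_nonneg_right hNge hsq0.le
              _ = Real.sqrt h * N := by ring
    linarith

noncomputable def B (h r : ℝ) : ℝ := 2 * ∑' n : ℕ, (A r n - A (r+h) n)^2

lemma d_cont (h : ℝ) (n : ℕ) : Continuous (fun r => (A r n - A (r+h) n)^2) := by
  unfold A
  fun_prop

lemma B_nonneg (h r : ℝ) : 0 ≤ B h r :=
  mul_nonneg (by norm_num) (tsum_nonneg fun n => sq_nonneg _)

lemma B_meas_aux (h : ℝ) : Measurable (fun r =>
    2 * (∑' n : ℕ, ENNReal.ofReal ((A r n - A (r+h) n)^2)).toReal) := by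
  apply Measurable.const_mul
  apply Measurable.ennreal_toReal
  apply Measurable.ennreal_tsum
  intro n
  exact (d_cont h n).measurable.ennreal_ofReal

lemma B_eq_aux {h r : ℝ} (hh : 0 < h) (hr : 0 < r) :
    B h r = 2 * (∑' n : ℕ, ENNReal.ofReal ((A r n - A (r+h) n)^2)).toReal := by
  unfold B
  congr 1
  rw [← ENNReal.ofReal_tsum_of_nonneg (fun n => sq_nonneg _) (d_sq_summable hr hh)]
  rw [ENNReal.toReal_ofReal (tsum_nonneg fun n => sq_nonneg _)]

lemma lint_d_sq_eq {h : ℝ} (hh : 0 < h) (n : ℕ) :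
    ∫⁻ r in Set.Ioi (0:ℝ), ENNReal.ofReal ((A r n - A (r+h) n)^2)
      = ENNReal.ofReal (∫ r in Set.Ioi (0:ℝ), (A r n - A (r+h) n)^2) :=
  (MeasureTheory.ofReal_integral_eq_lintegral_ofReal (d_sq_integrable n)
    (ae_of_all _ fun r => sq_nonneg _)).symm

lemma lint_sum_ne_top {h : ℝ} (hh : 0 < h) :
    ∑' n : ℕ, ∫⁻ r in Set.Ioi (0:ℝ), ENNReal.ofReal ((A r n - A (r+h) n)^2) ≠ ⊤ := by
  have hle : ∀ n : ℕ, ∫⁻ r in Set.Ioi (0:ℝ), ENNReal.ofReal ((A r n - A (r+h) n)^2)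
      ≤ ENNReal.ofReal (min (1/(((n:ℝ)+1)^2*Real.pi^2)) (h/2)) := fun n =>
    (le_of_eq (lint_d_sq_eq hh n)).trans (ENNReal.ofReal_le_ofReal (d_sq_integral_le hh n))
  refine ne_of_lt (lt_of_le_of_lt (ENNReal.tsum_le_tsum hle) ?_)
  rw [← ENNReal.ofReal_tsum_of_nonneg
    (fun n => le_min (by positivity) (by positivity)) (min_summable hh)]
  exact ENNReal.ofReal_lt_top

lemma B_integrable {h : ℝ} (hh : 0 < h) : IntegrableOn (B h) (Set.Ioi (0:ℝ)) := by
  constructor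
  · refine ((B_meas_aux h).aestronglyMeasurable).congr ?_
    rw [Filter.EventuallyEq, ae_restrict_iff' measurableSet_Ioi]
    exact ae_of_all _ fun r hr => (B_eq_aux hh hr).symm
  · rw [hasFiniteIntegral_iff_norm]
    have key : ∀ᵐ r ∂(volume.restrict (Set.Ioi (0:ℝ))),
        ENNReal.ofReal ‖B h r‖ = ENNReal.ofReal 2 *
          ∑' n : ℕ, ENNReal.ofReal ((A r n - A (r+h) n)^2) := by
      rw [ae_restrict_iff' measurableSet_Ioi]
      refine ae_of_all _ fun r hr => ?_
      rw [Real.norm_eq_abs, abs_of_nonneg (B_nonneg h r)]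
      unfold B
      rw [ENNReal.ofReal_mul (by norm_num),
        ENNReal.ofReal_tsum_of_nonneg (fun n => sq_nonneg _) (d_sq_summable hr hh)]
    rw [lintegral_congr_ae key, lintegral_const_mul]
    · rw [lintegral_tsum (fun n => ((d_cont h n).measurable.ennreal_ofReal).aemeasurable)]
      exact ENNReal.mul_lt_top ENNReal.ofReal_lt_top (lint_sum_ne_top hh).lt_top
    · exact Measurable.ennreal_tsum fun n => (d_cont h n).measurable.ennreal_ofReal

lemma B_integral_le {h : ℝ} (hh : 0 < h) :
    ∫ r in Set.Ioi (0:ℝ), B h r ≤ 4 * Real.sqrt h := by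
  unfold B
  rw [MeasureTheory.integral_const_mul]
  have heq : ∫ r in Set.Ioi (0:ℝ), ∑' n : ℕ, (A r n - A (r+h) n)^2
      = ∑' n : ℕ, ∫ r in Set.Ioi (0:ℝ), (A r n - A (r+h) n)^2 := by
    refine MeasureTheory.integral_tsum (fun n => ((d_cont h n).aestronglyMeasurable).restrict) ?_
    have : ∀ n : ℕ, ∫⁻ r in Set.Ioi (0:ℝ), ‖(A r n - A (r+h) n)^2‖₊
        = ∫⁻ r in Set.Ioi (0:ℝ), ENNReal.ofReal ((A r n - A (r+h) n)^2) := by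
      intro n
      refine lintegral_congr fun r => ?_
      rw [← enorm_eq_nnnorm, ← ofReal_norm, Real.norm_eq_abs, abs_of_nonneg (sq_nonneg _)]
    simp only [enorm_eq_nnnorm, this]
    exact lint_sum_ne_top hh
  rw [heq]
  have hsum_le : ∑' n : ℕ, ∫ r in Set.Ioi (0:ℝ), (A r n - A (r+h) n)^2
      ≤ ∑' n : ℕ, min (1/(((n:ℝ)+1)^2*Real.pi^2)) (h/2) := by
    refine Summable.tsum_le_tsum (fun n => d_sq_integral_le hh n) ?_ (min_summable hh)
    refine Summable.of_nonneg_of_le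
      (fun n => MeasureTheory.integral_nonneg fun r => sq_nonneg _)
      (fun n => d_sq_integral_le hh n) (min_summable hh)
  have := sum_min_le hh
  linarith

end HKaux

theorem stmt_5 :
    ∃ C > (0:ℝ), ∀ h > (0:ℝ),
      (∫ r in Set.Ioi (0:ℝ),
        ⨆ x ∈ Set.Icc (0:ℝ) 1,
          ∫ z in (0:ℝ)..1, (heatKernel (r + h) x z - heatKernel r x z) ^ 2)
        ≤ C * Real.sqrt h := by
  refine ⟨4, by norm_num, fun h hh => ?_⟩
  have hmono : (∫ r in Set.Ioi (0:ℝ),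
      ⨆ x ∈ Set.Icc (0:ℝ) 1,
        ∫ z in (0:ℝ)..1, (heatKernel (r + h) x z - heatKernel r x z) ^ 2)
      ≤ ∫ r in Set.Ioi (0:ℝ), HKaux.B h r := by
    refine MeasureTheory.integral_mono_of_nonneg ?_ (HKaux.B_integrable hh) ?_
    · refine ae_of_all _ fun r => ?_
      refine Real.iSup_nonneg fun x => Real.iSup_nonneg fun _ => ?_
      exact intervalIntegral.integral_nonneg zero_le_one fun z _ => sq_nonneg _
    · rw [Filter.EventuallyLE, ae_restrict_iff' measurableSet_Ioi]
      refine ae_of_all _ fun r hr => ?_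
      refine Real.iSup_le (fun x => Real.iSup_le (fun _ => ?_) (HKaux.B_nonneg h r))
        (HKaux.B_nonneg h r)
      exact HKaux.inner_bound hr hh x
  exact hmono.trans (HKaux.B_integral_le hh)
end

section
/- There exists a constant C > 0 such that for all x, y ∈ [0,1] with x ≠ y, ∫₀^∞ ( sup_{z∈[0,1]} | p_t(x,z) − p_t(y,z) | ) dt ≤ C·|x−y| + C·|x−y|·log(1/|x−y|). -/
open MeasureTheory Set Finset

noncomputable def hkT (n : ℕ) (t : ℝ) : ℝ :=
  Real.exp (-(((n : ℝ) + 1) ^ 2 * Real.pi ^ 2 * t) / 2)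

lemma hkT_pos (n : ℕ) (t : ℝ) : 0 < hkT n t := Real.exp_pos _

lemma hkT_le_geom {t : ℝ} (ht : 0 < t) (n : ℕ) :
    hkT n t ≤ Real.exp (-(Real.pi ^ 2 * t / 2)) ^ n := by
  rw [← Real.exp_nat_mul]
  apply Real.exp_le_exp.mpr
  have hπ : (0:ℝ) < Real.pi ^ 2 := by positivity
  have h1 : (n : ℝ) ≤ ((n : ℝ) + 1) ^ 2 := by nlinarith [Nat.cast_nonneg (α := ℝ) n]
  have := mul_le_mul_of_nonneg_right h1 (by positivity : (0:ℝ) ≤ Real.pi ^ 2 * t / 2)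
  nlinarith [this]

lemma summable_hkT {t : ℝ} (ht : 0 < t) : Summable (fun n => hkT n t) := by
  refine Summable.of_nonneg_of_le (fun n => (hkT_pos n t).le) (hkT_le_geom ht) ?_
  refine summable_geometric_of_lt_one (Real.exp_pos _).le ?_
  rw [Real.exp_lt_one_iff]
  have : (0:ℝ) < Real.pi ^ 2 * t / 2 := by positivity
  linarith


noncomputable def gB (d : ℝ) (n : ℕ) (t : ℝ) : ℝ :=
  (2 * min 2 (((n : ℝ) + 1) * Real.pi * d)) * hkT n t

lemma gB_nonneg {d : ℝ} (hd : 0 ≤ d) (n : ℕ) (t : ℝ) : 0 ≤ gB d n t := by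
  have h1 : 0 ≤ min 2 (((n : ℝ) + 1) * Real.pi * d) :=
    le_min (by norm_num) (by positivity)
  have := (hkT_pos n t).le
  unfold gB; positivity

lemma gB_le {d : ℝ} (hd : 0 ≤ d) (n : ℕ) (t : ℝ) : gB d n t ≤ 4 * hkT n t := by
  unfold gB
  have := (hkT_pos n t).le
  have h1 : min 2 (((n : ℝ) + 1) * Real.pi * d) ≤ 2 := min_le_left _ _
  nlinarith

lemma summable_gB {d : ℝ} (hd : 0 ≤ d) {t : ℝ} (ht : 0 < t) :
    Summable (fun n => gB d n t) :=
  Summable.of_nonneg_of_le (fun n => gB_nonneg hd n t) (fun n => gB_le hd n t)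
    ((summable_hkT ht).mul_left 4)

lemma summable_term {t : ℝ} (ht : 0 < t) (x z : ℝ) :
    Summable (fun n : ℕ => Real.exp (-(((n : ℝ) + 1) ^ 2 * Real.pi ^ 2 * t) / 2) *
      (Real.sqrt 2 * Real.sin (((n : ℝ) + 1) * Real.pi * x)) *
      (Real.sqrt 2 * Real.sin (((n : ℝ) + 1) * Real.pi * z))) := by
  refine Summable.of_norm_bounded ((summable_hkT ht).mul_left 2) ?_
  intro n
  have hs2 : Real.sqrt 2 * Real.sqrt 2 = 2 := Real.mul_self_sqrt (by norm_num)
  have h1 : |Real.sqrt 2 * Real.sin (((n : ℝ) + 1) * Real.pi * x)| ≤ Real.sqrt 2 := by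
    rw [abs_mul, abs_of_nonneg (Real.sqrt_nonneg 2)]
    nlinarith [Real.abs_sin_le_one (((n : ℝ) + 1) * Real.pi * x), Real.sqrt_nonneg 2]
  have h2 : |Real.sqrt 2 * Real.sin (((n : ℝ) + 1) * Real.pi * z)| ≤ Real.sqrt 2 := by
    rw [abs_mul, abs_of_nonneg (Real.sqrt_nonneg 2)]
    nlinarith [Real.abs_sin_le_one (((n : ℝ) + 1) * Real.pi * z), Real.sqrt_nonneg 2]
  rw [Real.norm_eq_abs, abs_mul, abs_mul]
  have he : |Real.exp (-(((n : ℝ) + 1) ^ 2 * Real.pi ^ 2 * t) / 2)| = hkT n t := by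
    rw [abs_of_pos (Real.exp_pos _)]; rfl
  rw [he]
  have hk := (hkT_pos n t).le
  calc hkT n t * |Real.sqrt 2 * Real.sin (((n : ℝ) + 1) * Real.pi * x)| *
        |Real.sqrt 2 * Real.sin (((n : ℝ) + 1) * Real.pi * z)|
      ≤ hkT n t * Real.sqrt 2 * Real.sqrt 2 := by gcongr <;> positivity
    _ = 2 * hkT n t := by rw [mul_assoc, hs2]; ring

lemma key_bound {t : ℝ} (ht : 0 < t) (x y z : ℝ) :
    |heatKernel t x z - heatKernel t y z| ≤ ∑' n, gB (|x - y|) n t := by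
  have hd : (0:ℝ) ≤ |x - y| := abs_nonneg _
  have hu := summable_term ht x z
  have hv := summable_term ht y z
  rw [heatKernel, heatKernel, ← Summable.tsum_sub hu hv]
  have habs : ∀ n : ℕ,
      ‖(Real.exp (-(((n : ℝ) + 1) ^ 2 * Real.pi ^ 2 * t) / 2) *
        (Real.sqrt 2 * Real.sin (((n : ℝ) + 1) * Real.pi * x)) *
        (Real.sqrt 2 * Real.sin (((n : ℝ) + 1) * Real.pi * z))) -
        (Real.exp (-(((n : ℝ) + 1) ^ 2 * Real.pi ^ 2 * t) / 2) *
        (Real.sqrt 2 * Real.sin (((n : ℝ) + 1) * Real.pi * y)) *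
        (Real.sqrt 2 * Real.sin (((n : ℝ) + 1) * Real.pi * z)))‖ ≤ gB (|x - y|) n t := by
    intro n
    set a : ℝ := ((n : ℝ) + 1) * Real.pi with ha
    have ha0 : 0 < a := by positivity
    have hs2 : Real.sqrt 2 * Real.sqrt 2 = 2 := Real.mul_self_sqrt (by norm_num)
    have hk := (hkT_pos n t).le
    have hdiff : (Real.exp (-(((n : ℝ) + 1) ^ 2 * Real.pi ^ 2 * t) / 2) *
        (Real.sqrt 2 * Real.sin (a * x)) * (Real.sqrt 2 * Real.sin (a * z))) -
        (Real.exp (-(((n : ℝ) + 1) ^ 2 * Real.pi ^ 2 * t) / 2) *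
        (Real.sqrt 2 * Real.sin (a * y)) * (Real.sqrt 2 * Real.sin (a * z)))
        = hkT n t * 2 * ((Real.sin (a * x) - Real.sin (a * y)) * Real.sin (a * z)) := by
      calc Real.exp (-(((n : ℝ) + 1) ^ 2 * Real.pi ^ 2 * t) / 2) *
            (Real.sqrt 2 * Real.sin (a * x)) * (Real.sqrt 2 * Real.sin (a * z)) -
            Real.exp (-(((n : ℝ) + 1) ^ 2 * Real.pi ^ 2 * t) / 2) *
            (Real.sqrt 2 * Real.sin (a * y)) * (Real.sqrt 2 * Real.sin (a * z))
          = (Real.sqrt 2 * Real.sqrt 2) * (Real.exp (-(((n : ℝ) + 1) ^ 2 * Real.pi ^ 2 * t) / 2) *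
            ((Real.sin (a * x) - Real.sin (a * y)) * Real.sin (a * z))) := by ring
        _ = hkT n t * 2 * ((Real.sin (a * x) - Real.sin (a * y)) * Real.sin (a * z)) := by
            rw [hs2, hkT]; ring
    have hsinlip : |Real.sin (a * x) - Real.sin (a * y)| ≤ min 2 (a * |x - y|) := by
      refine le_min ?_ ?_
      · have := Real.abs_sin_le_one (a * x); have := Real.abs_sin_le_one (a * y)
        calc |Real.sin (a * x) - Real.sin (a * y)|
            ≤ |Real.sin (a * x)| + |Real.sin (a * y)| := abs_sub _ _
          _ ≤ 2 := by linarith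
      · rw [Real.sin_sub_sin]
        have h1 : |Real.sin ((a * x - a * y) / 2)| ≤ |(a * x - a * y) / 2| :=
          Real.abs_sin_le_abs
        have h2 : |Real.cos ((a * x + a * y) / 2)| ≤ 1 := Real.abs_cos_le_one _
        calc |2 * Real.sin ((a * x - a * y) / 2) * Real.cos ((a * x + a * y) / 2)|
            = 2 * |Real.sin ((a * x - a * y) / 2)| * |Real.cos ((a * x + a * y) / 2)| := by
              rw [abs_mul, abs_mul]; norm_num
          _ ≤ 2 * |(a * x - a * y) / 2| * 1 := by gcongr
          _ = a * |x - y| := by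
              rw [mul_one, abs_div, abs_two, ← mul_sub, abs_mul, abs_of_pos ha0]; ring
    rw [hdiff, Real.norm_eq_abs, abs_mul, abs_mul, abs_mul]
    rw [abs_of_nonneg hk]
    have hz := Real.abs_sin_le_one (a * z)
    have hm0 : 0 ≤ min 2 (a * |x - y|) := le_min (by norm_num) (by positivity)
    calc hkT n t * |2| * (|Real.sin (a * x) - Real.sin (a * y)| * |Real.sin (a * z)|)
        = hkT n t * 2 * (|Real.sin (a * x) - Real.sin (a * y)| * |Real.sin (a * z)|) := by
          norm_num
      _ ≤ hkT n t * 2 * (min 2 (a * |x - y|) * 1) := by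
          gcongr
      _ = gB (|x - y|) n t := by rw [gB]; ring
  calc |∑' n, _| ≤ _ := by
        refine norm_tsum_le_tsum_norm ?_ |>.trans (Summable.tsum_le_tsum habs ?_ (summable_gB hd ht))
        · exact (hu.sub hv).abs
        · exact (hu.sub hv).abs


lemma hkT_eq (n : ℕ) (t : ℝ) :
    hkT n t = Real.exp (-((((n : ℝ) + 1) ^ 2 * Real.pi ^ 2 / 2) * t)) := by
  rw [hkT]; ring_nf

lemma bpos (n : ℕ) : 0 < ((n : ℝ) + 1) ^ 2 * Real.pi ^ 2 / 2 := by positivity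

lemma integrableOn_hkT (n : ℕ) : IntegrableOn (hkT n) (Ioi (0:ℝ)) := by
  have h : IntegrableOn (fun t : ℝ => Real.exp (-(((n : ℝ) + 1) ^ 2 * Real.pi ^ 2 / 2) * t))
      (Ioi (0:ℝ)) := exp_neg_integrableOn_Ioi 0 (bpos n)
  refine h.congr_fun (fun t _ => ?_) measurableSet_Ioi
  rw [hkT_eq]; ring_nf

lemma integral_hkT (n : ℕ) :
    ∫ t in Ioi (0:ℝ), hkT n t = 2 / (((n : ℝ) + 1) ^ 2 * Real.pi ^ 2) := by
  have hb := bpos n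
  set b : ℝ := ((n : ℝ) + 1) ^ 2 * Real.pi ^ 2 / 2 with hbdef
  have h1 : ∫ t in Ioi (0:ℝ), hkT n t = ∫ t in Ioi (0:ℝ), Real.exp (-(b * t)) :=
    setIntegral_congr_fun measurableSet_Ioi (fun t _ => hkT_eq n t)
  rw [h1]
  have h2 := integral_comp_mul_left_Ioi (fun u : ℝ => Real.exp (-u)) 0 hb
  simp only [mul_zero] at h2
  rw [h2, integral_exp_neg_Ioi, neg_zero, Real.exp_zero, smul_eq_mul, mul_one]
  rw [hbdef]
  field_simp

lemma integrableOn_tsum_Ioi {F : ℕ → ℝ → ℝ}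
    (hc : ∀ n, Continuous (F n)) (h0 : ∀ n t, 0 ≤ F n t)
    (hs : ∀ t : ℝ, 0 < t → Summable fun n => F n t)
    (hint : ∀ n, IntegrableOn (F n) (Ioi 0))
    (hsum : Summable fun n => ∫ t in Ioi (0:ℝ), F n t) :
    IntegrableOn (fun t => ∑' n, F n t) (Ioi (0:ℝ)) := by
  constructor
  · refine aestronglyMeasurable_of_tendsto_ae
      (f := fun (N : ℕ) (t : ℝ) => ∑ n ∈ Finset.range N, F n t) (Filter.atTop : Filter ℕ)
      (fun N => ?_) ?_
    · exact (continuous_finset_sum (Finset.range N) fun n _ => hc n).aestronglyMeasurable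
    · rw [ae_restrict_iff' measurableSet_Ioi]
      filter_upwards with t ht
      exact (hs t ht).hasSum.tendsto_sum_nat
  · have h1 : ∀ᵐ t ∂(volume.restrict (Ioi (0:ℝ))),
        (‖∑' n, F n t‖₊ : ENNReal) = ∑' n, ENNReal.ofReal (F n t) := by
      rw [ae_restrict_iff' measurableSet_Ioi]
      filter_upwards with t ht
      rw [← ENNReal.ofReal_tsum_of_nonneg (fun n => h0 n t) (hs t ht)]
      rw [← Real.enorm_eq_ofReal (tsum_nonneg (fun n => h0 n t))]
      rfl
    rw [HasFiniteIntegral]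
    calc ∫⁻ t in Ioi (0:ℝ), (‖∑' n, F n t‖₊ : ENNReal)
        = ∫⁻ t in Ioi (0:ℝ), ∑' n, ENNReal.ofReal (F n t) := lintegral_congr_ae h1
      _ = ∑' n, ∫⁻ t in Ioi (0:ℝ), ENNReal.ofReal (F n t) :=
          lintegral_tsum (fun n => ((hc n).measurable.ennreal_ofReal).aemeasurable)
      _ = ∑' n, ENNReal.ofReal (∫ t in Ioi (0:ℝ), F n t) := by
          refine tsum_congr (fun n => ?_)
          rw [← ofReal_integral_eq_lintegral_ofReal (hint n)
            (Filter.Eventually.of_forall (fun t => h0 n t))]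
      _ = ENNReal.ofReal (∑' n, ∫ t in Ioi (0:ℝ), F n t) :=
          (ENNReal.ofReal_tsum_of_nonneg (fun n => integral_nonneg (fun t => h0 n t)) hsum).symm
      _ < ⊤ := ENNReal.ofReal_lt_top

lemma integral_tsum_Ioi {F : ℕ → ℝ → ℝ}
    (h0 : ∀ n t, 0 ≤ F n t)
    (hint : ∀ n, IntegrableOn (F n) (Ioi 0))
    (hsum : Summable fun n => ∫ t in Ioi (0:ℝ), F n t) :
    ∫ t in Ioi (0:ℝ), ∑' n, F n t = ∑' n, ∫ t in Ioi (0:ℝ), F n t := by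
  refine (integral_tsum_of_summable_integral_norm hint ?_).symm
  refine hsum.congr (fun n => ?_)
  refine integral_congr_ae (Filter.Eventually.of_forall (fun t => ?_))
  show F n t = ‖F n t‖
  rw [Real.norm_eq_abs, abs_of_nonneg (h0 n t)]

lemma base_summable : Summable (fun n : ℕ => 1 / ((n : ℝ) + 1) ^ 2) := by
  have h := Real.summable_one_div_nat_pow.mpr (by norm_num : 1 < 2)
  have h2 := (summable_nat_add_iff 1).mpr h
  refine h2.congr (fun n => ?_)
  push_cast
  ring

lemma tail_sq_le {N : ℕ} (hN : 1 ≤ N) :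
    ∑' n : ℕ, 1 / ((n : ℝ) + (N : ℝ) + 1) ^ 2 ≤ 1 / (N : ℝ) := by
  have hN0 : (0:ℝ) < N := by exact_mod_cast hN
  refine Real.tsum_le_of_sum_range_le (fun n => by positivity) (fun M => ?_)
  have h1 : ∀ n : ℕ, 1 / ((n : ℝ) + (N : ℝ) + 1) ^ 2 ≤
      1 / ((n : ℝ) + (N : ℝ)) - 1 / ((n : ℝ) + (N : ℝ) + 1) := by
    intro n
    have hc : (1:ℝ) ≤ (n : ℝ) + (N : ℝ) := by
      have h01 : (0:ℝ) ≤ (n : ℝ) := Nat.cast_nonneg n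
      have h02 : (1:ℝ) ≤ (N : ℝ) := by exact_mod_cast hN
      linarith
    have hc0 : (0:ℝ) < (n : ℝ) + (N : ℝ) := by linarith
    have hc1 : (0:ℝ) < (n : ℝ) + (N : ℝ) + 1 := by linarith
    rw [div_sub_div _ _ (ne_of_gt hc0) (ne_of_gt hc1)]
    rw [div_le_div_iff₀ (by positivity) (by positivity)]
    ring_nf
    nlinarith
  calc ∑ n ∈ range M, 1 / ((n : ℝ) + (N : ℝ) + 1) ^ 2
      ≤ ∑ n ∈ range M, (1 / ((n : ℝ) + (N : ℝ)) - 1 / ((n : ℝ) + (N : ℝ) + 1)) :=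
        Finset.sum_le_sum (fun n _ => h1 n)
    _ = 1 / ((0 : ℕ) + (N : ℝ)) - 1 / ((M : ℝ) + (N : ℝ)) := by
        have := Finset.sum_range_sub' (f := fun i : ℕ => 1 / ((i : ℝ) + (N : ℝ))) M
        rw [← this]
        refine Finset.sum_congr rfl (fun i _ => ?_)
        push_cast
        ring
    _ ≤ 1 / (N : ℝ) := by
        have hM : (0:ℝ) ≤ (M : ℝ) := Nat.cast_nonneg M
        have : (0:ℝ) < (M : ℝ) + (N : ℝ) := by linarith
        simp only [Nat.cast_zero, zero_add]
        have : 0 ≤ 1 / ((M : ℝ) + (N : ℝ)) := by positivity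
        linarith

lemma harmonic_sum_le (N : ℕ) :
    ∑ i ∈ range N, 1 / ((i : ℝ) + 1) ≤ 1 + Real.log N := by
  have h1 : ∑ i ∈ range N, 1 / ((i : ℝ) + 1) = ((harmonic N : ℚ) : ℝ) := by
    rw [harmonic]
    push_cast
    refine Finset.sum_congr rfl (fun i _ => ?_)
    rw [one_div]
  rw [h1]
  exact_mod_cast harmonic_le_one_add_log N

lemma series_summable {d : ℝ} (hd0 : 0 ≤ d) :
    Summable (fun n : ℕ =>
      (2 * min 2 (((n : ℝ) + 1) * Real.pi * d)) * (2 / (((n : ℝ) + 1) ^ 2 * Real.pi ^ 2))) := by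
  refine Summable.of_nonneg_of_le (fun n => ?_) (fun n => ?_)
    ((base_summable.mul_left (8 / Real.pi ^ 2)))
  · have h1 : 0 ≤ min 2 (((n : ℝ) + 1) * Real.pi * d) := le_min (by norm_num) (by positivity)
    positivity
  · have h1 : min 2 (((n : ℝ) + 1) * Real.pi * d) ≤ 2 := min_le_left _ _
    have h2 : (0:ℝ) < ((n : ℝ) + 1) ^ 2 * Real.pi ^ 2 := by positivity
    calc (2 * min 2 (((n : ℝ) + 1) * Real.pi * d)) * (2 / (((n : ℝ) + 1) ^ 2 * Real.pi ^ 2))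
        ≤ (2 * 2) * (2 / (((n : ℝ) + 1) ^ 2 * Real.pi ^ 2)) := by
          gcongr
      _ = 8 / Real.pi ^ 2 * (1 / ((n : ℝ) + 1) ^ 2) := by
          field_simp
          ring

lemma sum_bound {d : ℝ} (hd0 : 0 < d) (hd1 : d ≤ 1) :
    ∑' n : ℕ, (2 * min 2 (((n : ℝ) + 1) * Real.pi * d)) * (2 / (((n : ℝ) + 1) ^ 2 * Real.pi ^ 2))
      ≤ 10 * d + 10 * d * Real.log (1 / d) := by
  have hπ := Real.pi_gt_three
  have hπ0 : (0:ℝ) < Real.pi := by linarith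
  set f : ℕ → ℝ := fun n =>
    (2 * min 2 (((n : ℝ) + 1) * Real.pi * d)) * (2 / (((n : ℝ) + 1) ^ 2 * Real.pi ^ 2)) with hf
  have hsummf := series_summable hd0.le
  set N : ℕ := ⌈1 / d⌉₊ with hNdef
  have hdinv : (1:ℝ) ≤ 1 / d := by
    rw [le_div_iff₀ hd0]; linarith
  have hN1 : 1 ≤ N := by
    rw [hNdef]
    exact_mod_cast Nat.one_le_ceil_iff.mpr (by linarith)
  have hNge : 1 / d ≤ (N : ℝ) := Nat.le_ceil _
  have hNpos : (0:ℝ) < N := by linarith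
  have hNle : (N : ℝ) ≤ 2 / d := by
    have h : (N : ℝ) < 1 / d + 1 := Nat.ceil_lt_add_one (by positivity : (0:ℝ) ≤ 1 / d)
    have h2d : 2 / d = 2 * (1 / d) := by ring
    linarith
  -- split
  rw [← Summable.sum_add_tsum_nat_add N hsummf]
  -- head bound
  have hhead : ∑ i ∈ range N, f i ≤ 4 / Real.pi * d * (1 + Real.log N) := by
    have h1 : ∀ i ∈ range N, f i ≤ 4 / Real.pi * d * (1 / ((i : ℝ) + 1)) := by
      intro i _
      have hi1 : (0:ℝ) < (i : ℝ) + 1 := by positivity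
      calc f i ≤ (2 * (((i : ℝ) + 1) * Real.pi * d)) * (2 / (((i : ℝ) + 1) ^ 2 * Real.pi ^ 2)) := by
            simp only [hf]
            gcongr
            exact min_le_right _ _
        _ = 4 / Real.pi * d * (1 / ((i : ℝ) + 1)) := by
            field_simp
            ring
    calc ∑ i ∈ range N, f i ≤ ∑ i ∈ range N, 4 / Real.pi * d * (1 / ((i : ℝ) + 1)) :=
          Finset.sum_le_sum h1
      _ = 4 / Real.pi * d * ∑ i ∈ range N, 1 / ((i : ℝ) + 1) := by rw [Finset.mul_sum]
      _ ≤ 4 / Real.pi * d * (1 + Real.log N) :=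
          mul_le_mul_of_nonneg_left (harmonic_sum_le N) (by positivity)
  -- tail bound
  have htail : ∑' n : ℕ, f (n + N) ≤ 8 / Real.pi ^ 2 * d := by
    have hsumtail : Summable (fun n : ℕ => f (n + N)) := (summable_nat_add_iff N).mpr hsummf
    have h2 : ∀ n : ℕ, f (n + N) ≤ 8 / Real.pi ^ 2 * (1 / ((n : ℝ) + (N : ℝ) + 1) ^ 2) := by
      intro n
      have hc : (0:ℝ) < (n : ℝ) + (N : ℝ) + 1 := by positivity
      have hmin : min 2 ((((n + N : ℕ) : ℝ) + 1) * Real.pi * d) ≤ 2 := min_le_left _ _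
      calc f (n + N)
          ≤ (2 * 2) * (2 / ((((n + N : ℕ) : ℝ) + 1) ^ 2 * Real.pi ^ 2)) := by
            simp only [hf]
            gcongr
        _ = 8 / Real.pi ^ 2 * (1 / ((n : ℝ) + (N : ℝ) + 1) ^ 2) := by
            push_cast
            field_simp
            ring
    have hsumsq : Summable (fun n : ℕ => 8 / Real.pi ^ 2 * (1 / ((n : ℝ) + (N : ℝ) + 1) ^ 2)) := by
      apply Summable.mul_left
      have := (summable_nat_add_iff N).mpr base_summable
      refine this.congr (fun n => ?_)
      push_cast
      ring
    calc ∑' n : ℕ, f (n + N) ≤ ∑' n : ℕ, 8 / Real.pi ^ 2 * (1 / ((n : ℝ) + (N : ℝ) + 1) ^ 2) :=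
          Summable.tsum_le_tsum h2 hsumtail hsumsq
      _ = 8 / Real.pi ^ 2 * ∑' n : ℕ, 1 / ((n : ℝ) + (N : ℝ) + 1) ^ 2 := tsum_mul_left
      _ ≤ 8 / Real.pi ^ 2 * (1 / N) :=
          mul_le_mul_of_nonneg_left (tail_sq_le hN1) (by positivity)
      _ ≤ 8 / Real.pi ^ 2 * d := by
          refine mul_le_mul_of_nonneg_left ?_ (by positivity)
          rw [div_le_iff₀ hNpos]
          rw [div_le_iff₀ hd0] at hNge
          linarith [mul_comm (N : ℝ) d]
  -- combine
  have hlogN : Real.log N ≤ Real.log 2 + Real.log (1 / d) := by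
    calc Real.log N ≤ Real.log (2 / d) := Real.log_le_log hNpos hNle
      _ = Real.log 2 + Real.log (1 / d) := by
        rw [div_eq_mul_one_div 2 d, Real.log_mul (by norm_num) (by positivity)]
  have hlog2 : Real.log 2 ≤ 1 := by
    have := Real.log_le_sub_one_of_pos (by norm_num : (0:ℝ) < 2)
    linarith
  have hlognn : 0 ≤ Real.log (1 / d) := Real.log_nonneg hdinv
  have h4π : 4 / Real.pi ≤ 2 := by
    rw [div_le_iff₀ hπ0]; linarith
  have h8π : 8 / Real.pi ^ 2 ≤ 1 := by
    rw [div_le_one (by positivity)]; nlinarith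
  have hfinal : 4 / Real.pi * d * (1 + Real.log N) + 8 / Real.pi ^ 2 * d
      ≤ 10 * d + 10 * d * Real.log (1 / d) := by
    have h1 : 4 / Real.pi * d * (1 + Real.log N) ≤ 2 * d * (2 + Real.log (1 / d)) := by
      have hb : 1 + Real.log N ≤ 2 + Real.log (1 / d) := by linarith
      have hbnn : 0 ≤ 1 + Real.log N := by
        have : 0 ≤ Real.log N := Real.log_nonneg (by exact_mod_cast hN1)
        linarith
      calc 4 / Real.pi * d * (1 + Real.log N) ≤ 2 * d * (1 + Real.log N) := by
            gcongr
          _ ≤ 2 * d * (2 + Real.log (1 / d)) := by gcongr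
    nlinarith
  linarith

theorem stmt_6 :
    ∃ C > (0:ℝ), ∀ x ∈ Set.Icc (0:ℝ) 1, ∀ y ∈ Set.Icc (0:ℝ) 1, x ≠ y →
      (∫ t in Set.Ioi (0:ℝ),
        ⨆ z ∈ Set.Icc (0:ℝ) 1, |heatKernel t x z - heatKernel t y z|)
        ≤ C * |x - y| + C * |x - y| * Real.log (1 / |x - y|) := by
  refine ⟨10, by norm_num, ?_⟩
  intro x hx y hy hxy
  obtain ⟨hx1, hx2⟩ := hx
  obtain ⟨hy1, hy2⟩ := hy
  have hd0 : 0 < |x - y| := abs_sub_pos.mpr hxy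
  have hd1 : |x - y| ≤ 1 := by
    rw [abs_sub_le_iff]
    constructor <;> linarith
  set d : ℝ := |x - y| with hddef
  have hcont : ∀ n, Continuous (gB d n) := by
    intro n
    unfold gB hkT
    fun_prop
  have hintn : ∀ n, IntegrableOn (gB d n) (Ioi 0) := by
    intro n
    unfold gB
    exact (integrableOn_hkT n).const_mul _
  have hival : ∀ n : ℕ, ∫ t in Ioi (0:ℝ), gB d n t =
      (2 * min 2 (((n : ℝ) + 1) * Real.pi * d)) * (2 / (((n : ℝ) + 1) ^ 2 * Real.pi ^ 2)) := by
    intro n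
    unfold gB
    rw [integral_const_mul, integral_hkT]
  have hsumint : Summable (fun n => ∫ t in Ioi (0:ℝ), gB d n t) :=
    (series_summable hd0.le).congr (fun n => (hival n).symm)
  have hGnn : ∀ t : ℝ, 0 ≤ ∑' n, gB d n t :=
    fun t => tsum_nonneg (fun n => gB_nonneg hd0.le n t)
  have hG_int : IntegrableOn (fun t => ∑' n, gB d n t) (Ioi (0:ℝ)) :=
    integrableOn_tsum_Ioi hcont (fun n t => gB_nonneg hd0.le n t)
      (fun t ht => summable_gB hd0.le ht) hintn hsumint
  have hmono : (∫ t in Set.Ioi (0:ℝ),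
      ⨆ z ∈ Set.Icc (0:ℝ) 1, |heatKernel t x z - heatKernel t y z|)
      ≤ ∫ t in Ioi (0:ℝ), ∑' n, gB d n t := by
    refine integral_mono_of_nonneg ?_ hG_int ?_
    · filter_upwards with t
      exact Real.iSup_nonneg (fun z => Real.iSup_nonneg (fun _ => abs_nonneg _))
    · rw [Filter.EventuallyLE, ae_restrict_iff' measurableSet_Ioi]
      filter_upwards with t ht
      exact Real.iSup_le
        (fun z => Real.iSup_le (fun _ => key_bound ht x y z) (hGnn t)) (hGnn t)
  have hG_val : ∫ t in Ioi (0:ℝ), (∑' n, gB d n t) =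
      ∑' n : ℕ, (2 * min 2 (((n : ℝ) + 1) * Real.pi * d)) *
        (2 / (((n : ℝ) + 1) ^ 2 * Real.pi ^ 2)) := by
    rw [integral_tsum_Ioi (fun n t => gB_nonneg hd0.le n t) hintn hsumint]
    exact tsum_congr hival
  calc (∫ t in Set.Ioi (0:ℝ),
      ⨆ z ∈ Set.Icc (0:ℝ) 1, |heatKernel t x z - heatKernel t y z|)
      ≤ ∫ t in Ioi (0:ℝ), ∑' n, gB d n t := hmono
    _ = ∑' n : ℕ, (2 * min 2 (((n : ℝ) + 1) * Real.pi * d)) *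
        (2 / (((n : ℝ) + 1) ^ 2 * Real.pi ^ 2)) := hG_val
    _ ≤ 10 * d + 10 * d * Real.log (1 / d) := sum_bound hd0 hd1
end

section
/- There exists a constant C > 0 such that for every h > 0, ∑_{n=1}^∞ (1 − e^{−π²n²h/2})² / n² ≤ C·h^{1/2}. -/
open Finset in
lemma aux_sum_range_inv_sq_le (N M : ℕ) :
    ∑ i ∈ Finset.range M, (1:ℝ)/((i:ℝ)+N+1)^2 ≤ 2/((N:ℝ)+1) := by
  have key : ∀ i : ℕ, (1:ℝ)/((i:ℝ)+N+1)^2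
      ≤ 2 * (1/((i:ℝ)+N+1) - 1/((i:ℝ)+N+2)) := by
    intro i
    have h0 : (0:ℝ) ≤ (i:ℝ)+N := by positivity
    have h2 : (0:ℝ) < (i:ℝ)+N+1 := by linarith
    have h3 : (0:ℝ) < (i:ℝ)+N+2 := by linarith
    have e : 1/((i:ℝ)+N+1) - 1/((i:ℝ)+N+2) = 1/(((i:ℝ)+N+1)*((i:ℝ)+N+2)) := by
      field_simp
      ring
    rw [e, ← mul_div_assoc, mul_one, div_le_div_iff₀ (by positivity) (by positivity)]
    nlinarith
  calc ∑ i ∈ Finset.range M, (1:ℝ)/((i:ℝ)+N+1)^2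
      ≤ ∑ i ∈ Finset.range M, 2 * (1/((i:ℝ)+N+1) - 1/((i:ℝ)+N+2)) :=
        Finset.sum_le_sum fun i _ => key i
    _ = 2 * ∑ i ∈ Finset.range M,
          ((fun j : ℕ => 1/((j:ℝ)+N+1)) i - (fun j : ℕ => 1/((j:ℝ)+N+1)) (i+1)) := by
        rw [Finset.mul_sum]; congr 1; ext i; push_cast; ring_nf
    _ = 2 * (1/((N:ℝ)+1) - 1/((M:ℝ)+N+1)) := by
        rw [Finset.sum_range_sub']; norm_num
    _ ≤ 2/((N:ℝ)+1) := by
        have h1 : (0:ℝ) ≤ 1/((M:ℝ)+N+1) := by positivity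
        have h2 : (2:ℝ)/((N:ℝ)+1) = 2*(1/((N:ℝ)+1)) := by ring
        rw [h2]
        linarith

theorem stmt_8 :
    ∃ C > (0:ℝ), ∀ h > (0:ℝ),
      (∑' n : ℕ,
        (1 - Real.exp (-(Real.pi ^ 2 * ((n : ℝ) + 1) ^ 2 * h) / 2)) ^ 2 / ((n : ℝ) + 1) ^ 2)
        ≤ C * Real.sqrt h := by
  have pi_pos := Real.pi_pos
  refine ⟨2 * Real.pi ^ 4 + 2, by positivity, ?_⟩
  intro h hh
  set s := Real.sqrt h with hs
  have hs_pos : 0 < s := Real.sqrt_pos.mpr hh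
  have hs_sq : s ^ 2 = h := Real.sq_sqrt hh.le
  set f : ℕ → ℝ := fun n =>
    (1 - Real.exp (-(Real.pi ^ 2 * ((n : ℝ) + 1) ^ 2 * h) / 2)) ^ 2 / ((n : ℝ) + 1) ^ 2 with hf
  -- basic bounds on f
  have hf_nonneg : ∀ n, 0 ≤ f n := fun n => by positivity
  have hA : ∀ n : ℕ, 0 ≤ 1 - Real.exp (-(Real.pi ^ 2 * ((n : ℝ) + 1) ^ 2 * h) / 2) ∧
      1 - Real.exp (-(Real.pi ^ 2 * ((n : ℝ) + 1) ^ 2 * h) / 2) ≤ 1 ∧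
      1 - Real.exp (-(Real.pi ^ 2 * ((n : ℝ) + 1) ^ 2 * h) / 2)
        ≤ Real.pi ^ 2 * ((n : ℝ) + 1) ^ 2 * h / 2 := by
    intro n
    have hx : (0:ℝ) ≤ Real.pi ^ 2 * ((n : ℝ) + 1) ^ 2 * h / 2 := by positivity
    have he1 : Real.exp (-(Real.pi ^ 2 * ((n : ℝ) + 1) ^ 2 * h) / 2) ≤ 1 :=
      Real.exp_le_one_iff.mpr (by linarith [hx, (by ring :
        -(Real.pi ^ 2 * ((n : ℝ) + 1) ^ 2 * h) / 2
          = -(Real.pi ^ 2 * ((n : ℝ) + 1) ^ 2 * h / 2))])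
    have he2 : 0 < Real.exp (-(Real.pi ^ 2 * ((n : ℝ) + 1) ^ 2 * h) / 2) := Real.exp_pos _
    have he3 : 1 - Real.pi ^ 2 * ((n : ℝ) + 1) ^ 2 * h / 2
        ≤ Real.exp (-(Real.pi ^ 2 * ((n : ℝ) + 1) ^ 2 * h) / 2) := by
      have := Real.add_one_le_exp (-(Real.pi ^ 2 * ((n : ℝ) + 1) ^ 2 * h) / 2)
      linarith
    exact ⟨by linarith, by linarith, by linarith⟩
  have hf_le_inv : ∀ n, f n ≤ 1/((n:ℝ)+1)^2 := by
    intro n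
    obtain ⟨h0, h1, _⟩ := hA n
    simp only [hf]
    gcongr ?_ / _
    nlinarith
  have hf_le_quad : ∀ n, f n ≤ Real.pi ^ 4 * h ^ 2 / 4 * ((n:ℝ)+1)^2 := by
    intro n
    obtain ⟨h0, _, h2⟩ := hA n
    have : f n ≤ (Real.pi ^ 2 * ((n : ℝ) + 1) ^ 2 * h / 2) ^ 2 / ((n:ℝ)+1)^2 := by
      simp only [hf]
      gcongr ?_ / _
      nlinarith
    refine this.trans (le_of_eq ?_)
    have hne : ((n:ℝ)+1) ≠ 0 := by positivity
    field_simp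
    ring
  -- summability
  have hsum : Summable f := by
    apply Summable.of_nonneg_of_le hf_nonneg hf_le_inv
    have : Summable (fun n : ℕ => 1/((n:ℝ))^2) := by
      simpa using Real.summable_one_div_nat_pow.mpr (by norm_num : 2 ≤ 2)
    have := (summable_nat_add_iff 1).mpr this
    simpa [add_comm] using this
  rcases le_or_gt 1 h with hc | hc
  · -- h ≥ 1 : bound whole sum by 2
    have h2 : ∑' n, f n ≤ 2 := by
      apply Real.tsum_le_of_sum_range_le hf_nonneg
      intro M
      calc ∑ i ∈ Finset.range M, f i ≤ ∑ i ∈ Finset.range M, 1/((i:ℝ)+1)^2 :=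
            Finset.sum_le_sum fun i _ => hf_le_inv i
        _ ≤ 2/((0:ℝ)+1) := by simpa using aux_sum_range_inv_sq_le 0 M
        _ = 2 := by norm_num
    have hs1 : 1 ≤ s := by
      rw [hs]
      nlinarith [Real.sq_sqrt hh.le, Real.sqrt_nonneg h]
    calc ∑' n, f n ≤ 2 := h2
      _ ≤ (2 * Real.pi ^ 4 + 2) * 1 := by nlinarith [pow_pos pi_pos 4]
      _ ≤ (2 * Real.pi ^ 4 + 2) * s := by nlinarith [pow_pos pi_pos 4]
  · -- h < 1 : split at N = ⌈1/s⌉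
    have hs1 : s ≤ 1 := by
      rw [hs]
      nlinarith [Real.sq_sqrt hh.le, Real.sqrt_nonneg h]
    set N : ℕ := ⌈1/s⌉₊ with hN
    have hinv1 : (1:ℝ) ≤ 1/s := by
      rw [le_div_iff₀ hs_pos]; linarith
    have hN_ge : 1/s ≤ (N:ℝ) := Nat.le_ceil _
    have hN_le : (N:ℝ) ≤ 2/s := by
      have := Nat.ceil_lt_add_one (by positivity : (0:ℝ) ≤ 1/s)
      have h2s : 1/s + 1 ≤ 2/s := by
        rw [div_add' _ _ _ (ne_of_gt hs_pos), div_le_div_iff₀ hs_pos hs_pos]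
        nlinarith
      linarith
    have hN_pos : (0:ℝ) < N := lt_of_lt_of_le (by linarith) hN_ge
    -- split the sum
    rw [← Summable.sum_add_tsum_nat_add N hsum]
    -- head bound
    have head : ∑ i ∈ Finset.range N, f i ≤ 2 * Real.pi ^ 4 * s := by
      calc ∑ i ∈ Finset.range N, f i
          ≤ ∑ i ∈ Finset.range N, Real.pi ^ 4 * h ^ 2 / 4 * ((N:ℝ))^2 := by
            apply Finset.sum_le_sum
            intro i hi
            refine (hf_le_quad i).trans ?_
            have : ((i:ℝ)+1) ≤ (N:ℝ) := by
              have := Finset.mem_range.mp hi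
              exact_mod_cast Nat.succ_le_of_lt this
            gcongr <;> positivity
        _ = (N:ℝ) * (Real.pi ^ 4 * h ^ 2 / 4 * ((N:ℝ))^2) := by
            rw [Finset.sum_const, Finset.card_range]; simp [nsmul_eq_mul]
        _ ≤ (2/s) * (Real.pi ^ 4 * h ^ 2 / 4 * (2/s)^2) := by
            gcongr <;> positivity
        _ = 2 * Real.pi ^ 4 * s := by
            rw [← hs_sq]
            field_simp
            ring
    -- tail bound
    have tail : ∑' n, f (n + N) ≤ 2 * s := by
      have : ∑' n, f (n + N) ≤ 2/((N:ℝ)+1) := by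
        apply Real.tsum_le_of_sum_range_le (fun n => hf_nonneg _)
        intro M
        calc ∑ i ∈ Finset.range M, f (i + N)
            ≤ ∑ i ∈ Finset.range M, 1/((i:ℝ)+N+1)^2 := by
              apply Finset.sum_le_sum
              intro i _
              refine (hf_le_inv (i + N)).trans (le_of_eq ?_)
              push_cast
              ring_nf
          _ ≤ 2/((N:ℝ)+1) := aux_sum_range_inv_sq_le N M
      refine this.trans ?_
      rw [div_le_iff₀ (by positivity)]
      have : 1 ≤ s * (N:ℝ) := by
        have := mul_le_mul_of_nonneg_left hN_ge hs_pos.le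
        rw [mul_one_div, div_self (ne_of_gt hs_pos)] at this
        linarith
      nlinarith
    calc ∑ i ∈ Finset.range N, f i + ∑' n, f (n + N)
        ≤ 2 * Real.pi ^ 4 * s + 2 * s := add_le_add head tail
      _ = (2 * Real.pi ^ 4 + 2) * s := by ring
end
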